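/- arXiv:2211.08699 — 8 statements merged into one kernel-verified Lean document; each statement's English description precedes it below -/
import Mathlib

section
/- Let G be a finite group and N a nontrivial proper normal subgroup. Then D^s(G) ≤ 2·D^s(G/N)·D^s(N) + D^s(G/N) + D^s(N), and consequently D^s(G) ≤ 4·D^s(G/N)·D^s(N). -/
/-- Minimal length of a word in elements of `X` (no inverses) expressing `g`;
`0` if no such word exists (by `sInf` of empty set). -/
noncomputable def wordLen {G : Type*} [Group G] (X : Set G) (g : G) : ℕ :=
  sInf {n | ∃ w : List G, (∀ x ∈ w, x ∈ X) ∧ w.length = n ∧ w.prod = g}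

/-- Minimal length of a word in elements of `X ∪ X⁻¹` expressing `g`. -/
noncomputable def symWordLen {G : Type*} [Group G] (X : Set G) (g : G) : ℕ :=
  wordLen (X ∪ X⁻¹) g

/-- The (non-symmetric) diameter of `G` with respect to `X`. -/
noncomputable def diam (G : Type*) [Group G] (X : Set G) : ℕ :=
  sSup (Set.range (wordLen X))

/-- The symmetric diameter of `G` with respect to `X`. -/
noncomputable def symDiam (G : Type*) [Group G] (X : Set G) : ℕ :=
  sSup (Set.range (symWordLen X))

/-- `D(G)`: maximum of `diam` over all generating sets. -/
noncomputable def maxDiam (G : Type*) [Group G] : ℕ :=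
  sSup {d | ∃ X : Set G, Subgroup.closure X = ⊤ ∧ diam G X = d}

/-- `D^s(G)`: maximum of `symDiam` over all generating sets. -/
noncomputable def maxSymDiam (G : Type*) [Group G] : ℕ :=
  sSup {d | ∃ X : Set G, Subgroup.closure X = ⊤ ∧ symDiam G X = d}

/-- `rank(G)`: minimal cardinality of a generating set. -/
noncomputable def grpRank (G : Type*) [Group G] : ℕ :=
  sInf {n | ∃ S : Finset G, S.card = n ∧ Subgroup.closure (S : Set G) = ⊤}

/-- `T` is a right transversal for `G` mod `H`: it meets every right coset `Hg`
in exactly one element. -/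
def IsRightTransversal {G : Type*} [Group G] (H : Subgroup G) (T : Set G) : Prop :=
  ∀ g : G, ∃! t, t ∈ T ∧ g * t⁻¹ ∈ H

instance piNormal {ι : Type*} {G : Type*} [Group G] (H : Subgroup G) [hH : H.Normal] :
    (Subgroup.pi Set.univ fun _ : ι => H).Normal := by
  constructor
  intro m hm g i hi
  exact hH.conj_mem _ (hm i trivial) (g i)


section Aux
variable {G : Type*} [Group G] {X : Set G} {g h : G}

lemma exists_sym_word (hg : g ∈ Subgroup.closure X) :
    ∃ w : List G, (∀ x ∈ w, x ∈ X ∪ X⁻¹) ∧ w.prod = g := by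
  have h2 : g ∈ Submonoid.closure (X ∪ X⁻¹) := by
    rw [← Subgroup.closure_toSubmonoid]; exact hg
  exact Submonoid.exists_list_of_mem_closure h2

lemma symWordLen_le {w : List G} (hw : ∀ x ∈ w, x ∈ X ∪ X⁻¹) (hp : w.prod = g) :
    symWordLen X g ≤ w.length :=
  Nat.sInf_le ⟨w, hw, rfl, hp⟩

lemma symWordLen_spec (hg : g ∈ Subgroup.closure X) :
    ∃ w : List G, (∀ x ∈ w, x ∈ X ∪ X⁻¹) ∧ w.length = symWordLen X g ∧ w.prod = g := by
  obtain ⟨w, hw, hp⟩ := exists_sym_word hg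
  have hne : {n | ∃ w : List G, (∀ x ∈ w, x ∈ X ∪ X⁻¹) ∧ w.length = n ∧ w.prod = g}.Nonempty :=
    ⟨w.length, w, hw, rfl, hp⟩
  exact Nat.sInf_mem hne

lemma symWordLen_one : symWordLen X (1 : G) = 0 :=
  Nat.le_zero.mp (symWordLen_le (w := []) (by simp) (by simp))

lemma symWordLen_mul_le (hg : g ∈ Subgroup.closure X) (hh : h ∈ Subgroup.closure X) :
    symWordLen X (g * h) ≤ symWordLen X g + symWordLen X h := by
  obtain ⟨w1, hw1, hl1, hp1⟩ := symWordLen_spec hg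
  obtain ⟨w2, hw2, hl2, hp2⟩ := symWordLen_spec hh
  have key : symWordLen X (g * h) ≤ (w1 ++ w2).length :=
    symWordLen_le
      (by intro x hx; rcases List.mem_append.mp hx with h | h; exacts [hw1 x h, hw2 x h])
      (by simp [hp1, hp2])
  simpa [hl1, hl2] using key

lemma symWordLen_inv_le (hg : g ∈ Subgroup.closure X) :
    symWordLen X g⁻¹ ≤ symWordLen X g := by
  obtain ⟨w, hw, hl, hp⟩ := symWordLen_spec hg
  have hmem : ∀ x ∈ (w.map (·⁻¹)).reverse, x ∈ X ∪ X⁻¹ := by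
    intro x hx
    simp only [List.mem_reverse, List.mem_map] at hx
    obtain ⟨y, hy, rfl⟩ := hx
    rcases hw y hy with h | h
    · exact Or.inr (by simpa using h)
    · exact Or.inl (by simpa using h)
  have hprod : ((w.map (·⁻¹)).reverse).prod = g⁻¹ := by
    rw [← hp, List.prod_inv_reverse]
  have key : symWordLen X g⁻¹ ≤ ((w.map (·⁻¹)).reverse).length :=
    symWordLen_le hmem hprod
  simpa [hl] using key

lemma symWordLen_single (hx : g ∈ X ∪ X⁻¹) : symWordLen X g ≤ 1 :=
  symWordLen_le (w := [g]) (by simpa using hx) (by simp)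

variable [Finite G]

lemma symWordLen_le_symDiam (g : G) : symWordLen X g ≤ symDiam G X :=
  le_csSup (Set.finite_range _).bddAbove (Set.mem_range_self g)

lemma symDiam_le_maxSymDiam (hX : Subgroup.closure X = ⊤) :
    symDiam G X ≤ maxSymDiam G := by
  have hfin : {d | ∃ Y : Set G, Subgroup.closure Y = ⊤ ∧ symDiam G Y = d}.Finite := by
    apply (Set.finite_range (symDiam G)).subset
    rintro d ⟨Y, -, rfl⟩; exact Set.mem_range_self Y
  exact le_csSup hfin.bddAbove ⟨X, hX, rfl⟩

lemma maxSymDiam_le {K : ℕ}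
    (h : ∀ Y : Set G, Subgroup.closure Y = ⊤ → symDiam G Y ≤ K) : maxSymDiam G ≤ K := by
  refine csSup_le ⟨symDiam G Set.univ, Set.univ, Subgroup.closure_univ, rfl⟩ ?_
  rintro d ⟨Y, hY, rfl⟩; exact h Y hY

omit [Finite G] in
lemma symDiam_le {K : ℕ} (h : ∀ g : G, symWordLen X g ≤ K) : symDiam G X ≤ K := by
  apply csSup_le (Set.range_nonempty _)
  rintro d ⟨g, rfl⟩; exact h g

lemma one_le_maxSymDiam [Nontrivial G] : 1 ≤ maxSymDiam G := by
  obtain ⟨g, hg⟩ := exists_ne (1 : G)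
  have hmem : g ∈ Subgroup.closure (Set.univ : Set G) := by
    rw [Subgroup.closure_univ]; trivial
  have h1 : 1 ≤ symWordLen (Set.univ : Set G) g := by
    rcases Nat.eq_zero_or_pos (symWordLen (Set.univ : Set G) g) with h0 | h
    · exfalso
      obtain ⟨w, hw, hl, hp⟩ := symWordLen_spec hmem
      rw [h0] at hl
      rw [List.length_eq_zero_iff.mp hl] at hp
      exact hg (by simpa using hp.symm)
    · exact h
  calc 1 ≤ symWordLen (Set.univ : Set G) g := h1
    _ ≤ symDiam G Set.univ := symWordLen_le_symDiam g
    _ ≤ maxSymDiam G := symDiam_le_maxSymDiam Subgroup.closure_univ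

end Aux

section Quot
variable {G : Type*} [Group G] (N : Subgroup G) [N.Normal] {X : Set G}

lemma closure_image_top (hX : Subgroup.closure X = ⊤) :
    Subgroup.closure ((QuotientGroup.mk' N) '' X) = ⊤ := by
  rw [← MonoidHom.map_closure, hX]
  exact Subgroup.map_top_of_surjective _ (QuotientGroup.mk'_surjective N)

lemma lift_word : ∀ wb : List (G ⧸ N),
    (∀ x ∈ wb, x ∈ ((QuotientGroup.mk' N) '' X) ∪ ((QuotientGroup.mk' N) '' X)⁻¹) →
    ∃ w : List G, (∀ x ∈ w, x ∈ X ∪ X⁻¹) ∧ w.length = wb.length ∧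
      (QuotientGroup.mk' N) w.prod = wb.prod := by
  intro wb
  induction wb with
  | nil => intro _; exact ⟨[], by simp, by simp, by simp⟩
  | cons q wb ih =>
    intro hq
    obtain ⟨w, hw, hlen, hπ⟩ := ih (fun x hx => hq x (List.mem_cons_of_mem q hx))
    rcases hq q List.mem_cons_self with ⟨x, hx, hπx⟩ | hmem
    · refine ⟨x :: w, ?_, by simp [hlen], ?_⟩
      · intro y hy
        rcases List.mem_cons.mp hy with rfl | hy
        exacts [Or.inl hx, hw y hy]
      · rw [List.prod_cons, List.prod_cons, map_mul, hπx, hπ]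
    · obtain ⟨x, hx, hπx⟩ := hmem
      refine ⟨x⁻¹ :: w, ?_, by simp [hlen], ?_⟩
      · intro y hy
        rcases List.mem_cons.mp hy with rfl | hy
        · exact Or.inr (by simpa using hx)
        · exact hw y hy
      · have hq' : (QuotientGroup.mk' N) x⁻¹ = q := by rw [map_inv, hπx, inv_inv]
        rw [List.prod_cons, List.prod_cons, map_mul, hq', hπ]

variable [Finite G]

lemma exists_lift (hX : Subgroup.closure X = ⊤) (q : G ⧸ N) :
    ∃ s : G, (QuotientGroup.mk' N) s = q ∧
      symWordLen X s ≤ symDiam (G ⧸ N) ((QuotientGroup.mk' N) '' X) := by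
  have hq : q ∈ Subgroup.closure ((QuotientGroup.mk' N) '' X) := by
    rw [closure_image_top N hX]; trivial
  obtain ⟨wb, hwb, hl, hp⟩ := symWordLen_spec hq
  obtain ⟨w, hw, hlen, hπ⟩ := lift_word N wb hwb
  refine ⟨w.prod, by rw [hπ, hp], ?_⟩
  calc symWordLen X w.prod ≤ w.length := symWordLen_le hw rfl
    _ = symWordLen ((QuotientGroup.mk' N) '' X) q := by rw [hlen, hl]
    _ ≤ _ := symWordLen_le_symDiam q

lemma schreier_word (hX : Subgroup.closure X = ⊤) :
    ∀ w : List G, (∀ x ∈ w, x ∈ X ∪ X⁻¹) →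
    ∀ t : G, symWordLen X t ≤ symDiam (G ⧸ N) ((QuotientGroup.mk' N) '' X) →
      (QuotientGroup.mk' N) (t * w.prod) = 1 →
      ∃ l : List N,
        (∀ y ∈ l, symWordLen X (y : G) ≤ 2 * symDiam (G ⧸ N) ((QuotientGroup.mk' N) '' X) + 1) ∧
        (l.prod : G) = t * w.prod := by
  set a := symDiam (G ⧸ N) ((QuotientGroup.mk' N) '' X) with ha
  intro w
  induction w with
  | nil =>
    intro _ t ht hπ
    have htN : t ∈ N := by
      rwa [List.prod_nil, mul_one, QuotientGroup.mk'_apply, QuotientGroup.eq_one_iff] at hπ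
    exact ⟨[⟨t, htN⟩], by simpa using ht.trans (by omega), by simp⟩
  | cons x w ih =>
    intro hxw t ht hπ
    obtain ⟨s, hs, hsl⟩ := exists_lift N hX ((QuotientGroup.mk' N) (t * x))
    have hxX : x ∈ X ∪ X⁻¹ := hxw x List.mem_cons_self
    have hmemX : ∀ u : G, u ∈ Subgroup.closure X := by rw [hX]; intro u; trivial
    have hyN : t * x * s⁻¹ ∈ N := by
      rw [← QuotientGroup.eq_one_iff (t * x * s⁻¹), ← QuotientGroup.mk'_apply]
      rw [map_mul, map_inv, hs, mul_inv_cancel]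
    have hylen : symWordLen X (t * x * s⁻¹) ≤ 2 * a + 1 := by
      have h1 : symWordLen X (t * x) ≤ a + 1 :=
        (symWordLen_mul_le (hmemX t) (hmemX x)).trans
          (Nat.add_le_add ht (symWordLen_single hxX))
      have h2 : symWordLen X s⁻¹ ≤ a := (symWordLen_inv_le (hmemX s)).trans hsl
      have := (symWordLen_mul_le (hmemX (t * x)) (hmemX s⁻¹)).trans (Nat.add_le_add h1 h2)
      omega
    have hπ' : (QuotientGroup.mk' N) (s * w.prod) = 1 := by
      rw [map_mul, hs, map_mul, ← map_mul]
      rw [List.prod_cons, ← mul_assoc] at hπ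
      rwa [map_mul] at hπ
    obtain ⟨l, hl, hlp⟩ := ih (fun y hy => hxw y (List.mem_cons_of_mem x hy)) s hsl hπ'
    refine ⟨⟨t * x * s⁻¹, hyN⟩ :: l, ?_, ?_⟩
    · intro y hy
      rcases List.mem_cons.mp hy with rfl | hy
      exacts [hylen, hl y hy]
    · rw [List.prod_cons, Subgroup.coe_mul, hlp, List.prod_cons]
      group

end Quot

section Main
variable {G : Type*} [Group G] {X : Set G}

lemma symWordLen_prod_le (hX : Subgroup.closure X = ⊤) {c : ℕ} :
    ∀ l : List G, (∀ y ∈ l, symWordLen X y ≤ c) → symWordLen X l.prod ≤ c * l.length := by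
  intro l
  induction l with
  | nil => intro _; simp [symWordLen_one]
  | cons x l ih =>
    intro h
    have hmemX : ∀ u : G, u ∈ Subgroup.closure X := by rw [hX]; intro u; trivial
    have h1 := symWordLen_mul_le (hmemX x) (hmemX l.prod)
    have h2 := ih (fun y hy => h y (List.mem_cons_of_mem x hy))
    have h3 := h x List.mem_cons_self
    rw [List.prod_cons]
    calc symWordLen X (x * l.prod) ≤ symWordLen X x + symWordLen X l.prod := h1
      _ ≤ c + c * l.length := Nat.add_le_add h3 h2
      _ = c * (x :: l).length := by rw [List.length_cons]; ring

variable [Finite G] (N : Subgroup G) [N.Normal]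

lemma closure_Y (hX : Subgroup.closure X = ⊤) :
    Subgroup.closure {y : N | symWordLen X (y : G) ≤
      2 * symDiam (G ⧸ N) ((QuotientGroup.mk' N) '' X) + 1} = ⊤ := by
  rw [eq_top_iff]
  rintro n -
  have hn : (n : G) ∈ Subgroup.closure X := by rw [hX]; trivial
  obtain ⟨w, hw, hp⟩ := exists_sym_word hn
  have hπ : (QuotientGroup.mk' N) ((1 : G) * w.prod) = 1 := by
    rw [one_mul, hp, QuotientGroup.mk'_apply, QuotientGroup.eq_one_iff]; exact n.2
  obtain ⟨l, hl, hlp⟩ := schreier_word N hX w hw 1 (by simp [symWordLen_one]) hπ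
  have hn' : l.prod = n := Subtype.ext (by rw [hlp, one_mul, hp])
  rw [← hn']
  exact Subgroup.list_prod_mem _ (fun y hy => Subgroup.subset_closure (hl y hy))

lemma mem_N_bound (hX : Subgroup.closure X = ⊤) (n : N) :
    symWordLen X (n : G) ≤
      (2 * symDiam (G ⧸ N) ((QuotientGroup.mk' N) '' X) + 1) * maxSymDiam N := by
  set a := symDiam (G ⧸ N) ((QuotientGroup.mk' N) '' X) with ha
  set Y : Set N := {y : N | symWordLen X (y : G) ≤ 2 * a + 1} with hY
  have hclo : Subgroup.closure Y = ⊤ := closure_Y N hX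
  have hnY : n ∈ Subgroup.closure Y := by rw [hclo]; trivial
  obtain ⟨l, hl, hlen, hlp⟩ := symWordLen_spec hnY
  have hmemX : ∀ u : G, u ∈ Subgroup.closure X := by rw [hX]; intro u; trivial
  have hbound : ∀ y ∈ l, symWordLen X ((y : N) : G) ≤ 2 * a + 1 := by
    intro y hy
    rcases hl y hy with h | h
    · exact h
    · have h' : symWordLen X ((y⁻¹ : N) : G) ≤ 2 * a + 1 := h
      have : symWordLen X ((y : G))⁻¹ ≤ 2 * a + 1 := by
        simpa using h'
      calc symWordLen X (y : G) = symWordLen X ((y : G)⁻¹)⁻¹ := by rw [inv_inv]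
        _ ≤ symWordLen X ((y : G))⁻¹ := symWordLen_inv_le (hmemX _)
        _ ≤ 2 * a + 1 := this
  have hprod : (l.map (fun y : N => (y : G))).prod = (n : G) := by
    rw [← SubmonoidClass.coe_list_prod, hlp]
  have hlen2 : l.length ≤ maxSymDiam N := by
    rw [hlen]
    exact (symWordLen_le_symDiam n).trans (symDiam_le_maxSymDiam hclo)
  have hkey := symWordLen_prod_le hX (l.map (fun y : N => (y : G)))
    (by intro y hy
        simp only [List.mem_map] at hy
        obtain ⟨z, hz, rfl⟩ := hy
        exact hbound z hz)
  rw [hprod] at hkey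
  calc symWordLen X (n : G) ≤ (2 * a + 1) * (l.map (fun y : N => (y : G))).length := hkey
    _ = (2 * a + 1) * l.length := by rw [List.length_map]
    _ ≤ (2 * a + 1) * maxSymDiam N := Nat.mul_le_mul_left _ hlen2

end Main

theorem stmt2 {G : Type*} [Group G] [Finite G] (N : Subgroup G) [N.Normal]
    (hbot : N ≠ ⊥) (htop : N ≠ ⊤) :
    maxSymDiam G ≤ 2 * maxSymDiam (G ⧸ N) * maxSymDiam N + maxSymDiam (G ⧸ N) + maxSymDiam N ∧
    maxSymDiam G ≤ 4 * (maxSymDiam (G ⧸ N) * maxSymDiam N) := by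
  have hmain : maxSymDiam G ≤
      2 * maxSymDiam (G ⧸ N) * maxSymDiam N + maxSymDiam (G ⧸ N) + maxSymDiam N := by
    set A := maxSymDiam (G ⧸ N) with hA'
    set B := maxSymDiam N with hB'
    apply maxSymDiam_le
    intro X hX
    apply symDiam_le
    intro g
    set a := symDiam (G ⧸ N) ((QuotientGroup.mk' N) '' X) with ha
    have haA : a ≤ A := symDiam_le_maxSymDiam (closure_image_top N hX)
    obtain ⟨s, hs, hsl⟩ := exists_lift N hX ((QuotientGroup.mk' N) g)
    have hnN : s⁻¹ * g ∈ N := by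
      rw [← QuotientGroup.eq_one_iff, ← QuotientGroup.mk'_apply, map_mul, map_inv, hs]
      exact inv_mul_cancel _
    have hb := mem_N_bound N hX ⟨s⁻¹ * g, hnN⟩
    have hmemX : ∀ u : G, u ∈ Subgroup.closure X := by rw [hX]; intro u; trivial
    have hsplit : symWordLen X g ≤ symWordLen X s + symWordLen X (s⁻¹ * g) := by
      have := symWordLen_mul_le (hmemX s) (hmemX (s⁻¹ * g))
      simpa [mul_inv_cancel_left] using this
    have hmul : (2 * a + 1) * B ≤ (2 * A + 1) * B := Nat.mul_le_mul_right B (by omega)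
    calc symWordLen X g ≤ symWordLen X s + symWordLen X (s⁻¹ * g) := hsplit
      _ ≤ a + (2 * a + 1) * B := Nat.add_le_add hsl hb
      _ ≤ A + (2 * A + 1) * B := Nat.add_le_add haA hmul
      _ = 2 * A * B + A + B := by ring
  refine ⟨hmain, ?_⟩
  have hNt : Nontrivial N := (Subgroup.nontrivial_iff_ne_bot N).mpr hbot
  have hQt : Nontrivial (G ⧸ N) := by
    obtain ⟨g, hg⟩ : ∃ g : G, g ∉ N := by
      by_contra hcon
      push_neg at hcon
      exact htop ((Subgroup.eq_top_iff' N).mpr hcon)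
    exact ⟨⟨QuotientGroup.mk' N g, 1, by
      rw [Ne, QuotientGroup.mk'_apply, QuotientGroup.eq_one_iff]; exact hg⟩⟩
  have hA : 1 ≤ maxSymDiam (G ⧸ N) := one_le_maxSymDiam
  have hB : 1 ≤ maxSymDiam N := one_le_maxSymDiam
  calc maxSymDiam G ≤ _ := hmain
    _ ≤ 4 * (maxSymDiam (G ⧸ N) * maxSymDiam N) := by nlinarith
end

section
/- Let G be a finite group with rank(G) = rank(G/G'). Then for every positive integer n, rank(G^n) = n·rank(G). -/
theorem grpRank_eq (G : Type*) [Group G] [Finite G] : grpRank G = Group.rank G := by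
  apply le_antisymm
  · obtain ⟨S, h1, h2⟩ := Group.rank_spec G
    exact Nat.sInf_le ⟨S, h1, h2⟩
  · have hne : {n | ∃ S : Finset G, S.card = n ∧ Subgroup.closure (S : Set G) = ⊤}.Nonempty := by
      obtain ⟨S, h1, h2⟩ := Group.rank_spec G
      exact ⟨_, S, h1, h2⟩
    obtain ⟨S, h1, h2⟩ := Nat.sInf_mem hne
    exact le_trans (Group.rank_le h2) h1.le

theorem rank_prod_le (G H : Type*) [Group G] [Group H] [Finite G] [Finite H] :
    Group.rank (G × H) ≤ Group.rank G + Group.rank H := by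
  classical
  obtain ⟨S, hS1, hS2⟩ := Group.rank_spec G
  obtain ⟨T, hT1, hT2⟩ := Group.rank_spec H
  set U : Finset (G × H) := S.image (fun g => (g, 1)) ∪ T.image (fun t => ((1 : G), t)) with hU
  have hmem : ∀ a b, a ∈ insert (1 : G) S → b ∈ insert (1 : H) T →
      (a, b) ∈ Subgroup.closure (U : Set (G × H)) := by
    intro a b ha hb
    have h1 : (a, (1 : H)) ∈ Subgroup.closure (U : Set (G × H)) := by
      rcases Finset.mem_insert.1 ha with rfl | ha
      · exact Subgroup.one_mem _
      · exact Subgroup.subset_closure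
          (Finset.mem_coe.2 (Finset.mem_union.2 (Or.inl (Finset.mem_image_of_mem _ ha))))
    have h2 : ((1 : G), b) ∈ Subgroup.closure (U : Set (G × H)) := by
      rcases Finset.mem_insert.1 hb with rfl | hb
      · exact Subgroup.one_mem _
      · exact Subgroup.subset_closure
          (Finset.mem_coe.2 (Finset.mem_union.2 (Or.inr (Finset.mem_image_of_mem _ hb))))
    simpa using Subgroup.mul_mem _ h1 h2
  have hc : Subgroup.closure (U : Set (G × H)) = ⊤ := by
    rw [eq_top_iff]
    have hinsS : Subgroup.closure (insert 1 (S : Set G)) = ⊤ := by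
      refine le_antisymm le_top ?_
      rw [← hS2]
      exact Subgroup.closure_mono (Set.subset_insert _ _)
    have hinsT : Subgroup.closure (insert 1 (T : Set H)) = ⊤ := by
      refine le_antisymm le_top ?_
      rw [← hT2]
      exact Subgroup.closure_mono (Set.subset_insert _ _)
    have key : Subgroup.closure ((insert 1 (S : Set G)) ×ˢ (insert 1 (T : Set H))) = ⊤ := by
      rw [Subgroup.closure_prod (Set.mem_insert _ _) (Set.mem_insert _ _), hinsS, hinsT,
        Subgroup.top_prod_top]
    rw [← key]
    refine (Subgroup.closure_le _).2 ?_
    rintro ⟨a, b⟩ ⟨ha, hb⟩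
    exact hmem a b (by simpa using ha) (by simpa using hb)
  calc Group.rank (G × H) ≤ U.card := Group.rank_le hc
    _ ≤ S.card + T.card :=
        (Finset.card_union_le _ _).trans (by gcongr <;> exact Finset.card_image_le)
    _ = Group.rank G + Group.rank H := by rw [hS1, hT1]

def piSuccMulEquiv (G : Type*) [Group G] (n : ℕ) : (Fin (n+1) → G) ≃* G × (Fin n → G) where
  toFun f := (f 0, fun i => f i.succ)
  invFun p := Fin.cons p.1 p.2
  left_inv f := Fin.cons_self_tail f
  right_inv p := by
    refine Prod.ext rfl ?_
    funext i
    simp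
  map_mul' f g := rfl

theorem myRankSubsingleton (G : Type*) [Group G] [Subsingleton G] : Group.rank G = 0 := by
  classical
  have : Subgroup.closure ((∅ : Finset G) : Set G) = ⊤ := by
    apply Subsingleton.elim
  simpa using Group.rank_le this

theorem rank_pi_le (G : Type*) [Group G] [Finite G] (n : ℕ) :
    Group.rank (Fin n → G) ≤ n * Group.rank G := by
  induction n with
  | zero =>
      rw [Nat.zero_mul]
      exact Nat.le_of_eq (myRankSubsingleton _)
  | succ m ih =>
      calc Group.rank (Fin (m+1) → G) = Group.rank (G × (Fin m → G)) :=
            Group.rank_congr (piSuccMulEquiv G m)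
        _ ≤ Group.rank G + Group.rank (Fin m → G) := rank_prod_le _ _
        _ ≤ Group.rank G + m * Group.rank G := by omega
        _ = (m + 1) * Group.rank G := by ring

/-- Lifting generators along a quotient by a cyclic subgroup. -/
theorem rank_le_of_quotient {A : Type*} [CommGroup A] [Finite A] (g : A)
    {m : ℕ} (hq : Group.rank (A ⧸ Subgroup.zpowers g) ≤ m) :
    Group.rank A ≤ m + 1 := by
  classical
  set N := Subgroup.zpowers g
  obtain ⟨S, hS1, hS2⟩ := Group.rank_spec (A ⧸ N)
  set T : Finset A := S.image Quotient.out ∪ {g} with hT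
  have hgT : g ∈ Subgroup.closure (T : Set A) :=
    Subgroup.subset_closure (by simp [hT])
  have hmap : Subgroup.map (QuotientGroup.mk' N) (Subgroup.closure (T : Set A)) = ⊤ := by
    rw [MonoidHom.map_closure, eq_top_iff, ← hS2]
    apply Subgroup.closure_mono
    intro s hs
    refine ⟨s.out, ?_, QuotientGroup.out_eq' s⟩
    simp only [hT, Finset.coe_union, Set.mem_union, Finset.coe_image]
    exact Or.inl ⟨s, hs, rfl⟩
  have htop : Subgroup.closure (T : Set A) = ⊤ := by
    rw [eq_top_iff]
    intro a _
    have : QuotientGroup.mk' N a ∈ Subgroup.map (QuotientGroup.mk' N) (Subgroup.closure (T : Set A)) :=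
      hmap ▸ Subgroup.mem_top _
    obtain ⟨h, hh, hha⟩ := this
    have hker : h⁻¹ * a ∈ (QuotientGroup.mk' N).ker := by
      rw [MonoidHom.mem_ker, map_mul, map_inv, hha]
      simp
    rw [QuotientGroup.ker_mk'] at hker
    have hNle : N ≤ Subgroup.closure (T : Set A) := Subgroup.zpowers_le.mpr hgT
    have h2 := Subgroup.mul_mem _ hh (hNle hker)
    simpa using h2
  calc Group.rank A ≤ T.card := Group.rank_le htop
    _ ≤ S.card + 1 := (Finset.card_union_le _ _).trans (by
        gcongr
        · exact Finset.card_image_le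
        · simp)
    _ ≤ m + 1 := by omega

theorem rank_le_of_card_dvd_prime_pow {p : ℕ} (hp : p.Prime) :
    ∀ (m : ℕ) (A : Type u) [CommGroup A] [Finite A],
      Nat.card A ∣ p ^ m → Group.rank A ≤ m := by
  intro m
  induction m with
  | zero =>
      intro A _ _ hcard
      rw [pow_zero, Nat.dvd_one] at hcard
      have : Subsingleton A := (Nat.card_eq_one_iff_unique.mp hcard).1
      simp [myRankSubsingleton]
  | succ m ih =>
      intro A _ _ hcard
      rcases subsingleton_or_nontrivial A with hs | hnt
      · simp [myRankSubsingleton]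
      · obtain ⟨g, hg⟩ := exists_ne (1 : A)
        set N := Subgroup.zpowers g
        have hNcard : Nat.card N ∣ p ^ (m + 1) :=
          dvd_trans (Subgroup.card_subgroup_dvd_card N) hcard
        obtain ⟨a, ha, haeq⟩ := (Nat.dvd_prime_pow hp).mp hNcard
        have hNne : Nat.card N ≠ 1 := by
          intro h1
          have : Subsingleton N := (Nat.card_eq_one_iff_unique.mp h1).1
          have : g = 1 := by
            have hgN : g ∈ N := Subgroup.mem_zpowers g
            have := Subsingleton.elim (⟨g, hgN⟩ : N) ⟨1, Subgroup.one_mem N⟩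
            simpa using congrArg Subtype.val this
          exact hg this
        have ha1 : 1 ≤ a := by
          rcases Nat.eq_zero_or_pos a with rfl | h
          · rw [pow_zero] at haeq; exact absurd haeq hNne
          · exact h
        have hQcard : Nat.card (A ⧸ N) ∣ p ^ m := by
          have hprod : Nat.card N * Nat.card (A ⧸ N) = Nat.card A :=
            (Subgroup.card_eq_card_quotient_mul_card_subgroup N).symm ▸ (mul_comm _ _)
          have : Nat.card N * Nat.card (A ⧸ N) ∣ p ^ a * p ^ (m + 1 - a) := by
            rw [hprod, ← pow_add]
            have : a + (m + 1 - a) = m + 1 := by omega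
            rw [this]; exact hcard
          rw [haeq] at this
          have h3 : Nat.card (A ⧸ N) ∣ p ^ (m + 1 - a) :=
            (mul_dvd_mul_iff_left (a := p ^ a) (pow_ne_zero a hp.pos.ne')).mp this
          exact dvd_trans h3 (pow_dvd_pow p (by omega))
        exact rank_le_of_quotient g (ih (A ⧸ N) hQcard)

/-- The subgroup of `p`-th powers. -/
def pSub (p : ℕ) (A : Type*) [CommGroup A] : Subgroup A :=
  (powMonoidHom p : A →* A).range

theorem pSub_pow_mem {p : ℕ} {A : Type*} [CommGroup A] (a : A) : a ^ p ∈ pSub p A :=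
  ⟨a, rfl⟩

theorem quot_pSub_pow_eq_one {p : ℕ} {A : Type*} [CommGroup A] (x : A ⧸ pSub p A) :
    x ^ p = 1 := by
  obtain ⟨a, rfl⟩ := QuotientGroup.mk'_surjective (pSub p A) x
  rw [← map_pow, QuotientGroup.mk'_apply, QuotientGroup.eq_one_iff]
  exact pSub_pow_mem a

theorem card_quot_pSub_dvd {p : ℕ} (A : Type*) [CommGroup A] [Finite A] :
    Nat.card (A ⧸ pSub p A) ∣ p ^ Group.rank A := by
  have h1 : Nat.card (A ⧸ pSub p A) ∣ p ^ Group.rank (A ⧸ pSub p A) :=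
    card_dvd_exponent_pow_rank' _ quot_pSub_pow_eq_one
  refine h1.trans (pow_dvd_pow p ?_)
  exact Group.rank_le_of_surjective (QuotientGroup.mk' _) (QuotientGroup.mk'_surjective _)

/-- Quotient of a power by `p`-th powers is the power of the quotient. -/
noncomputable def quotPiEquiv (p n : ℕ) (A : Type*) [CommGroup A] :
    ((Fin n → A) ⧸ pSub p (Fin n → A)) ≃* (Fin n → A ⧸ pSub p A) := by
  classical
  let f : (Fin n → A) →* (Fin n → A ⧸ pSub p A) :=
    MonoidHom.mk' (fun g i => QuotientGroup.mk (g i)) (fun a b => rfl)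
  have hsurj : Function.Surjective f := by
    intro q
    exact ⟨fun i => (q i).out, funext fun i => QuotientGroup.out_eq' (q i)⟩
  have hker : f.ker = pSub p (Fin n → A) := by
    ext g
    constructor
    · intro hg
      have : ∀ i, g i ∈ pSub p A := by
        intro i
        have := congrFun (MonoidHom.mem_ker.mp hg) i
        rwa [← QuotientGroup.eq_one_iff]
      choose b hb using this
      exact ⟨b, funext fun i => hb i⟩
    · rintro ⟨b, rfl⟩
      rw [MonoidHom.mem_ker]
      funext i
      show QuotientGroup.mk ((powMonoidHom p b) i) = 1
      rw [QuotientGroup.eq_one_iff]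
      exact pSub_pow_mem (b i)
  exact (QuotientGroup.quotientMulEquivOfEq hker.symm).trans
    (QuotientGroup.quotientKerEquivOfSurjective f hsurj)

theorem exists_fn_gen (Q : Type*) [Group Q] [Finite Q] {m : ℕ} (hm : Group.rank Q ≤ m) :
    ∃ f : Fin m → Q, Subgroup.closure (Set.range f) = ⊤ := by
  classical
  obtain ⟨S, hS1, hS2⟩ := Group.rank_spec Q
  set l := S.toList with hl
  have hlen : l.length = S.card := Finset.length_toList S
  refine ⟨fun j => if h : (j : ℕ) < l.length then l.get ⟨j, h⟩ else 1, ?_⟩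
  rw [eq_top_iff, ← hS2]
  apply Subgroup.closure_mono
  intro s hs
  have : s ∈ l := Finset.mem_toList.mpr hs
  obtain ⟨i, hi⟩ := List.mem_iff_get.mp this
  have hilt : (i : ℕ) < m := by
    have := i.2
    omega
  refine ⟨⟨i, hilt⟩, ?_⟩
  simp only []
  rw [dif_pos (show ((⟨(i : ℕ), hilt⟩ : Fin m) : ℕ) < l.length from i.2)]
  exact hi ▸ rfl

theorem exists_prime_pow_rank_dvd (A : Type u) [CommGroup A] [Finite A] :
    ∃ p : ℕ, p.Prime ∧ p ^ Group.rank A ∣ Nat.card (A ⧸ pSub p A) := by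
  classical
  rcases Nat.eq_zero_or_pos (Group.rank A) with h0 | hpos
  · exact ⟨2, Nat.prime_two, by rw [h0, pow_zero]; exact one_dvd _⟩
  by_contra hcon
  push_neg at hcon
  set r := Group.rank A with hr
  -- every quotient A ⧸ pA has rank ≤ r - 1
  have hrank : ∀ p : ℕ, p.Prime → Group.rank (A ⧸ pSub p A) ≤ r - 1 := by
    intro p hp
    have h1 : Nat.card (A ⧸ pSub p A) ∣ p ^ Group.rank (A ⧸ pSub p A) :=
      card_dvd_exponent_pow_rank' _ quot_pSub_pow_eq_one
    obtain ⟨d, _, hdeq⟩ := (Nat.dvd_prime_pow hp).mp h1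
    have hdlt : d < r := by
      by_contra hge
      exact hcon p hp (hdeq ▸ pow_dvd_pow p (by omega))
    exact le_trans (rank_le_of_card_dvd_prime_pow hp d _ (hdeq ▸ dvd_refl _)) (by omega)
  -- pick generators of each quotient, lifted to A
  have hgen : ∀ p : ℕ, p.Prime → ∃ x : Fin (r - 1) → A,
      Subgroup.closure (Set.range fun j => ((x j : A) : A ⧸ pSub p A)) = ⊤ := by
    intro p hp
    obtain ⟨f, hf⟩ := exists_fn_gen (A ⧸ pSub p A) (hrank p hp)
    refine ⟨fun j => (f j).out, ?_⟩
    have : (fun j => (((f j).out : A) : A ⧸ pSub p A)) = f := by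
      funext j
      exact QuotientGroup.out_eq' (f j)
    rw [this, hf]
  choose x hx using hgen
  set P := (Nat.card A).primeFactors with hP
  set c : ℕ → ℕ := fun p => (∏ q ∈ P.erase p, q) ^ (p - 1) with hc
  set y : Fin (r - 1) → A := fun j =>
    ∏ p ∈ P.attach, (x p.1 (Nat.prime_of_mem_primeFactors p.2) j) ^ c p.1 with hy
  set H := Subgroup.closure (Set.range y) with hH
  -- arithmetic facts about c
  have hdvd_c : ∀ p q, p ∈ P → q ∈ P → p ≠ q → p ∣ c q := by
    intro p q hpP hqP hne
    have hq : q.Prime := Nat.prime_of_mem_primeFactors hqP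
    refine dvd_trans (Finset.dvd_prod_of_mem _ (Finset.mem_erase.mpr ⟨hne, hpP⟩))
      (dvd_pow_self _ ?_)
    have := hq.two_le
    omega
  have hc_mod : ∀ p ∈ P, ∃ t, c p = p * t + 1 := by
    intro p hpP
    have hp : p.Prime := Nat.prime_of_mem_primeFactors hpP
    haveI : Fact p.Prime := ⟨hp⟩
    have hM : ((∏ q ∈ P.erase p, q : ℕ) : ZMod p) ≠ 0 := by
      rw [Ne, ZMod.natCast_eq_zero_iff]
      intro hdvd
      obtain ⟨q, hqmem, hpq⟩ := (Nat.Prime.prime hp).dvd_finset_prod_iff _ |>.mp hdvd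
      have hq : q.Prime := Nat.prime_of_mem_primeFactors (Finset.mem_of_mem_erase hqmem)
      have : p = q := ((Nat.prime_dvd_prime_iff_eq hp hq).mp hpq)
      exact (Finset.mem_erase.mp hqmem).1 this.symm
    have h1 : ((c p : ℕ) : ZMod p) = 1 := by
      rw [hc, Nat.cast_pow]
      exact ZMod.pow_card_sub_one_eq_one hM
    have hmod : c p % p = 1 % p := by
      have := (ZMod.natCast_eq_natCast_iff (c p) 1 p).mp (by simpa using h1)
      exact this
    have hp1 : 1 % p = 1 := Nat.mod_eq_of_lt hp.one_lt
    refine ⟨c p / p, ?_⟩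
    conv_lhs => rw [← Nat.div_add_mod (c p) p]
    rw [hmod, hp1]
  -- key surjectivity-mod-H fact
  have key : ∀ p : ℕ, p.Prime → ∀ a : A, ∃ h ∈ H, ∃ z : A, a = h * z ^ p := by
    intro p hp a
    by_cases hpP : p ∈ P
    · -- the image of y in A ⧸ pA agrees with the image of x p
      have hmk : ∀ j, ((y j : A) : A ⧸ pSub p A) = ((x p hp j : A) : A ⧸ pSub p A) := by
        intro j
        have hprod : ((y j : A) : A ⧸ pSub p A)
            = ∏ q ∈ P.attach,
              (((x q.1 (Nat.prime_of_mem_primeFactors q.2) j : A) : A ⧸ pSub p A)) ^ c q.1 := by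
          rw [hy]
          rw [← QuotientGroup.mk'_apply, map_prod]
          simp [map_pow]
        rw [hprod, Finset.prod_eq_single (⟨p, hpP⟩ : {z // z ∈ P})]
        · obtain ⟨t, ht⟩ := hc_mod p hpP
          rw [ht, pow_succ, pow_mul, quot_pSub_pow_eq_one, one_pow, one_mul]
        · rintro ⟨q, hqP⟩ - hne
          have hqne : p ≠ q := by
            intro hEq
            apply hne
            subst hEq
            rfl
          obtain ⟨t, ht⟩ := hdvd_c p q hpP hqP hqne
          rw [ht, pow_mul']
          exact quot_pSub_pow_eq_one _
        · intro habs
          exact absurd (Finset.mem_attach _ _) habs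
      have hmap : Subgroup.map (QuotientGroup.mk' (pSub p A)) H = ⊤ := by
        rw [hH, MonoidHom.map_closure, ← Set.range_comp]
        have : (QuotientGroup.mk' (pSub p A)) ∘ y
            = fun j => ((x p hp j : A) : A ⧸ pSub p A) := by
          funext j
          exact hmk j
        rw [this]
        exact hx p hp
      have hmem : QuotientGroup.mk' (pSub p A) a
          ∈ Subgroup.map (QuotientGroup.mk' (pSub p A)) H := hmap ▸ Subgroup.mem_top _
      obtain ⟨h, hh, hha⟩ := hmem
      have hker : h⁻¹ * a ∈ pSub p A := by
        rw [← QuotientGroup.ker_mk' (pSub p A), MonoidHom.mem_ker, map_mul, map_inv, hha]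
        simp
      obtain ⟨z, hz⟩ := hker
      refine ⟨h, hh, z, ?_⟩
      have hzp : (z : A) ^ p = h⁻¹ * a := hz
      rw [hzp]
      group
    · -- p coprime to the order of A
      have hcard : Nat.card A ≠ 0 := Nat.card_pos.ne'
      have hcop : (Nat.card A).Coprime p := by
        rw [Nat.coprime_comm]
        exact (Nat.Prime.coprime_iff_not_dvd hp).mpr
          (fun hdvd => hpP (Nat.mem_primeFactors.mpr ⟨hp, hdvd, hcard⟩))
      obtain ⟨z, hz⟩ := (powCoprime hcop).surjective a
      exact ⟨1, Subgroup.one_mem H, z, by rw [← hz]; simp [powCoprime]⟩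
  -- H = ⊤
  have hHtop : H = ⊤ := by
    have hsurj : ∀ p : ℕ, p.Prime → Function.Surjective (fun b : A ⧸ H => b ^ p) := by
      intro p hp b
      obtain ⟨a, rfl⟩ := QuotientGroup.mk'_surjective H b
      obtain ⟨h, hh, z, ha⟩ := key p hp a
      refine ⟨QuotientGroup.mk' H z, ?_⟩
      show (QuotientGroup.mk' H z) ^ p = QuotientGroup.mk' H a
      rw [ha, map_mul, ← map_pow]
      have : QuotientGroup.mk' H h = 1 := (QuotientGroup.eq_one_iff h).mpr hh
      rw [this, one_mul]
    have hsub : Subsingleton (A ⧸ H) := by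
      by_contra hns
      haveI := not_subsingleton_iff_nontrivial.mp hns
      have hcne : Nat.card (A ⧸ H) ≠ 1 := Finite.one_lt_card.ne'
      obtain ⟨p, hp, hdvd⟩ := Nat.exists_prime_and_dvd hcne
      haveI : Fact p.Prime := ⟨hp⟩
      obtain ⟨b, hb⟩ := exists_prime_orderOf_dvd_card' p hdvd
      have hbne : b ≠ 1 := by
        intro h1
        rw [h1, orderOf_one] at hb
        exact hp.one_lt.ne' hb.symm
      have hinj : Function.Injective (fun b : A ⧸ H => b ^ p) :=
        Finite.injective_iff_surjective.mpr (hsurj p hp)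
      apply hbne
      apply hinj
      show b ^ p = 1 ^ p
      rw [one_pow, ← hb, pow_orderOf_eq_one]
    rw [eq_top_iff]
    intro a _
    have h1 : (QuotientGroup.mk' H) a = (QuotientGroup.mk' H) 1 := Subsingleton.elim _ _
    rw [map_one] at h1
    exact (QuotientGroup.eq_one_iff a).mp h1
  -- contradiction with rank
  have : Group.rank A ≤ r - 1 := by
    have hcl : Subgroup.closure ((Finset.univ.image y : Finset A) : Set A) = ⊤ := by
      rw [Finset.coe_image, Finset.coe_univ, Set.image_univ, ← hH, hHtop]
    refine le_trans (Group.rank_le hcl) ?_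
    exact le_trans (Finset.card_image_le) (by simp)
  omega

theorem rank_pi_ge (A : Type u) [CommGroup A] [Finite A] (n : ℕ) :
    n * Group.rank A ≤ Group.rank (Fin n → A) := by
  obtain ⟨p, hp, hdvd⟩ := exists_prime_pow_rank_dvd A
  have h1 : Nat.card ((Fin n → A) ⧸ pSub p (Fin n → A)) = Nat.card (A ⧸ pSub p A) ^ n := by
    rw [Nat.card_congr (quotPiEquiv p n A).toEquiv, Nat.card_pi]
    simp
  have h2 : Nat.card ((Fin n → A) ⧸ pSub p (Fin n → A)) ∣ p ^ Group.rank (Fin n → A) :=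
    card_quot_pSub_dvd _
  have h3 : p ^ (n * Group.rank A) ∣ p ^ Group.rank (Fin n → A) := by
    have : p ^ (n * Group.rank A) = (p ^ Group.rank A) ^ n := by
      rw [← pow_mul, mul_comm]
    rw [this]
    exact dvd_trans (pow_dvd_pow_of_dvd hdvd n) (h1 ▸ h2)
  exact (Nat.pow_dvd_pow_iff_le_right hp.one_lt).mp h3

theorem stmt4 {G : Type*} [Group G] [Finite G]
    (h : grpRank G = grpRank (G ⧸ commutator G)) (n : ℕ) (hn : 0 < n) :
    grpRank (Fin n → G) = n * grpRank G := by
  rw [grpRank_eq, grpRank_eq] at h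
  rw [grpRank_eq, grpRank_eq]
  refine le_antisymm (rank_pi_le G n) ?_
  have hbridge : Group.rank (G ⧸ commutator G) = Group.rank (Abelianization G) := rfl
  rw [hbridge] at h
  let φ : (Fin n → G) →* (Fin n → Abelianization G) :=
    MonoidHom.mk' (fun g i => Abelianization.of (g i)) (fun a b => rfl)
  have hsur : Function.Surjective φ := by
    intro q
    refine ⟨fun i => (q i).out, funext fun i => ?_⟩
    exact QuotientGroup.out_eq' (q i)
  calc n * Group.rank G = n * Group.rank (Abelianization G) := by rw [h]
    _ ≤ Group.rank (Fin n → Abelianization G) := rank_pi_ge _ n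
    _ ≤ Group.rank (Fin n → G) := Group.rank_le_of_surjective φ hsur
end

section
/- Let G be a finite non-abelian solvable group with derived series of length l. Then for every n ≥ 1, D^s(G^n) ≤ (1/4)·(4n)^l·|G|. -/
open Subgroup
open scoped commutatorElement


lemma splitList : ∀ L : List ℕ, ∀ qq : ℕ, 2 ≤ qq → (∀ m ∈ L, 1 ≤ m) → qq ≤ L.prod →
    ∃ p m₀ r, L = p ++ m₀ :: r ∧ p.prod < qq ∧ qq ≤ p.prod * m₀ := by
  intro L
  induction L with
  | nil => intro qq h1 _ h; simp at h; omega
  | cons m L ih =>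
    intro qq h2 hm hprod
    rw [List.prod_cons] at hprod
    by_cases hcase : qq ≤ m
    · exact ⟨[], m, L, rfl, by simp only [List.prod_nil]; omega, by simpa using hcase⟩
    · push_neg at hcase
      have hm1 : 1 ≤ m := hm m (by simp)
      have hLpos : ∀ x ∈ L, 1 ≤ x := fun x hx => hm x (by simp [hx])
      set t := (qq + m - 1) / m with ht
      have hdm := Nat.div_add_mod (qq + m - 1) m
      have hr := Nat.mod_lt (qq + m - 1) (show 0 < m by omega)
      rw [← ht] at hdm
      have hq_le : qq ≤ m * t := by omega
      have ht2 : 2 ≤ t := by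
        rcases Nat.lt_or_ge t 2 with h | h
        · interval_cases t <;> omega
        · exact h
      have htL : t ≤ L.prod := by
        rw [ht, Nat.div_le_iff_le_mul_add_pred (show 0 < m by omega)]
        omega
      obtain ⟨p', m₀, r, hL, hp1, hp2⟩ := ih t ht2 hLpos htL
      refine ⟨m :: p', m₀, r, by simp [hL], ?_, ?_⟩
      · rw [List.prod_cons]
        have h3 : m * p'.prod ≤ m * (t - 1) := Nat.mul_le_mul_left m (by omega)
        have h4 : m * (t - 1) + m * 1 = m * ((t - 1) + 1) := (Nat.mul_add m (t - 1) 1).symm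
        have h5 : (t - 1) + 1 = t := by omega
        rw [h5] at h4
        omega
      · rw [List.prod_cons, mul_assoc]
        calc qq ≤ m * t := hq_le
        _ ≤ m * (p'.prod * m₀) := Nat.mul_le_mul_left m hp2

lemma prod_pos2 (L : List ℕ) (h : ∀ m ∈ L, 2 ≤ m) : 1 ≤ L.prod :=
  List.prod_pos (fun x hx => Nat.lt_of_lt_of_le Nat.two_pos (h x hx))

lemma sum_le_prod : ∀ L : List ℕ, (∀ m ∈ L, 2 ≤ m) → L.sum ≤ L.prod := by
  intro L
  induction L with
  | nil => simp
  | cons m L ih =>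
    intro hm
    rw [List.sum_cons, List.prod_cons]
    have h2 : ∀ x ∈ L, 2 ≤ x := fun x hx => hm x (by simp [hx])
    have hm2 : 2 ≤ m := hm m (by simp)
    have hL := ih h2
    rcases L with _ | ⟨a, L''⟩
    · simp
    · have hp2 : 2 ≤ (a :: L'').prod := by
        rw [List.prod_cons]
        calc 2 ≤ a := h2 a (by simp)
        _ = a * 1 := (mul_one a).symm
        _ ≤ a * L''.prod := Nat.mul_le_mul_left a (prod_pos2 _ (fun x hx => h2 x (by simp [hx])))
      nlinarith

lemma halves_sum_le (L : List ℕ) : (L.map (· / 2)).sum ≤ L.sum / 2 := by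
  induction L with
  | nil => simp
  | cons a L ih => simp only [List.map_cons, List.sum_cons]; omega

/-- the key counting lemma: factors in `[2,q]` with product `≤ q^n` have half-sum `≤ n*q`. -/
lemma sum_halves_le (q : ℕ) (hq : 1 ≤ q) : ∀ n : ℕ, ∀ L : List ℕ,
    (∀ m ∈ L, 2 ≤ m ∧ m ≤ q) → L.prod ≤ q ^ n → (L.map (· / 2)).sum ≤ n * q := by
  intro n
  induction n with
  | zero =>
    intro L hm hprod
    match L, hm with
    | [], _ => simp
    | m :: L', hm =>
      exfalso
      simp only [pow_zero, List.prod_cons] at hprod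
      have h1 := (hm m (by simp)).1
      have := prod_pos2 L' (fun x hx => (hm x (by simp [hx])).1)
      nlinarith
  | succ k ih =>
    intro L hm hprod
    rcases Nat.lt_or_ge q 2 with hq1 | hq2
    · have hLnil : L = [] := by
        cases L with
        | nil => rfl
        | cons a t =>
          have h1 := (hm a (by simp)).1
          have h2 := (hm a (by simp)).2
          omega
      subst hLnil; simp
    by_cases hcase : L.prod < q
    · calc (L.map (· / 2)).sum ≤ L.sum / 2 := halves_sum_le L
      _ ≤ (k + 1) * q := by
          rcases L with _ | ⟨a, L'⟩
          · simp
          · have := sum_le_prod (a :: L') (fun x hx => (hm x hx).1)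
            have hkq : q ≤ (k + 1) * q := Nat.le_mul_of_pos_left q (k.succ_pos)
            omega
    · push_neg at hcase
      obtain ⟨p, m₀, r, hLeq, hp1, hp2⟩ := splitList L q hq2
        (fun x hx => by have := (hm x hx).1; omega) hcase
      subst hLeq
      have hmp : ∀ x ∈ p, 2 ≤ x ∧ x ≤ q := fun x hx => hm x (by simp [hx])
      have hmr : ∀ x ∈ r, 2 ≤ x ∧ x ≤ q := fun x hx => hm x (by simp [hx])
      have hm₀ := hm m₀ (by simp)
      have hrk : r.prod ≤ q ^ k := by
        rw [List.prod_append, List.prod_cons] at hprod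
        have h1 : r.prod * q ≤ r.prod * (p.prod * m₀) :=
          Nat.mul_le_mul_left _ hp2
        have h2 : r.prod * (p.prod * m₀) = p.prod * (m₀ * r.prod) := by ring
        have h3 : r.prod * q ≤ q * q ^ k := by
          rw [h2] at h1; exact h1.trans (by rw [pow_succ] at hprod; linarith [hprod])
        have := Nat.le_of_mul_le_mul_right (by linarith [h3] : r.prod * q ≤ q ^ k * q) (by omega)
        exact this
      have hsum_p : (p.map (· / 2)).sum ≤ (q - 1) / 2 := by
        apply (halves_sum_le p).trans
        rcases p with _ | ⟨a, p'⟩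
        · simp
        · have := sum_le_prod (a :: p') (fun x hx => (hmp x hx).1)
          omega
      have hir := ih r hmr hrk
      rw [List.map_append, List.map_cons, List.sum_append, List.sum_cons]
      have : m₀ / 2 ≤ q / 2 := Nat.div_le_div_right hm₀.2
      have hq2 : (q - 1) / 2 + q / 2 ≤ q := by omega
      calc (p.map (· / 2)).sum + (m₀ / 2 + (r.map (· / 2)).sum)
          ≤ (q - 1) / 2 + (q / 2 + k * q) := by omega
      _ ≤ (k + 1) * q := by
          have : (k + 1) * q = k * q + q := by ring
          omega

section Words
variable {K : Type*} [Group K] {X : Set K}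

/-- `g` is a product of at most `d` elements of `X ∪ X⁻¹`. -/
def SWord (X : Set K) (d : ℕ) (g : K) : Prop :=
  ∃ w : List K, (∀ x ∈ w, x ∈ X ∪ X⁻¹) ∧ w.length ≤ d ∧ w.prod = g

lemma SWord.one (d : ℕ) : SWord X d (1 : K) := ⟨[], by simp, by simp, by simp⟩

lemma SWord.mono {d d' : ℕ} {g : K} (h : d ≤ d') (hs : SWord X d g) : SWord X d' g := by
  obtain ⟨w, h1, h2, h3⟩ := hs; exact ⟨w, h1, h2.trans h, h3⟩

lemma SWord.mul {d e : ℕ} {g h : K} (hg : SWord X d g) (hh : SWord X e h) :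
    SWord X (d + e) (g * h) := by
  obtain ⟨w1, h1, h2, h3⟩ := hg
  obtain ⟨w1', h1', h2', h3'⟩ := hh
  refine ⟨w1 ++ w1', ?_, by simp only [List.length_append]; omega,
    by rw [List.prod_append, h3, h3']⟩
  intro x hx
  rcases List.mem_append.1 hx with h | h
  exacts [h1 x h, h1' x h]

lemma SWord.inv {d : ℕ} {g : K} (hg : SWord X d g) : SWord X d g⁻¹ := by
  obtain ⟨w, h1, h2, h3⟩ := hg
  refine ⟨(w.map Inv.inv).reverse, ?_, by simpa using h2, ?_⟩
  · intro x hx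
    simp only [List.mem_reverse, List.mem_map] at hx
    obtain ⟨a, ha, rfl⟩ := hx
    rcases h1 a ha with h | h
    · exact Or.inr (by simpa using h)
    · exact Or.inl (by simpa using h)
  · rw [← h3, List.prod_inv_reverse]

lemma SWord.single {g : K} (hg : g ∈ X ∪ X⁻¹) : SWord X 1 g :=
  ⟨[g], by simpa using hg, by simp, by simp⟩

lemma SWord.of_mem {g : K} (hg : g ∈ X) : SWord X 1 g := SWord.single (Or.inl hg)

lemma SWord.zpow {x : K} (hx : x ∈ X) (c : ℤ) : SWord X c.natAbs (x ^ c) := by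
  refine ⟨List.replicate c.natAbs (if 0 ≤ c then x else x⁻¹), ?_, by simp, ?_⟩
  · intro a ha
    rw [List.mem_replicate] at ha
    rw [ha.2]
    split
    · exact Or.inl hx
    · exact Or.inr (Set.inv_mem_inv.2 hx)
  · rw [List.prod_replicate]
    split
    · next h => rw [← zpow_natCast, Int.natAbs_of_nonneg h]
    · next h =>
      rw [inv_pow, ← zpow_natCast, ← zpow_neg, Int.ofNat_natAbs_of_nonpos (by omega), neg_neg]

lemma SWord.of_factors {s : ℕ} : ∀ (P : List K), (∀ p ∈ P, SWord X s p) →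
    SWord X (s * P.length) P.prod := by
  intro P
  induction P with
  | nil => intro _; simpa using SWord.one 0
  | cons p P ih =>
    intro h
    rw [List.prod_cons, List.length_cons]
    have := (h p (by simp)).mul (ih (fun x hx => h x (by simp [hx])))
    exact this.mono (by ring_nf; omega)

end Words

section Chain
variable {K : Type*} [Group K] {N : Subgroup K} {X : Set K} {q : ℕ}

lemma normal_of_comm (hN : ∀ a b : K, ⁅a, b⁆ ∈ N) {M : Subgroup K} (hNM : N ≤ M) :
    M.Normal := by
  constructor
  intro m hm g
  have : g * m * g⁻¹ = ⁅g, m⁆ * m := by group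
  rw [this]
  exact M.mul_mem (hNM (hN g m)) hm

lemma mem_sup_closure_singleton (hN : ∀ a b : K, ⁅a, b⁆ ∈ N) {M : Subgroup K} (hNM : N ≤ M)
    (x : K) {y : K} (hy : y ∈ closure {x} ⊔ M) : ∃ c : ℤ, ∃ m ∈ M, y = x ^ c * m := by
  haveI hMn : M.Normal := normal_of_comm hN hNM
  let T : Subgroup K :=
    { carrier := {y | ∃ c : ℤ, ∃ m ∈ M, y = x ^ c * m}
      one_mem' := ⟨0, 1, M.one_mem, by simp⟩
      mul_mem' := by
        rintro a b ⟨c, m, hm, rfl⟩ ⟨d, m', hm', rfl⟩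
        refine ⟨c + d, ((x ^ d)⁻¹ * m * x ^ d) * m', M.mul_mem (hMn.conj_mem' m hm (x ^ d)) hm', ?_⟩
        rw [zpow_add]
        group
      inv_mem' := by
        rintro a ⟨c, m, hm, rfl⟩
        refine ⟨-c, x ^ c * m⁻¹ * (x ^ c)⁻¹, hMn.conj_mem m⁻¹ (M.inv_mem hm) (x ^ c), ?_⟩
        rw [zpow_neg]
        group }
  have hle : closure {x} ⊔ M ≤ T := by
    apply sup_le
    · rw [closure_le]
      rintro a rfl
      exact ⟨1, 1, M.one_mem, by simp⟩
    · intro m hm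
      exact ⟨0, m, hm, by simp⟩
  exact hle hy

variable [Finite K]

/-- The chain lemma: short coset representatives for `N` in `K`. -/
lemma chain_reps (hN : ∀ a b : K, ⁅a, b⁆ ∈ N) (hX : closure X = ⊤)
    (hq : ∀ x : K, x ^ q ∈ N) (hq1 : 1 ≤ q) :
    ∃ L : List ℕ, (∀ m ∈ L, 2 ≤ m ∧ m ≤ q) ∧ L.prod * Nat.card N ≤ Nat.card K ∧
      ∀ g : K, ∃ w : List K, (∀ x ∈ w, x ∈ X ∪ X⁻¹) ∧
        w.length ≤ (L.map (· / 2)).sum ∧ w.prod⁻¹ * g ∈ N := by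
  classical
  suffices h : ∀ (k : ℕ) (M : Subgroup K), N ≤ M → Nat.card K - Nat.card M ≤ k →
      ∃ L : List ℕ, (∀ m ∈ L, 2 ≤ m ∧ m ≤ q) ∧ L.prod * Nat.card M ≤ Nat.card K ∧
        ∀ g : K, ∃ w : List K, (∀ x ∈ w, x ∈ X ∪ X⁻¹) ∧
          w.length ≤ (L.map (· / 2)).sum ∧ w.prod⁻¹ * g ∈ M by
    exact h (Nat.card K) N le_rfl (by omega)
  intro k
  induction k with
  | zero =>
    intro M hNM hcard
    have h1 : Nat.card M ≤ Nat.card K := Subgroup.card_le_card_group M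
    have hM : M = ⊤ := Subgroup.eq_top_of_card_eq M (by omega)
    subst hM
    exact ⟨[], by simp, by simpa using h1, fun g => ⟨[], by simp, by simp, by simp⟩⟩
  | succ k ih =>
    intro M hNM hcard
    by_cases hXM : X ⊆ ↑M
    · have hM : M = ⊤ := by
        rw [eq_top_iff, ← hX, closure_le]; exact hXM
      subst hM
      exact ⟨[], by simp, by simpa using Subgroup.card_le_card_group (⊤ : Subgroup K),
        fun g => ⟨[], by simp, by simp, by simp⟩⟩
    · rw [Set.not_subset] at hXM
      obtain ⟨x, hxX, hxM⟩ := hXM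
      have hex : ∃ d, 0 < d ∧ x ^ d ∈ M := ⟨q, by omega, hNM (hq x)⟩
      obtain ⟨m₀, hm₀pos, hxm₀, hm₀min, hm₀le⟩ :
          ∃ m₀, 0 < m₀ ∧ x ^ m₀ ∈ M ∧ (∀ d < m₀, ¬(0 < d ∧ x ^ d ∈ M)) ∧ m₀ ≤ q :=
        ⟨Nat.find hex, (Nat.find_spec hex).1, (Nat.find_spec hex).2,
          fun d hd => Nat.find_min hex hd, Nat.find_le ⟨by omega, hNM (hq x)⟩⟩
      have hm₀2 : 2 ≤ m₀ := by
        by_contra h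
        push_neg at h
        have h1 : m₀ = 1 := by omega
        rw [h1, pow_one] at hxm₀
        exact hxM hxm₀
      set M' := closure {x} ⊔ M with hM'def
      have hMM' : M ≤ M' := le_sup_right
      have hxM' : x ∈ M' := (le_sup_left : closure {x} ≤ M') (subset_closure (Set.mem_singleton x))
      -- injectivity / cardinality
      have hinj : Function.Injective (fun p : Fin m₀ × M =>
          (⟨x ^ (p.1 : ℕ) * (p.2 : K), M'.mul_mem (M'.pow_mem hxM' _) (hMM' p.2.2)⟩ : M')) := by
        have key : ∀ (r r' : Fin m₀) (m m' : M), (r' : ℕ) ≤ (r : ℕ) →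
            x ^ (r : ℕ) * (m : K) = x ^ (r' : ℕ) * (m' : K) → r = r' ∧ m = m' := by
          intro r r' m m' hle heq
          have h1 : x ^ ((r : ℕ) - (r' : ℕ)) * (m : K) = (m' : K) := by
            have : x ^ (r : ℕ) = x ^ (r' : ℕ) * x ^ ((r : ℕ) - (r' : ℕ)) := by
              rw [← pow_add]; congr 1; omega
            rw [this, mul_assoc] at heq
            exact mul_left_cancel heq
          have h2 : x ^ ((r : ℕ) - (r' : ℕ)) ∈ M := by
            have : x ^ ((r : ℕ) - (r' : ℕ)) = (m' : K) * (m : K)⁻¹ := by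
              rw [← h1]; group
            rw [this]; exact M.mul_mem m'.2 (M.inv_mem m.2)
          have h3 : (r : ℕ) - (r' : ℕ) = 0 := by
            by_contra h
            exact (hm₀min ((r : ℕ) - (r' : ℕ)) (by omega)) ⟨by omega, h2⟩
          have h4 : r = r' := by
            apply Fin.ext; omega
          refine ⟨h4, ?_⟩
          subst h4
          have := mul_left_cancel heq
          exact Subtype.ext this
        rintro ⟨r, m⟩ ⟨r', m'⟩ heq
        simp only [Subtype.mk_eq_mk] at heq
        rcases le_total (r' : ℕ) (r : ℕ) with h | h
        · obtain ⟨h1, h2⟩ := key r r' m m' h heq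
          simp [h1, h2]
        · obtain ⟨h1, h2⟩ := key r' r m' m h heq.symm
          simp [h1, h2]
      have hcard' : m₀ * Nat.card M ≤ Nat.card M' := by
        calc m₀ * Nat.card M = Nat.card (Fin m₀ × M) := by
              rw [Nat.card_prod]; simp
        _ ≤ Nat.card M' := Nat.card_le_card_of_injective _ hinj
      have hMpos : 0 < Nat.card M := Nat.card_pos
      have hlt : Nat.card M < Nat.card M' := by nlinarith
      obtain ⟨L', hL'mem, hL'card, hL'reps⟩ := ih M' (hNM.trans hMM') (by omega)
      refine ⟨m₀ :: L', ?_, ?_, ?_⟩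
      · intro m hmem
        rw [List.mem_cons] at hmem
        rcases hmem with rfl | hmm
        · exact ⟨hm₀2, hm₀le⟩
        · exact hL'mem m hmm
      · rw [List.prod_cons, mul_comm m₀ L'.prod, mul_assoc]
        calc L'.prod * (m₀ * Nat.card M) ≤ L'.prod * Nat.card M' :=
              Nat.mul_le_mul_left _ hcard'
        _ ≤ Nat.card K := hL'card
      · intro g
        obtain ⟨w', hw'mem, hw'len, hw'⟩ := hL'reps g
        obtain ⟨c, m, hm, hcm⟩ := mem_sup_closure_singleton hN hNM x hw'
        -- balanced residue
        set cr := c % (m₀ : ℤ) with hcr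
        have hcr0 : 0 ≤ cr := Int.emod_nonneg c (by positivity)
        have hcrlt : cr < (m₀ : ℤ) := Int.emod_lt_of_pos c (by positivity)
        set r : ℤ := if cr ≤ (m₀ / 2 : ℕ) then cr else cr - m₀ with hrdef
        have hrabs : r.natAbs ≤ m₀ / 2 := by
          rw [hrdef]
          split
          · next h => omega
          · next h => omega
        have hdvd : (m₀ : ℤ) ∣ (c - r) := by
          have h1 : (m₀ : ℤ) ∣ (c - cr) := by
            refine ⟨c / (m₀ : ℤ), ?_⟩
            have := Int.mul_ediv_add_emod c (m₀ : ℤ)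
            rw [hcr]
            linarith
          rw [hrdef]
          split
          · exact h1
          · have : c - (cr - m₀) = (c - cr) + m₀ := by ring
            rw [this]
            exact Int.dvd_add h1 (Int.dvd_refl _)
        have hxcr : x ^ (c - r) ∈ M := by
          obtain ⟨t, ht⟩ := hdvd
          rw [ht, zpow_mul, zpow_natCast]
          exact M.zpow_mem hxm₀ t
        refine ⟨w' ++ List.replicate r.natAbs (if 0 ≤ r then x else x⁻¹), ?_, ?_, ?_⟩
        · intro a ha
          rcases List.mem_append.1 ha with h | h
          · exact hw'mem a h
          · rw [List.mem_replicate] at h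
            rw [h.2]
            split
            · exact Or.inl hxX
            · exact Or.inr (Set.inv_mem_inv.2 hxX)
        · rw [List.length_append, List.length_replicate, List.map_cons, List.sum_cons]
          omega
        · have hprod : (w' ++ List.replicate r.natAbs (if 0 ≤ r then x else x⁻¹)).prod
              = w'.prod * x ^ r := by
            rw [List.prod_append, List.prod_replicate]
            congr 1
            split
            · next h => rw [← zpow_natCast, Int.natAbs_of_nonneg h]
            · next h =>
              rw [inv_pow, ← zpow_natCast, ← zpow_neg, Int.ofNat_natAbs_of_nonpos (by omega),
                neg_neg]
          rw [hprod, mul_inv_rev, mul_assoc, hcm, ← mul_assoc, ← zpow_neg, ← zpow_add,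
            neg_add_eq_sub]
          exact M.mul_mem hxcr hm
end Chain

section Schreier
variable {K : Type*} [Group K] {X : Set K}

lemma schreier (N : Subgroup K) [hNn : N.Normal] (hX : Subgroup.closure X = ⊤) (d₁ : ℕ)
    (hcover : ∀ g : K, ∃ w : List K, (∀ x ∈ w, x ∈ X ∪ X⁻¹) ∧ w.length ≤ d₁ ∧ w.prod⁻¹ * g ∈ N) :
    ∀ h ∈ N, ∃ P : List K, (∀ p ∈ P, p ∈ N ∧ SWord X (2 * d₁ + 1) p) ∧ P.prod = h := by
  have key : ∀ w : List K, (∀ x ∈ w, x ∈ X ∪ X⁻¹) →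
      ∃ (P : List K) (t : K), (∀ p ∈ P, p ∈ N ∧ SWord X (2 * d₁ + 1) p) ∧
        SWord X d₁ t ∧ t⁻¹ * w.prod ∈ N ∧ w.prod = P.prod * t := by
    intro w
    induction w using List.reverseRecOn with
    | nil =>
      intro _
      exact ⟨[], 1, by simp, SWord.one d₁, by simpa using N.one_mem, by simp⟩
    | append_singleton w' x ih =>
      intro hmem
      obtain ⟨P', t', hP', ht'word, ht'N, ht'prod⟩ := ih (fun a ha => hmem a (by simp [ha]))
      obtain ⟨wt, hwt, hwtlen, hwtN⟩ := hcover ((w' ++ [x]).prod)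
      set t := wt.prod with htdef
      have hxmem : x ∈ X ∪ X⁻¹ := hmem x (by simp)
      set y := t' * x * t⁻¹ with hydef
      have hyN : y ∈ N := by
        have h1 : t⁻¹ * (w' ++ [x]).prod ∈ N := hwtN
        have h2 : (t'⁻¹ * w'.prod)⁻¹ ∈ N := N.inv_mem ht'N
        have h3 : x⁻¹ * (t'⁻¹ * w'.prod)⁻¹ * x ∈ N := by
          have := hNn.conj_mem _ h2 x⁻¹
          simpa using this
        have h4 : t⁻¹ * (t' * x) ∈ N := by
          have heq : t⁻¹ * (t' * x) = (t⁻¹ * (w' ++ [x]).prod) * (x⁻¹ * (t'⁻¹ * w'.prod)⁻¹ * x) := by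
            rw [List.prod_append]
            simp only [List.prod_cons, List.prod_nil, mul_one]
            group
          rw [heq]
          exact N.mul_mem h1 h3
        exact hNn.mem_comm_iff.1 h4
      have hyword : SWord X (2 * d₁ + 1) y := by
        have h1 : SWord X (d₁ + 1) (t' * x) := ht'word.mul (SWord.single hxmem)
        have h2 : SWord X d₁ t⁻¹ := SWord.inv ⟨wt, hwt, hwtlen, rfl⟩
        have := h1.mul h2
        exact this.mono (by omega)
      refine ⟨P' ++ [y], t, ?_, ⟨wt, hwt, hwtlen, htdef.symm⟩, hwtN, ?_⟩
      · intro p hp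
        rcases List.mem_append.1 hp with h | h
        · exact hP' p h
        · rw [List.mem_singleton] at h
          subst h
          exact ⟨hyN, hyword⟩
      · rw [List.prod_append, List.prod_singleton, List.prod_append, List.prod_singleton,
          ht'prod, hydef]
        group
  intro h hh
  have hh2 : h ∈ Submonoid.closure (X ∪ X⁻¹) := by
    rw [← Subgroup.closure_toSubmonoid]
    exact (hX ▸ Subgroup.mem_top h : h ∈ Subgroup.closure X)
  obtain ⟨w, hwmem, hwprod⟩ := Submonoid.exists_list_of_mem_closure hh2
  obtain ⟨P, t, hP, htword, htN, htprod⟩ := key w hwmem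
  rw [hwprod] at htN htprod
  have htmemN : t ∈ N := by
    have h1 : t⁻¹ ∈ N := by
      have := N.mul_mem htN (N.inv_mem hh)
      simpa [mul_assoc] using this
    simpa using N.inv_mem h1
  refine ⟨P ++ [t], ?_, by rw [List.prod_append, List.prod_singleton, htprod]⟩
  intro p hp
  rcases List.mem_append.1 hp with h | h
  · exact hP p h
  · rw [List.mem_singleton] at h
    subst h
    exact ⟨htmemN, htword.mono (by omega)⟩

end Schreier

/-- bound function -/
def bnd : ℕ → ℕ → ℕ → ℕ
  | 0, _, _ => 0
  | (l + 1), n, c => 4 ^ l * n ^ (l + 1) * c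

lemma bnd_rec (l n q cH : ℕ) (hn : 1 ≤ n) (hq : 1 ≤ q) (hc : 1 ≤ cH) :
    n * q + (2 * (n * q) + 1) * bnd l n cH ≤ bnd (l + 1) n (q * cH) := by
  cases l with
  | zero =>
    simp only [bnd, mul_zero, add_zero, pow_zero, one_mul, zero_add, pow_one]
    calc n * q = n * q * 1 := by ring
    _ ≤ n * q * cH := Nat.mul_le_mul_left _ hc
    _ = n * (q * cH) := by ring
  | succ l' =>
    simp only [bnd]
    have hB : 1 ≤ 4 ^ l' * n ^ (l' + 1) * cH := by
      have : 0 < 4 ^ l' * n ^ (l' + 1) * cH := by positivity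
      omega
    set B := 4 ^ l' * n ^ (l' + 1) * cH with hBdef
    have h1 : 1 ≤ n * q := by
      have : 0 < n * q := by positivity
      omega
    have hR : 4 ^ (l' + 1) * n ^ (l' + 1 + 1) * (q * cH) = 4 * (n * q) * B := by
      rw [hBdef]; ring
    rw [hR]
    calc n * q + (2 * (n * q) + 1) * B ≤ n * q * B + (2 * (n * q) + 1) * B :=
          Nat.add_le_add_right (Nat.le_mul_of_pos_right _ (by omega)) _
    _ = (3 * (n * q) + 1) * B := by ring
    _ ≤ (4 * (n * q)) * B := Nat.mul_le_mul_right _ (by omega)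
    _ = 4 * (n * q) * B := by ring

lemma derivedSeries_map_subtype (G : Type*) [Group G] :
    ∀ m : ℕ, (derivedSeries ↥(derivedSeries G 1) m).map (derivedSeries G 1).subtype
      = derivedSeries G (m + 1)
  | 0 => by
    rw [derivedSeries_zero, ← MonoidHom.range_eq_map, Subgroup.range_subtype]
  | (m + 1) => by
    have h1 := derivedSeries_succ (↥(derivedSeries G 1)) m
    rw [h1, Subgroup.map_commutator, derivedSeries_map_subtype G m]
    exact (derivedSeries_succ G (m + 1)).symm

/-- the multiplicative equivalence between a pi-subgroup and the pi of subgroups -/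
def subgroupPiEquiv {G : Type*} [Group G] (H : Subgroup G) (n : ℕ) :
    ↥(Subgroup.pi Set.univ fun _ : Fin n => H) ≃* (Fin n → ↥H) where
  toFun z := fun i => ⟨z.1 i, z.2 i (Set.mem_univ i)⟩
  invFun f := ⟨fun i => (f i : G), fun i _ => (f i).2⟩
  left_inv z := rfl
  right_inv f := rfl
  map_mul' z w := rfl


section Transfer
variable {K : Type*} [Group K]

lemma SWord.map_equiv {K₁ K₂ : Type*} [Group K₁] [Group K₂] (e : K₁ ≃* K₂) {Y : Set K₁}
    {d : ℕ} {g : K₁} (h : SWord (⇑e '' Y) d (e g)) : SWord Y d g := by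
  obtain ⟨w, hmem, hlen, hprod⟩ := h
  refine ⟨w.map e.symm, ?_, by simpa using hlen, ?_⟩
  · intro a ha
    simp only [List.mem_map] at ha
    obtain ⟨b, hb, rfl⟩ := ha
    rcases hmem b hb with h | h
    · obtain ⟨y, hy, rfl⟩ := h
      simpa using Or.inl hy
    · rw [Set.mem_inv] at h
      obtain ⟨y, hy, hyb⟩ := h
      right
      rw [Set.mem_inv]
      have : (e.symm b)⁻¹ = e.symm b⁻¹ := by simp
      rw [this, ← hyb]
      simpa using hy
  · have h2 : (w.map ⇑e.symm).prod = e.symm w.prod := by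
      have := map_list_prod e.symm.toMonoidHom w
      simpa using this.symm
    rw [h2, hprod]
    simp

lemma sword_coe {N : Subgroup K} {X : Set K} {Y' : Set ↥N} {s d : ℕ}
    (hY : ∀ y : ↥N, y ∈ Y' → SWord X s (y : K)) {h : ↥N} (hw : SWord Y' d h) :
    SWord X (s * d) (h : K) := by
  obtain ⟨w, hmem, hlen, hprod⟩ := hw
  have hfac : ∀ p ∈ w.map ((↑) : ↥N → K), SWord X s p := by
    intro p hp
    simp only [List.mem_map] at hp
    obtain ⟨z, hz, rfl⟩ := hp
    rcases hmem z hz with h | h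
    · exact hY z h
    · rw [Set.mem_inv] at h
      have h2 := (hY z⁻¹ h).inv
      simpa using h2
  have hall := SWord.of_factors _ hfac
  have hprod2 : (w.map ((↑) : ↥N → K)).prod = (h : K) := by
    have := map_list_prod N.subtype w
    simp only [Subgroup.coe_subtype] at this
    rw [← this, hprod]
  rw [hprod2] at hall
  exact hall.mono (by
    have : (w.map ((↑) : ↥N → K)).length = w.length := by simp
    rw [this]
    exact Nat.mul_le_mul_left s hlen)

end Transfer

section MainInduction

universe u

lemma main_lemma : ∀ (l : ℕ) (G : Type u) [Group G] [Finite G],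
    derivedSeries G l = ⊥ → ∀ n : ℕ, 1 ≤ n → ∀ X : Set (Fin n → G), Subgroup.closure X = ⊤ →
    ∀ g : Fin n → G, SWord X (bnd l n (Nat.card G)) g := by
  intro l
  induction l with
  | zero =>
    intro G _ _ hl n hn X hX g
    have htriv : ∀ a : G, a = 1 := by
      intro a
      have h1 : a ∈ (⊥ : Subgroup G) := by
        rw [← hl, derivedSeries_zero]
        exact Subgroup.mem_top a
      exact Subgroup.mem_bot.1 h1
    have hg : g = 1 := funext fun i => htriv (g i)
    rw [hg]
    exact SWord.one _
  | succ l ih =>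
    intro G _ _ hl n hn X hX g
    set H : Subgroup G := derivedSeries G 1 with hHdef
    haveI : H.Normal := derivedSeries_normal G 1
    set N : Subgroup (Fin n → G) := Subgroup.pi Set.univ (fun _ => H) with hNdef
    set q : ℕ := Nat.card (G ⧸ H) with hqdef
    have hq1 : 1 ≤ q := Nat.card_pos
    have hNcomm : ∀ a b : Fin n → G, ⁅a, b⁆ ∈ N := by
      intro a b
      rw [Subgroup.mem_pi]
      intro i _
      have : ⁅a, b⁆ i = ⁅a i, b i⁆ := rfl
      rw [this, hHdef, derivedSeries_succ, derivedSeries_zero]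
      exact Subgroup.commutator_mem_commutator (Subgroup.mem_top _) (Subgroup.mem_top _)
    have hpow : ∀ x : Fin n → G, x ^ q ∈ N := by
      intro x
      rw [Subgroup.mem_pi]
      intro i _
      have h1 : (x ^ q) i = (x i) ^ q := rfl
      rw [h1]
      have h2 : ((QuotientGroup.mk' H) (x i ^ q)) = ((QuotientGroup.mk' H) (x i)) ^ q :=
        map_pow _ _ _
      have h3 : ((QuotientGroup.mk' H) (x i)) ^ q = 1 := pow_card_eq_one'
      have h4 : ((QuotientGroup.mk' H) (x i ^ q)) = 1 := by rw [h2, h3]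
      exact (QuotientGroup.eq_one_iff _).1 h4
    have hcardG : Nat.card G = q * Nat.card H :=
      Subgroup.card_eq_card_quotient_mul_card_subgroup H
    have hcardK : Nat.card (Fin n → G) = (Nat.card G) ^ n := by
      simp [Nat.card_pi]
    have hcardN : Nat.card ↥N = (Nat.card ↥H) ^ n := by
      rw [Nat.card_congr (subgroupPiEquiv H n).toEquiv]
      simp [Nat.card_pi]
    have hHpos : 0 < Nat.card ↥H := Nat.card_pos
    obtain ⟨L, hLmem, hLcard, hreps⟩ := chain_reps hNcomm hX hpow hq1
    have hLprod : L.prod ≤ q ^ n := by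
      rw [hcardN, hcardK, hcardG, mul_pow] at hLcard
      have h1 : L.prod * Nat.card ↥H ^ n ≤ q ^ n * Nat.card ↥H ^ n := hLcard
      exact Nat.le_of_mul_le_mul_right h1 (by positivity)
    have hsum : (L.map (· / 2)).sum ≤ n * q := sum_halves_le q hq1 n L hLmem hLprod
    set d₁ : ℕ := n * q with hd₁def
    have hcover : ∀ g : Fin n → G, ∃ w : List (Fin n → G), (∀ x ∈ w, x ∈ X ∪ X⁻¹) ∧
        w.length ≤ d₁ ∧ w.prod⁻¹ * g ∈ N := by
      intro g'
      obtain ⟨w, h1, h2, h3⟩ := hreps g'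
      exact ⟨w, h1, h2.trans hsum, h3⟩
    -- the set of short words in N generates N
    set Y' : Set ↥N := {y : ↥N | SWord X (2 * d₁ + 1) (y : Fin n → G)} with hY'def
    have hY'gen : Subgroup.closure Y' = ⊤ := by
      rw [eq_top_iff]
      intro z _
      obtain ⟨P, hP, hprod⟩ := schreier N hX d₁ hcover (z : Fin n → G) z.2
      have key : ∀ (P : List (Fin n → G)),
          (∀ p ∈ P, p ∈ N ∧ SWord X (2 * d₁ + 1) p) → ∀ hm : P.prod ∈ N,
          (⟨P.prod, hm⟩ : ↥N) ∈ Subgroup.closure Y' := by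
        intro P
        induction P with
        | nil =>
          intro _ hm
          have : (⟨List.prod [], hm⟩ : ↥N) = 1 := by
            apply Subtype.ext; simp
          rw [this]
          exact Subgroup.one_mem _
        | cons p P' ihP =>
          intro hPmem hm
          have hp := hPmem p (by simp)
          have hP'mem : ∀ x ∈ P', x ∈ N ∧ SWord X (2 * d₁ + 1) x :=
            fun x hx => hPmem x (by simp [hx])
          have hmm : P'.prod ∈ N := by
            have h1 : P'.prod = p⁻¹ * (p :: P').prod := by
              rw [List.prod_cons]; group
            rw [h1]
            exact N.mul_mem (N.inv_mem hp.1) hm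
          have heq : (⟨(p :: P').prod, hm⟩ : ↥N) = ⟨p, hp.1⟩ * ⟨P'.prod, hmm⟩ := by
            apply Subtype.ext
            simp [List.prod_cons]
          rw [heq]
          exact Subgroup.mul_mem _
            (Subgroup.subset_closure (by rw [hY'def]; exact hp.2))
            (ihP hP'mem hmm)
      have hz : z = ⟨P.prod, by rw [hprod]; exact z.2⟩ := by
        apply Subtype.ext; exact hprod.symm
      rw [hz]
      exact key P hP _
    -- apply the induction hypothesis to H
    have hder : derivedSeries ↥H l = ⊥ := by
      have h3 := derivedSeries_map_subtype G l
      rw [hl] at h3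
      exact (Subgroup.map_eq_bot_iff_of_injective _ (Subgroup.subtype_injective _)).1 h3
    set eN := subgroupPiEquiv H n with heNdef
    set Y₂ : Set (Fin n → ↥H) := ⇑eN '' Y' with hY₂def
    have hY₂gen : Subgroup.closure Y₂ = ⊤ := by
      rw [hY₂def, show ⇑eN '' Y' = ⇑eN.toMonoidHom '' Y' from rfl,
        ← MonoidHom.map_closure, hY'gen]
      exact Subgroup.map_top_of_surjective _ eN.surjective
    have hcardH2 : Nat.card (↥H) = Nat.card ↥H := rfl
    -- final assembly
    obtain ⟨w₁, hw₁mem, hw₁len, hw₁N⟩ := hcover g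
    set h₀ : ↥N := ⟨w₁.prod⁻¹ * g, hw₁N⟩ with hh₀def
    have hih := ih ↥H hder n hn Y₂ hY₂gen (eN h₀)
    have hYN : SWord Y' (bnd l n (Nat.card ↥H)) h₀ := SWord.map_equiv eN hih
    have hXh₀ : SWord X ((2 * d₁ + 1) * bnd l n (Nat.card ↥H)) ((h₀ : ↥N) : Fin n → G) :=
      sword_coe (fun y hy => hy) hYN
    have hw₁word : SWord X d₁ w₁.prod := ⟨w₁, hw₁mem, hw₁len, rfl⟩
    have hgeq : g = w₁.prod * ((h₀ : ↥N) : Fin n → G) := by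
      rw [hh₀def]
      simp
    rw [hgeq]
    have := hw₁word.mul hXh₀
    apply this.mono
    rw [hcardG]
    exact bnd_rec l n q (Nat.card ↥H) hn hq1 hHpos

end MainInduction

theorem stmt7 {G : Type*} [Group G] [Finite G] (hna : ¬ ∀ a b : G, a * b = b * a)
    (l : ℕ) (hl : derivedSeries G l = ⊥) (hmin : ∀ m < l, derivedSeries G m ≠ ⊥)
    (n : ℕ) (hn : 1 ≤ n) :
    (maxSymDiam (Fin n → G) : ℝ) ≤ (1 / 4) * (4 * n) ^ l * Nat.card G := by
  obtain ⟨l', rfl⟩ : ∃ l', l = l' + 1 := by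
    cases l with
    | zero =>
      exfalso
      apply hna
      intro a b
      have h1 : ∀ c : G, c = 1 := by
        intro c
        have : c ∈ (⊥ : Subgroup G) := by
          rw [← hl, derivedSeries_zero]; exact Subgroup.mem_top c
        exact Subgroup.mem_bot.1 this
      rw [h1 a, h1 b]
    | succ l' => exact ⟨l', rfl⟩
  set B : ℕ := bnd (l' + 1) n (Nat.card G) with hBdef
  have hmain := main_lemma (l' + 1) G hl n hn
  have hnat : maxSymDiam (Fin n → G) ≤ B := by
    apply csSup_le
    · exact ⟨symDiam (Fin n → G) Set.univ, Set.univ, Subgroup.closure_univ, rfl⟩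
    · rintro d ⟨X, hXgen, rfl⟩
      apply csSup_le
      · exact ⟨symWordLen X 1, 1, rfl⟩
      · rintro v ⟨g, rfl⟩
        obtain ⟨w, hwmem, hwlen, hwprod⟩ := hmain X hXgen g
        have hmem : w.length ∈ {k | ∃ w' : List (Fin n → G),
            (∀ x ∈ w', x ∈ X ∪ X⁻¹) ∧ w'.length = k ∧ w'.prod = g} := ⟨w, hwmem, rfl, hwprod⟩
        calc symWordLen X g ≤ w.length := Nat.sInf_le hmem
        _ ≤ B := hwlen
  have hcast : ((B : ℕ) : ℝ) = (1 / 4) * (4 * n) ^ (l' + 1) * Nat.card G := by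
    rw [hBdef]
    simp only [bnd]
    push_cast
    rw [mul_pow]
    ring
  calc (maxSymDiam (Fin n → G) : ℝ) ≤ (B : ℝ) := by exact_mod_cast hnat
  _ = (1 / 4) * (4 * n) ^ (l' + 1) * Nat.card G := hcast
end

section
/- Let G be a finite group with generating set X and normal subgroup H, and let T be a right transversal for G mod H with 1 ∈ T and Ml_X(T) ≤ D(G/H). Then diam(G,X) ≤ D(G/H) + (D(G/H) + 1 + Ml_X({t⁻¹ : t ∈ T}))·D(H). -/
section aux
variable {G : Type*} [Group G]

lemma exists_word [Finite G] {X : Set G} (hX : Subgroup.closure X = ⊤) (g : G) :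
    ∃ w : List G, (∀ x ∈ w, x ∈ X) ∧ w.prod = g := by
  have hg : g ∈ Submonoid.closure X := by
    let K : Subgroup G :=
      { toSubmonoid := Submonoid.closure X
        inv_mem' := fun {a} ha => by
          have hpos : 0 < orderOf a := orderOf_pos a
          have h1 : a ^ (orderOf a - 1) * a = 1 := by
            rw [← pow_succ, Nat.sub_add_cancel hpos, pow_orderOf_eq_one]
          have hinv : a ^ (orderOf a - 1) = a⁻¹ := eq_inv_of_mul_eq_one_left h1
          exact hinv ▸ Submonoid.pow_mem _ ha _ }
    have hle : Subgroup.closure X ≤ K := (Subgroup.closure_le K).mpr Submonoid.subset_closure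
    exact hle (hX ▸ Subgroup.mem_top g)
  exact Submonoid.exists_list_of_mem_closure hg

lemma wordLen_le {X : Set G} {g : G} {w : List G} (hw : ∀ x ∈ w, x ∈ X) (hp : w.prod = g) :
    wordLen X g ≤ w.length :=
  Nat.sInf_le ⟨w, hw, rfl, hp⟩

lemma exists_word_len {X : Set G} {g : G}
    (hne : ∃ w : List G, (∀ x ∈ w, x ∈ X) ∧ w.prod = g)
    {n : ℕ} (h : wordLen X g ≤ n) :
    ∃ w : List G, (∀ x ∈ w, x ∈ X) ∧ w.length ≤ n ∧ w.prod = g := by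
  obtain ⟨w, hw, hp⟩ := hne
  have hmem : wordLen X g ∈ {n | ∃ w : List G, (∀ x ∈ w, x ∈ X) ∧ w.length = n ∧ w.prod = g} :=
    Nat.sInf_mem ⟨w.length, w, hw, rfl, hp⟩
  obtain ⟨w', hw', hl, hp'⟩ := hmem
  exact ⟨w', hw', hl.le.trans h, hp'⟩

lemma wordLen_le_diam [Finite G] (X : Set G) (g : G) : wordLen X g ≤ diam G X :=
  le_csSup (Set.finite_range _).bddAbove ⟨g, rfl⟩

lemma diam_le_maxDiam [Finite G] {X : Set G} (hX : Subgroup.closure X = ⊤) :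
    diam G X ≤ maxDiam G := by
  apply le_csSup
  · have hsub : {d | ∃ X : Set G, Subgroup.closure X = ⊤ ∧ diam G X = d} ⊆
        Set.range (diam G) := by
      rintro d ⟨Y, _, rfl⟩; exact ⟨Y, rfl⟩
    exact ((Set.finite_range _).subset hsub).bddAbove
  · exact ⟨X, hX, rfl⟩

end aux
theorem stmt9 {G : Type*} [Group G] [Finite G] (X : Set G) (hX : Subgroup.closure X = ⊤)
    (H : Subgroup G) [H.Normal] (T : Set G) (hT : IsRightTransversal H T) (h1 : (1 : G) ∈ T)
    (hlen : ∀ t ∈ T, wordLen X t ≤ maxDiam (G ⧸ H)) :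
    diam G X ≤ maxDiam (G ⧸ H) +
      (maxDiam (G ⧸ H) + 1 + sSup ((fun t => wordLen X t⁻¹) '' T)) * maxDiam H := by
  classical
  set D := maxDiam (G ⧸ H) with hD
  set M := sSup ((fun t => wordLen X t⁻¹) '' T) with hM
  set K := maxDiam H with hK
  choose rep hrep using fun g => (hT g).exists
  have huniq : ∀ g t, t ∈ T → g * t⁻¹ ∈ H → t = rep g := fun g t ht hh =>
    (hT g).unique ⟨ht, hh⟩ (hrep g)
  set A : Set G := {a | a ∈ H ∧ ∃ t ∈ T, ∃ x ∈ X, ∃ s ∈ T, a = t * x * s⁻¹} with hA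
  -- Schreier rewriting
  have schreier : ∀ w : List G, (∀ x ∈ w, x ∈ X) →
      ∃ as : List G, (∀ a ∈ as, a ∈ A) ∧ as.length = w.length ∧
        as.prod = w.prod * (rep w.prod)⁻¹ := by
    intro w
    induction w using List.reverseRecOn with
    | nil =>
        intro _
        refine ⟨[], by simp, rfl, ?_⟩
        have hr1 : rep (1 : G) = 1 := (huniq 1 1 h1 (by simpa using H.one_mem)).symm
        simp [hr1]
    | append_singleton ys x ih =>
        intro hmem
        obtain ⟨as, hAs, hlen', hprod⟩ := ih fun a ha => hmem a (List.mem_append_left _ ha)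
        have hx : x ∈ X := hmem x (List.mem_append_right _ (List.mem_singleton_self x))
        set p := ys.prod with hp
        set t := rep p with ht
        set s := rep (p * x) with hs
        have htT : t ∈ T := (hrep p).1
        have htH : p * t⁻¹ ∈ H := (hrep p).2
        have hsT : s ∈ T := (hrep (p * x)).1
        have hsH : (p * x) * s⁻¹ ∈ H := (hrep (p * x)).2
        have hgH : t * x * s⁻¹ ∈ H := by
          have heq : t * x * s⁻¹ = (p * t⁻¹)⁻¹ * ((p * x) * s⁻¹) := by group
          rw [heq]; exact H.mul_mem (H.inv_mem htH) hsH
        have hpp : (ys ++ [x]).prod = p * x := by rw [List.prod_append, List.prod_singleton]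
        refine ⟨as ++ [t * x * s⁻¹], ?_, by simp [hlen'], ?_⟩
        · intro a ha
          rcases List.mem_append.mp ha with h | h
          · exact hAs a h
          · rw [List.mem_singleton.mp h]
            exact ⟨hgH, t, htT, x, hx, s, hsT, rfl⟩
        · rw [List.prod_append, List.prod_singleton, hprod, hpp]
          group
          rfl
  -- lift lists of A-elements into H
  have lift : ∀ as : List G, (∀ a ∈ as, a ∈ A) →
      ∃ bs : List H, (∀ b ∈ bs, (b : G) ∈ A) ∧ bs.length = as.length ∧
        ((bs.prod : H) : G) = as.prod := by
    intro as hAs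
    induction as with
    | nil => exact ⟨[], by simp, rfl, by simp⟩
    | cons a as ih =>
        obtain ⟨bs, hb1, hb2, hb3⟩ := ih fun y hy => hAs y (List.mem_cons_of_mem _ hy)
        have haA : a ∈ A := hAs a List.mem_cons_self
        refine ⟨⟨a, haA.1⟩ :: bs, ?_, by simp [hb2], ?_⟩
        · intro b hb
          rcases List.mem_cons.mp hb with h | h
          · rw [h]; exact haA
          · exact hb1 b h
        · simp only [List.prod_cons, Subgroup.coe_mul]
          rw [hb3]
  -- every element of H is a word in A'
  have hword : ∀ hh : H, ∃ bs : List H, (∀ b ∈ bs, b ∈ {a : H | (a : G) ∈ A}) ∧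
      bs.prod = hh := by
    intro hh
    obtain ⟨w, hw, hwp⟩ := exists_word hX (hh : G)
    obtain ⟨as, hAs, _, hap⟩ := schreier w hw
    obtain ⟨bs, hbs, _, hbp⟩ := lift as hAs
    have hr1 : rep ((hh : G)) = 1 := (huniq _ 1 h1 (by simp [hh.2])).symm
    exact ⟨bs, hbs, Subtype.ext (by rw [hbp, hap, hwp, hr1]; simp)⟩
  have hA'gen : Subgroup.closure {a : H | (a : G) ∈ A} = ⊤ := by
    rw [eq_top_iff]
    intro hh _
    obtain ⟨bs, hbs, hbp⟩ := hword hh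
    rw [← hbp]
    exact list_prod_mem fun b hb => Subgroup.subset_closure (hbs b hb)
  have hMbdd : BddAbove ((fun t => wordLen X t⁻¹) '' T) := ((Set.toFinite T).image _).bddAbove
  -- each A element has a short X-word
  have hAword : ∀ a ∈ A, ∃ w : List G, (∀ x ∈ w, x ∈ X) ∧ w.length ≤ D + 1 + M ∧
      w.prod = a := by
    rintro a ⟨-, t, htT, x, hx, s, hsT, rfl⟩
    obtain ⟨wt, hwt, hwtl, hwtp⟩ := exists_word_len (exists_word hX t) (hlen t htT)
    have hsM : wordLen X s⁻¹ ≤ M := le_csSup hMbdd ⟨s, hsT, rfl⟩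
    obtain ⟨ws, hws, hwsl, hwsp⟩ := exists_word_len (exists_word hX s⁻¹) hsM
    refine ⟨wt ++ [x] ++ ws, ?_, ?_, ?_⟩
    · intro y hy
      rcases List.mem_append.mp hy with h | h
      · rcases List.mem_append.mp h with h' | h'
        · exact hwt y h'
        · rw [List.mem_singleton.mp h']; exact hx
      · exact hws y h
    · simp only [List.length_append, List.length_singleton]
      omega
    · rw [List.prod_append, List.prod_append, List.prod_singleton, hwtp, hwsp]
  -- concatenation
  have concat : ∀ bs : List H, (∀ b ∈ bs, (b : G) ∈ A) →
      ∃ w : List G, (∀ x ∈ w, x ∈ X) ∧ w.length ≤ (D + 1 + M) * bs.length ∧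
        w.prod = ((bs.prod : H) : G) := by
    intro bs
    induction bs with
    | nil => exact fun _ => ⟨[], by simp, by simp, by simp⟩
    | cons b bs ih =>
        intro hbs
        obtain ⟨w, hw, hwl, hwp⟩ := ih fun y hy => hbs y (List.mem_cons_of_mem _ hy)
        obtain ⟨wb, hwb, hwbl, hwbp⟩ := hAword (b : G) (hbs b List.mem_cons_self)
        refine ⟨wb ++ w, ?_, ?_, ?_⟩
        · intro y hy
          rcases List.mem_append.mp hy with h | h
          · exact hwb y h
          · exact hw y h
        · rw [List.length_append, List.length_cons, Nat.mul_succ]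
          exact (Nat.add_le_add hwbl hwl).trans_eq (Nat.add_comm _ _)
        · rw [List.prod_append, hwbp, hwp, List.prod_cons, Subgroup.coe_mul]
  -- main bound
  have main : ∀ g : G, wordLen X g ≤ D + (D + 1 + M) * K := by
    intro g
    have htT : rep g ∈ T := (hrep g).1
    have hgH : g * (rep g)⁻¹ ∈ H := (hrep g).2
    set hh : H := ⟨g * (rep g)⁻¹, hgH⟩ with hhh
    have hfin : wordLen {a : H | (a : G) ∈ A} hh ≤ K :=
      (wordLen_le_diam _ _).trans (diam_le_maxDiam hA'gen)
    obtain ⟨bs, hbsA, hbsl, hbsp⟩ := exists_word_len (hword hh) hfin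
    obtain ⟨w, hw, hwl, hwp⟩ := concat bs hbsA
    obtain ⟨wt, hwt, hwtl, hwtp⟩ := exists_word_len (exists_word hX (rep g)) (hlen _ htT)
    have hle : wordLen X g ≤ (w ++ wt).length := by
      refine wordLen_le ?_ ?_
      · intro y hy
        rcases List.mem_append.mp hy with h | h
        · exact hw y h
        · exact hwt y h
      · rw [List.prod_append, hwp, hwtp, hbsp, hhh]
        simp
    refine hle.trans ?_
    rw [List.length_append]
    have h2 : w.length ≤ (D + 1 + M) * K :=
      hwl.trans (Nat.mul_le_mul_left _ hbsl)
    exact (Nat.add_le_add h2 hwtl).trans_eq (Nat.add_comm _ _)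
  refine csSup_le ⟨wordLen X 1, 1, rfl⟩ ?_
  rintro n ⟨g, rfl⟩
  exact main g
end

section
/- For every finite abelian group A and every n ≥ 1, D(A^n) ≤ n·(|A| − rank(A)) ≤ n·|A|. -/
private lemma auxLe2Pow (f : ℕ) (hf : 1 ≤ f) : f ≤ 2 ^ (f - 1) := by
  cases f with
  | zero => omega
  | succ m => simpa [Nat.succ_sub_one] using Nat.lt_two_pow_self (n := m)

private lemma auxPow1 (e f : ℕ) (he : 2 ≤ e) (hf : 1 ≤ f) :
    (e * f) ^ (e - 1) ≤ e ^ (e * f - 1) := by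
  have h1 : f ≤ e ^ (f - 1) :=
    le_trans (auxLe2Pow f hf) (Nat.pow_le_pow_left he _)
  calc (e * f) ^ (e - 1) = e ^ (e - 1) * f ^ (e - 1) := by rw [Nat.mul_pow]
    _ ≤ e ^ (e - 1) * (e ^ (f - 1)) ^ (e - 1) :=
        Nat.mul_le_mul_left _ (Nat.pow_le_pow_left h1 _)
    _ = e ^ ((e - 1) + (f - 1) * (e - 1)) := by rw [← pow_mul, ← pow_add]
    _ ≤ e ^ (e * f - 1) := by
        apply Nat.pow_le_pow_right (by omega)
        obtain ⟨a, rfl⟩ : ∃ a, e = a + 2 := ⟨e - 2, by omega⟩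
        obtain ⟨b, rfl⟩ : ∃ b, f = b + 1 := ⟨f - 1, by omega⟩
        have h2 : (a + 2) * (b + 1) = a * b + a + 2 * b + 2 := by ring
        have h3 : (b + 1 - 1) * (a + 2 - 1) = b * a + b := by simp; ring
        rw [h2, h3]
        have : b * a = a * b := Nat.mul_comm _ _
        omega

private lemma keyIneq {q r E e : ℕ} (hE : 2 ≤ E) (he : e ∣ E) (hqE : q ≤ E ^ r)
    (hrE : r * E ≤ q) (hq : 1 ≤ q) : q ^ (e - 1) ≤ e ^ (q - r) := by
  rcases Nat.eq_zero_or_pos e with rfl | he0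
  · obtain rfl : E = 0 := Nat.eq_zero_of_zero_dvd he
    omega
  rcases Nat.lt_or_ge e 2 with he1 | he2
  · obtain rfl : e = 1 := by omega
    simp
  -- step 2 : q ^ (E-1) ≤ E ^ (q-r)
  have hrEq : r * (E - 1) + r = r * E := by
    have : E - 1 + 1 = E := by omega
    calc r * (E - 1) + r = r * ((E - 1) + 1) := by ring
      _ = r * E := by rw [this]
  have hstep2 : q ^ (E - 1) ≤ E ^ (q - r) := by
    calc q ^ (E - 1) ≤ (E ^ r) ^ (E - 1) := Nat.pow_le_pow_left hqE _
      _ = E ^ (r * (E - 1)) := by rw [← pow_mul]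
      _ ≤ E ^ (q - r) := Nat.pow_le_pow_right (by omega) (by omega)
  -- step 1 : E ^ (e-1) ≤ e ^ (E-1)
  obtain ⟨f, rfl⟩ := he
  have hf1 : 1 ≤ f := by
    rcases Nat.eq_zero_or_pos f with rfl | h
    · simp at hE
    · exact h
  have hstep1 : (e * f) ^ (e - 1) ≤ e ^ (e * f - 1) := auxPow1 e f he2 hf1
  -- combine
  have hcomb : (q ^ (e - 1)) ^ (e * f - 1) ≤ (e ^ (q - r)) ^ (e * f - 1) := by
    calc (q ^ (e - 1)) ^ (e * f - 1) = (q ^ (e * f - 1)) ^ (e - 1) := by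
          rw [← pow_mul, ← pow_mul, Nat.mul_comm (e-1) (e*f-1)]
      _ ≤ ((e * f) ^ (q - r)) ^ (e - 1) := Nat.pow_le_pow_left hstep2 _
      _ = ((e * f) ^ (e - 1)) ^ (q - r) := by
          rw [← pow_mul, ← pow_mul, Nat.mul_comm (q-r) (e-1)]
      _ ≤ (e ^ (e * f - 1)) ^ (q - r) := Nat.pow_le_pow_left hstep1 _
      _ = (e ^ (q - r)) ^ (e * f - 1) := by
          rw [← pow_mul, ← pow_mul, Nat.mul_comm (e*f-1) (q-r)]
  exact (Nat.pow_le_pow_iff_left (by omega)).mp hcomb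

open Subgroup in
private lemma decompAux {G : Type*} [CommGroup G] (E : ℕ) (hE0 : 0 < E)
    (hE : ∀ g : G, g ^ E = 1) (x : G) (s : Set G) :
    ∃ e : ℕ, 0 < e ∧ e ∣ E ∧ x ^ e ∈ closure s ∧
      (∀ t, 0 < t → t < e → x ^ t ∉ closure s) ∧
      (∀ g ∈ closure (insert x s), ∃ a k, a < e ∧ k ∈ closure s ∧ g = x ^ a * k) := by
  set K := closure s with hK
  have hPne : E ∈ {t | 0 < t ∧ x ^ t ∈ K} := ⟨hE0, by rw [hE]; exact K.one_mem⟩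
  obtain ⟨e, ⟨he0, hxe⟩, hlow⟩ :
      ∃ e, (0 < e ∧ x ^ e ∈ K) ∧ ∀ t, (0 < t ∧ x ^ t ∈ K) → e ≤ t :=
    ⟨sInf {t | 0 < t ∧ x ^ t ∈ K}, Nat.sInf_mem ⟨E, hPne⟩, fun t ht => Nat.sInf_le ht⟩
  have hmin : ∀ t, 0 < t → t < e → x ^ t ∉ K := by
    intro t ht hlt hmem
    have := hlow t ⟨ht, hmem⟩
    omega
  have hdvd : e ∣ E := by
    have hsplit : x ^ E = (x ^ e) ^ (E / e) * x ^ (E % e) := by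
      rw [← pow_mul, ← pow_add, Nat.div_add_mod]
    have hx : x ^ (E % e) ∈ K := by
      have h2 : x ^ (E % e) = x ^ E * ((x ^ e) ^ (E / e))⁻¹ := by
        rw [hsplit]; group
      rw [h2, hE]
      exact K.mul_mem K.one_mem (K.inv_mem (K.pow_mem hxe _))
    by_contra hnd
    have hmod : 0 < E % e :=
      Nat.pos_of_ne_zero fun h0 => hnd (Nat.dvd_of_mod_eq_zero h0)
    exact hmin _ hmod (Nat.mod_lt _ he0) hx
  refine ⟨e, he0, hdvd, hxe, hmin, ?_⟩
  intro g hg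
  induction hg using closure_induction with
  | mem y hy =>
    rcases Set.mem_insert_iff.mp hy with rfl | hys
    · rcases Nat.lt_or_ge 1 e with h1 | h1
      · exact ⟨1, 1, h1, K.one_mem, by simp⟩
      · have he1 : e = 1 := by omega
        refine ⟨0, y, by omega, ?_, by simp⟩
        rw [he1] at hxe; simpa using hxe
    · exact ⟨0, y, he0, subset_closure hys, by simp⟩
  | one => exact ⟨0, 1, he0, K.one_mem, by simp⟩
  | mul g g' hgm hgm' ihg ihg' =>
    obtain ⟨a, k, ha, hk, rfl⟩ := ihg
    obtain ⟨a', k', ha', hk', rfl⟩ := ihg'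
    obtain ⟨m, b, hb, hab⟩ : ∃ m b, b < e ∧ a + a' = e * m + b :=
      ⟨(a + a') / e, (a + a') % e, Nat.mod_lt _ he0, (Nat.div_add_mod _ _).symm⟩
    refine ⟨b, (x ^ e) ^ m * (k * k'), hb,
      K.mul_mem (K.pow_mem hxe _) (K.mul_mem hk hk'), ?_⟩
    have h1 : x ^ a * k * (x ^ a' * k') = x ^ (a + a') * (k * k') := by
      rw [pow_add]; exact mul_mul_mul_comm _ _ _ _
    have key : x ^ (a + a') = x ^ b * (x ^ e) ^ m := by
      rw [← pow_mul, ← pow_add, hab, Nat.add_comm]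
    rw [h1, key, mul_assoc]
  | inv g hgm ihg =>
    obtain ⟨a, k, ha, hk, rfl⟩ := ihg
    rcases Nat.eq_zero_or_pos a with rfl | ha0
    · exact ⟨0, k⁻¹, he0, K.inv_mem hk, by simp⟩
    · have hxa : x ^ a * x ^ (e - a) = x ^ e := by
        rw [← pow_add]; congr 1; omega
      have h5 : x ^ a * k * x ^ (e - a) = x ^ e * k := by
        rw [mul_assoc, mul_comm k (x ^ (e - a)), ← mul_assoc, hxa]
      have h6 : (x ^ (e - a))⁻¹ * (x ^ a * k)⁻¹ = (x ^ e * k)⁻¹ := by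
        rw [← mul_inv_rev, h5]
      refine ⟨e - a, (x ^ (e - a))⁻¹ * (x ^ a * k)⁻¹, by omega, ?_, ?_⟩
      · rw [h6]; exact K.inv_mem (K.mul_mem hxe hk)
      · exact (mul_inv_cancel_left _ _).symm

open Subgroup in
private lemma repAux {G : Type*} [CommGroup G] [Finite G] (E q R : ℕ) (hE0 : 0 < E)
    (hE : ∀ g : G, g ^ E = 1) (hq : 1 ≤ q)
    (hkey : ∀ e, e ∣ E → q ^ (e - 1) ≤ e ^ R) :
    ∀ s : Finset G, ∀ g ∈ closure (s : Set G),
      ∃ w : List G, (∀ y ∈ w, y ∈ (s : Set G)) ∧ w.prod = g ∧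
        q ^ w.length ≤ Nat.card (closure (s : Set G)) ^ R := by
  classical
  intro s
  induction s using Finset.induction_on with
  | empty =>
    intro g hg
    rw [Finset.coe_empty, Subgroup.closure_empty, Subgroup.mem_bot] at hg
    subst hg
    refine ⟨[], by simp, by simp, ?_⟩
    simpa using Nat.one_le_pow _ _ Nat.card_pos
  | @insert x s hxs ih =>
    obtain ⟨e, he0, hedvd, hxe, hmin, hdec⟩ := decompAux E hE0 hE x (s : Set G)
    intro g hg
    rw [Finset.coe_insert] at hg
    obtain ⟨a, k, ha, hk, rfl⟩ := hdec g hg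
    obtain ⟨w, hw1, hw2, hw3⟩ := ih k hk
    -- card bound : e * card (closure s) ≤ card (closure (insert x s))
    have hxH : x ∈ closure (insert x (s : Set G)) :=
      subset_closure (Set.mem_insert _ _)
    have hKH : closure (s : Set G) ≤ closure (insert x (s : Set G)) :=
      closure_mono (Set.subset_insert _ _)
    have hinj : Function.Injective
        (fun p : Fin e × (closure (s : Set G)) =>
          (⟨x ^ (p.1 : ℕ) * (p.2 : G), mul_mem (pow_mem hxH _) (hKH p.2.2)⟩ :
            closure (insert x (s : Set G)))) := by
      rintro ⟨⟨a1, ha1⟩, ⟨k1, hk1⟩⟩ ⟨⟨a2, ha2⟩, ⟨k2, hk2⟩⟩ hpq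
      have heq : x ^ a1 * k1 = x ^ a2 * k2 := congrArg Subtype.val hpq
      have key : ∀ b1 b2 : ℕ, b1 ≤ b2 → b2 < e → ∀ c1 c2 : G, c1 ∈ closure (s : Set G) →
          c2 ∈ closure (s : Set G) → x ^ b1 * c1 = x ^ b2 * c2 → b1 = b2 ∧ c1 = c2 := by
        intro b1 b2 hb hb2 c1 c2 hc1 hc2 hcc
        have hsp : x ^ b2 = x ^ b1 * x ^ (b2 - b1) := by
          rw [← pow_add]; congr 1; omega
        have hxd : x ^ (b2 - b1) = c1 * c2⁻¹ := by
          have h7 : x ^ b1 * c1 = x ^ b1 * (x ^ (b2 - b1) * c2) := by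
            rw [hcc, hsp, mul_assoc]
          have h8 := mul_left_cancel h7
          rw [h8]; rw [mul_assoc, mul_inv_cancel, mul_one]
        have hb12 : b2 - b1 = 0 := by
          by_contra hne
          exact hmin (b2 - b1) (by omega) (by omega)
            (by rw [hxd]; exact mul_mem hc1 (inv_mem hc2))
        have hb' : b1 = b2 := by omega
        refine ⟨hb', ?_⟩
        subst hb'
        exact mul_left_cancel hcc
      rcases le_total a1 a2 with hle | hle
      · obtain ⟨h1, h2⟩ := key a1 a2 hle ha2 k1 k2 hk1 hk2 heq
        simp [Prod.ext_iff, Fin.ext_iff, Subtype.ext_iff, h1, h2]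
      · obtain ⟨h1, h2⟩ := key a2 a1 hle ha1 k2 k1 hk2 hk1 heq.symm
        simp [Prod.ext_iff, Fin.ext_iff, Subtype.ext_iff, h1.symm, h2.symm]
    have hcard : e * Nat.card (closure (s : Set G)) ≤
        Nat.card (closure (insert x (s : Set G))) := by
      have := Nat.card_le_card_of_injective _ hinj
      simpa [Nat.card_prod] using this
    refine ⟨List.replicate a x ++ w, ?_, ?_, ?_⟩
    · intro y hy
      rcases List.mem_append.mp hy with hy | hy
      · rw [List.eq_of_mem_replicate hy, Finset.coe_insert]
        exact Set.mem_insert _ _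
      · rw [Finset.coe_insert]
        exact Set.mem_insert_of_mem _ (hw1 y hy)
    · rw [List.prod_append, List.prod_replicate, hw2]
    · rw [List.length_append, List.length_replicate, pow_add]
      calc q ^ a * q ^ w.length
          ≤ q ^ (e - 1) * Nat.card (closure (s : Set G)) ^ R :=
            Nat.mul_le_mul (Nat.pow_le_pow_right hq (by omega)) hw3
        _ ≤ e ^ R * Nat.card (closure (s : Set G)) ^ R :=
            Nat.mul_le_mul_right _ (hkey e hedvd)
        _ = (e * Nat.card (closure (s : Set G))) ^ R := (Nat.mul_pow _ _ _).symm
        _ ≤ Nat.card (closure ((insert x s : Finset G) : Set G)) ^ R := by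
            rw [Finset.coe_insert]
            exact Nat.pow_le_pow_left hcard _

open Subgroup in
private lemma cardAux {B : Type*} [CommGroup B] [Finite B] (E : ℕ) (hE0 : 0 < E)
    (hE : ∀ g : B, g ^ E = 1) :
    ∀ s : Finset B, Nat.card (closure (s : Set B)) ≤ E ^ s.card := by
  classical
  intro s
  induction s using Finset.induction_on with
  | empty => simp [Subgroup.closure_empty]
  | @insert x s hxs ih =>
    obtain ⟨e, he0, hedvd, hxe, hmin, hdec⟩ := decompAux E hE0 hE x (s : Set B)
    have hsurj : Function.Surjective
        (fun p : Fin e × (closure (s : Set B)) =>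
          (⟨x ^ (p.1 : ℕ) * (p.2 : B),
            mul_mem (pow_mem (subset_closure (Set.mem_insert _ _)) _)
              ((Subgroup.closure_mono (Set.subset_insert _ _)) p.2.2)⟩ :
            closure (insert x (s : Set B)))) := by
      rintro ⟨g, hg⟩
      obtain ⟨a, k, ha, hk, rfl⟩ := hdec g hg
      exact ⟨⟨⟨a, ha⟩, ⟨k, hk⟩⟩, rfl⟩
    have hcard : Nat.card (closure (insert x (s : Set B))) ≤
        e * Nat.card (closure (s : Set B)) := by
      have := Nat.card_le_card_of_surjective _ hsurj
      simpa [Nat.card_prod] using this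
    rw [Finset.coe_insert]
    calc Nat.card (closure (insert x (s : Set B)))
        ≤ e * Nat.card (closure (s : Set B)) := hcard
      _ ≤ E * E ^ s.card := Nat.mul_le_mul (Nat.le_of_dvd hE0 hedvd) ih
      _ = E ^ (s.card + 1) := by rw [pow_succ, Nat.mul_comm]
      _ = E ^ (insert x s).card := by rw [Finset.card_insert_of_notMem hxs]

private lemma grpRankSetNonempty (C : Type*) [Group C] [Finite C] :
    {n | ∃ S : Finset C, S.card = n ∧ Subgroup.closure (S : Set C) = ⊤}.Nonempty := by
  classical
  refine ⟨(Set.univ : Set C).toFinite.toFinset.card,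
    (Set.univ : Set C).toFinite.toFinset, rfl, ?_⟩
  rw [Set.Finite.coe_toFinset]
  exact Subgroup.closure_univ

private lemma existsMinGen (C : Type*) [Group C] [Finite C] :
    ∃ S : Finset C, S.card = grpRank C ∧ Subgroup.closure (S : Set C) = ⊤ := by
  have h := Nat.sInf_mem (grpRankSetNonempty C)
  obtain ⟨S, hS1, hS2⟩ := h
  exact ⟨S, hS1, hS2⟩

private lemma grpRankZero (B : Type*) [Group B] [Subsingleton B] : grpRank B = 0 := by
  have h0 : (0 : ℕ) ∈ {n | ∃ S : Finset B, S.card = n ∧ Subgroup.closure (S : Set B) = ⊤} :=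
    ⟨∅, by simp, by
      rw [Finset.coe_empty, Subgroup.closure_empty]
      exact Subsingleton.elim _ _⟩
  exact Nat.le_zero.mp (Nat.sInf_le h0)

private lemma rankLift {B C : Type*} [Group B] [Group C] [Finite C]
    (f : B →* C) (hf : Function.Surjective f) (a : B)
    (hker : f.ker = Subgroup.zpowers a) :
    grpRank B ≤ grpRank C + 1 := by
  classical
  obtain ⟨T, hTcard, hTgen⟩ := existsMinGen C
  set T' : Finset B := insert a (T.image (Function.surjInv hf)) with hT'
  have hgen : Subgroup.closure (T' : Set B) = ⊤ := by
    have haK : a ∈ Subgroup.closure (T' : Set B) :=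
      Subgroup.subset_closure (by simp [hT'])
    have hkerle : f.ker ≤ Subgroup.closure (T' : Set B) := by
      rw [hker]
      exact Subgroup.zpowers_le.mpr haK
    have hmap : Subgroup.map f (Subgroup.closure (T' : Set B)) = ⊤ := by
      rw [eq_top_iff, ← hTgen]
      rw [Subgroup.closure_le]
      intro t ht
      refine ⟨Function.surjInv hf t, ?_, Function.surjInv_eq hf t⟩
      exact Subgroup.subset_closure (by
        simp only [hT', Finset.coe_insert, Set.mem_insert_iff, Finset.coe_image,
          Set.mem_image]
        exact Or.inr ⟨t, ht, rfl⟩)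
    have hcomap := Subgroup.comap_map_eq f (Subgroup.closure (T' : Set B))
    rw [hmap, sup_eq_left.mpr hkerle] at hcomap
    rw [← hcomap, Subgroup.comap_top]
  have hle : grpRank B ≤ T'.card := Nat.sInf_le ⟨T', rfl, hgen⟩
  calc grpRank B ≤ T'.card := hle
    _ ≤ (T.image (Function.surjInv hf)).card + 1 := Finset.card_insert_le _ _
    _ ≤ T.card + 1 := by
        have := Finset.card_image_le (s := T) (f := Function.surjInv hf)
        omega
    _ = grpRank C + 1 := by rw [hTcard]

private lemma twoPowRank : ∀ (c : ℕ) (B : Type*) [CommGroup B] [Finite B],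
    Nat.card B ≤ c → 2 ^ grpRank B ≤ Nat.card B := by
  intro c
  induction c with
  | zero =>
    intro B _ _ hc
    have := Nat.card_pos (α := B)
    omega
  | succ c ih =>
    intro B _ _ hc
    rcases subsingleton_or_nontrivial B with hB | hB
    · rw [grpRankZero B]
      simpa using Nat.card_pos (α := B)
    · obtain ⟨b, hb⟩ := exists_ne (1 : B)
      have hH2 : 1 < Nat.card (Subgroup.zpowers b) := by
        rw [Finite.one_lt_card_iff_nontrivial]
        exact ⟨⟨b, Subgroup.mem_zpowers b⟩, 1, fun h => hb (by
          simpa [Subtype.ext_iff] using h)⟩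
      have hB2 : 1 < Nat.card B := Finite.one_lt_card_iff_nontrivial.mpr ⟨b, 1, hb⟩
      have hcard := Subgroup.card_eq_card_quotient_mul_card_subgroup (Subgroup.zpowers b)
      have hQpos : 0 < Nat.card (B ⧸ Subgroup.zpowers b) := Nat.card_pos
      have hQle : Nat.card (B ⧸ Subgroup.zpowers b) ≤ c := by
        have h2 : Nat.card (B ⧸ Subgroup.zpowers b) * 2 ≤
            Nat.card (B ⧸ Subgroup.zpowers b) * Nat.card (Subgroup.zpowers b) :=
          Nat.mul_le_mul_left _ hH2
        omega
      have hrk : grpRank B ≤ grpRank (B ⧸ Subgroup.zpowers b) + 1 :=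
        rankLift (QuotientGroup.mk' _) (QuotientGroup.mk'_surjective _) b
          (QuotientGroup.ker_mk' _)
      calc 2 ^ grpRank B ≤ 2 ^ (grpRank (B ⧸ Subgroup.zpowers b) + 1) :=
            Nat.pow_le_pow_right (by omega) hrk
        _ = 2 ^ grpRank (B ⧸ Subgroup.zpowers b) * 2 := by rw [pow_succ]
        _ ≤ Nat.card (B ⧸ Subgroup.zpowers b) * Nat.card (Subgroup.zpowers b) :=
            Nat.mul_le_mul (ih _ hQle) hH2
        _ = Nat.card B := hcard.symm

theorem stmt13 {A : Type*} [CommGroup A] [Finite A] (n : ℕ) (hn : 1 ≤ n) :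
    maxDiam (Fin n → A) ≤ n * (Nat.card A - grpRank A) ∧
    n * (Nat.card A - grpRank A) ≤ n * Nat.card A := by
  classical
  constructor
  · -- the interesting part
    have hword : ∀ (X : Set (Fin n → A)), Subgroup.closure X = ⊤ →
        ∀ g : Fin n → A, wordLen X g ≤ n * (Nat.card A - grpRank A) := by
      intro X hX g
      rcases le_or_gt (Nat.card A) 1 with hq1 | hq2
      · -- trivial group
        have hsub : Subsingleton A := by
          rcases subsingleton_or_nontrivial A with h | h
          · exact h
          · exact absurd (Finite.one_lt_card_iff_nontrivial.mpr h) (by omega)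
        have hg1 : g = 1 := Subsingleton.elim g 1
        have h0 : (0 : ℕ) ∈ {m | ∃ w : List (Fin n → A),
            (∀ x ∈ w, x ∈ X) ∧ w.length = m ∧ w.prod = g} :=
          ⟨[], by simp, by simp, by simp [hg1]⟩
        exact le_trans (Nat.sInf_le h0) (Nat.zero_le _)
      · -- nontrivial group
        have hnt : Nontrivial A := Finite.one_lt_card_iff_nontrivial.mp hq2
        set q := Nat.card A with hqdef
        set r := grpRank A with hrdef
        set E := Monoid.exponent A with hEdef
        have hE0 : 0 < E := Nat.pos_of_ne_zero Monoid.exponent_ne_zero_of_finite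
        have hEpow : ∀ a : A, a ^ E = 1 := fun a => Monoid.pow_exponent_eq_one a
        have hE2 : 2 ≤ E := by
          by_contra h
          obtain ⟨a, b, hab⟩ := hnt
          have h1 : E = 1 := by omega
          have ha := hEpow a
          have hb := hEpow b
          rw [h1, pow_one] at ha hb
          exact hab (ha.trans hb.symm)
        -- generating finset of minimal size
        obtain ⟨S₀, hS₀card, hS₀gen⟩ := existsMinGen A
        have hr1 : 1 ≤ r := by
          by_contra h
          have hS₀empty : S₀ = ∅ :=
            Finset.card_eq_zero.mp (by rw [hS₀card, ← hrdef]; omega)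
          rw [hS₀empty, Finset.coe_empty, Subgroup.closure_empty] at hS₀gen
          obtain ⟨a, b, hab⟩ := hnt
          have ha : a ∈ (⊥ : Subgroup A) := hS₀gen ▸ Subgroup.mem_top a
          have hb : b ∈ (⊥ : Subgroup A) := hS₀gen ▸ Subgroup.mem_top b
          rw [Subgroup.mem_bot] at ha hb
          exact hab (ha.trans hb.symm)
        -- q ≤ E ^ r
        have hqE : q ≤ E ^ r := by
          have := cardAux E hE0 hEpow S₀
          rw [hS₀gen, hS₀card] at this
          calc q = Nat.card (⊤ : Subgroup A) := by rw [Subgroup.card_top]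
            _ ≤ E ^ r := this
        -- r * E ≤ q
        have hrE : r * E ≤ q := by
          obtain ⟨a, ha⟩ := Monoid.exists_orderOf_eq_exponent
            (Monoid.exponent_pos.mp hE0)
          have hcard := Subgroup.card_eq_card_quotient_mul_card_subgroup
            (Subgroup.zpowers a)
          have hzp : Nat.card (Subgroup.zpowers a) = E := by
            rw [Nat.card_zpowers, ha]
          have hrk : r ≤ grpRank (A ⧸ Subgroup.zpowers a) + 1 :=
            rankLift (QuotientGroup.mk' _) (QuotientGroup.mk'_surjective _) a
              (QuotientGroup.ker_mk' _)
          have h2p : 2 ^ grpRank (A ⧸ Subgroup.zpowers a) ≤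
              Nat.card (A ⧸ Subgroup.zpowers a) :=
            twoPowRank (Nat.card (A ⧸ Subgroup.zpowers a)) _ le_rfl
          have hr2 : r ≤ Nat.card (A ⧸ Subgroup.zpowers a) := by
            calc r ≤ 2 ^ (r - 1) := auxLe2Pow r hr1
              _ ≤ 2 ^ grpRank (A ⧸ Subgroup.zpowers a) :=
                  Nat.pow_le_pow_right (by omega) (by omega)
              _ ≤ Nat.card (A ⧸ Subgroup.zpowers a) := h2p
          calc r * E ≤ Nat.card (A ⧸ Subgroup.zpowers a) * E :=
                Nat.mul_le_mul_right _ hr2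
            _ = Nat.card (A ⧸ Subgroup.zpowers a) * Nat.card (Subgroup.zpowers a) := by
                rw [hzp]
            _ = q := hcard.symm
        -- set up the power group
        have hGE : ∀ g : Fin n → A, g ^ E = 1 := by
          intro g; funext i; exact hEpow (g i)
        have hkey : ∀ e, e ∣ E → q ^ (e - 1) ≤ e ^ (q - r) := fun e he =>
          keyIneq hE2 he hqE hrE (by omega)
        have hcardG : Nat.card (Fin n → A) = q ^ n := by
          rw [Nat.card_fun, Nat.card_eq_fintype_card (α := Fin n), Fintype.card_fin]
        obtain ⟨w, hw1, hw2, hw3⟩ := repAux E q (q - r) hE0 hGE (by omega) hkey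
          X.toFinite.toFinset g
          (by rw [Set.Finite.coe_toFinset, hX]; exact Subgroup.mem_top g)
        rw [Set.Finite.coe_toFinset, hX, Subgroup.card_top, hcardG, ← pow_mul] at hw3
        have hlen : w.length ≤ n * (q - r) := by
          exact (Nat.pow_le_pow_iff_right hq2).mp hw3
        have hmem : w.length ∈ {m | ∃ w' : List (Fin n → A),
            (∀ x ∈ w', x ∈ X) ∧ w'.length = m ∧ w'.prod = g} := by
          refine ⟨w, ?_, rfl, hw2⟩
          intro y hy
          have := hw1 y hy
          rwa [Set.Finite.coe_toFinset] at this
        exact le_trans (Nat.sInf_le hmem) hlen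
    apply csSup_le'
    rintro d ⟨X, hX, rfl⟩
    apply csSup_le'
    rintro d' ⟨g, rfl⟩
    exact hword X hX g
  · exact Nat.mul_le_mul_left n (Nat.sub_le _ _)
end

section
/- Let G be a finite group with generating set X. Then diam(G,X) ≤ 2·(diam^s(G,X) + 1)·(|X| + 1)·ln|G|. -/
namespace BS14

variable {G : Type*} [Group G]

/-- Ball of radius `k` in positive words over `X`. -/
def W (X : Set G) (k : ℕ) : Set G :=
  {g | ∃ w : List G, (∀ x ∈ w, x ∈ X) ∧ w.length ≤ k ∧ w.prod = g}

lemma one_mem_W (X : Set G) (k : ℕ) : (1 : G) ∈ W X k :=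
  ⟨[], by simp⟩

lemma W_mono {X : Set G} {j k : ℕ} (h : j ≤ k) : W X j ⊆ W X k := by
  rintro g ⟨w, hw, hl, hp⟩; exact ⟨w, hw, hl.trans h, hp⟩

lemma mul_mem_W {X : Set G} {j k : ℕ} {g h : G} (hg : g ∈ W X j) (hh : h ∈ W X k) :
    g * h ∈ W X (j + k) := by
  obtain ⟨w1, hw1, hl1, hp1⟩ := hg
  obtain ⟨w2, hw2, hl2, hp2⟩ := hh
  refine ⟨w1 ++ w2, ?_, ?_, ?_⟩
  · intro x hx; rcases List.mem_append.1 hx with h | h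
    exacts [hw1 x h, hw2 x h]
  · simpa using Nat.add_le_add hl1 hl2
  · simp [hp1, hp2]

lemma mem_W_succ {X : Set G} {k : ℕ} {g x : G} (hg : g ∈ W X k) (hx : x ∈ X) :
    g * x ∈ W X (k + 1) :=
  mul_mem_W hg ⟨[x], by simpa using hx⟩

lemma wordLen_le_of_mem_W {X : Set G} {k : ℕ} {g : G} (hg : g ∈ W X k) :
    wordLen X g ≤ k := by
  obtain ⟨w, hw, hl, hp⟩ := hg
  exact le_trans (Nat.sInf_le ⟨w, hw, rfl, hp⟩) hl

/-- Right translate of a set. -/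
def rt (S : Set G) (a : G) : Set G := (· * a) '' S

lemma rt_rt (S : Set G) (a b : G) : rt (rt S a) b = rt S (a * b) := by
  simp only [rt, ← Set.image_comp]; ext g; simp [mul_assoc]

lemma rt_one (S : Set G) : rt S 1 = S := by simp [rt]

lemma ncard_rt (S : Set G) (a : G) : (rt S a).ncard = S.ncard :=
  Set.ncard_image_of_injective S (mul_left_injective a)

lemma rt_diff (S T : Set G) (a : G) : rt (S \ T) a = rt S a \ rt T a :=
  Set.image_diff (mul_left_injective a) S T

omit [Group G] in
lemma sdiff_comm_ncard [Finite G] (S T : Set G) (hc : T.ncard = S.ncard) :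
    (S \ T).ncard = (T \ S).ncard := by
  have h1 := Set.ncard_diff_add_ncard S T (Set.toFinite S) (Set.toFinite T)
  have h2 := Set.ncard_diff_add_ncard T S (Set.toFinite T) (Set.toFinite S)
  rw [Set.union_comm] at h2
  omega

lemma key1 [Finite G] (S : Set G) (a : G) :
    (rt S a⁻¹ \ S).ncard = (rt S a \ S).ncard := by
  have h1 : rt (rt S a⁻¹ \ S) a = S \ rt S a := by
    rw [rt_diff, rt_rt, inv_mul_cancel, rt_one]
  have h2 : (rt S a⁻¹ \ S).ncard = (S \ rt S a).ncard := by
    rw [← ncard_rt (rt S a⁻¹ \ S) a, h1]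
  rw [h2]
  exact sdiff_comm_ncard S (rt S a) (ncard_rt S a)

lemma telescope [Finite G] (S : Set G) (w : List G) :
    (rt S w.prod \ S).ncard ≤ (w.map fun a => (rt S a \ S).ncard).sum := by
  induction w with
  | nil => simp [rt_one]
  | cons a w ih =>
      simp only [List.prod_cons, List.map_cons, List.sum_cons]
      have hsub : rt S (a * w.prod) \ S ⊆
          (rt (rt S a) w.prod \ rt S w.prod) ∪ (rt S w.prod \ S) := by
        intro g hg
        rw [← rt_rt] at hg
        by_cases hgw : g ∈ rt S w.prod
        · exact Or.inr ⟨hgw, hg.2⟩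
        · exact Or.inl ⟨hg.1, hgw⟩
      have h1 : (rt (rt S a) w.prod \ rt S w.prod).ncard = (rt S a \ S).ncard := by
        rw [← rt_diff, ncard_rt]
      calc (rt S (a * w.prod) \ S).ncard
          ≤ ((rt (rt S a) w.prod \ rt S w.prod) ∪ (rt S w.prod \ S)).ncard :=
            Set.ncard_le_ncard hsub (Set.toFinite _)
        _ ≤ (rt (rt S a) w.prod \ rt S w.prod).ncard + (rt S w.prod \ S).ncard :=
            Set.ncard_union_le _ _
        _ ≤ (rt S a \ S).ncard + (w.map fun a => (rt S a \ S).ncard).sum := by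
            rw [h1]; exact Nat.add_le_add_left ih _

lemma exists_translate [Finite G] (S : Set G) (hne : S.Nonempty)
    (hcard : 2 * S.ncard ≤ Nat.card G) :
    ∃ h : G, S.ncard ≤ 2 * (rt S h \ S).ncard := by
  classical
  by_contra hc
  push_neg at hc
  cases nonempty_fintype G
  set n := Nat.card G with hn
  have hnc : n = Finset.univ.card (α := G) := by
    rw [hn, Nat.card_eq_fintype_card, Finset.card_univ]
  set T : Finset G := (Set.toFinite S).toFinset with hT
  have hTS : ∀ p : G, p ∈ T ↔ p ∈ S := fun p => Set.Finite.mem_toFinset _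
  have hscard : S.ncard = T.card := Set.ncard_eq_toFinset_card S (Set.toFinite S)
  set s := T.card with hs
  have hfilt : ∀ h : G, (rt S h \ S).ncard = (T.filter fun p => p * h ∉ S).card := by
    intro h
    have himg : rt S h \ S = (· * h) '' {p | p ∈ S ∧ p * h ∉ S} := by
      ext g
      constructor
      · rintro ⟨⟨p, hp, rfl⟩, hg2⟩
        exact ⟨p, ⟨hp, hg2⟩, rfl⟩
      · rintro ⟨p, ⟨hp1, hp2⟩, rfl⟩
        exact ⟨⟨p, hp1, rfl⟩, hp2⟩
    rw [himg, Set.ncard_image_of_injective _ (mul_left_injective h)]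
    rw [← Set.ncard_coe_finset]
    congr 1
    ext p
    simp [hTS p]
  have hrow : ∀ p : G, (Finset.univ.filter fun h => p * h ∉ S).card = n - s := by
    intro p
    have himg : (Finset.univ.filter fun h => p * h ∈ S) = T.image (fun t => p⁻¹ * t) := by
      ext h
      simp only [Finset.mem_filter, Finset.mem_univ, true_and, Finset.mem_image]
      constructor
      · intro hh; exact ⟨p * h, (hTS _).2 hh, by group⟩
      · rintro ⟨t, ht, rfl⟩
        simpa using (hTS t).1 ht
    have hcardimg : (Finset.univ.filter fun h => p * h ∈ S).card = s := by
      rw [himg, Finset.card_image_of_injective _ (mul_right_injective p⁻¹)]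
    have h0 := Finset.card_filter_add_card_filter_not
      (s := (Finset.univ : Finset G)) (p := fun h => p * h ∈ S)
    rw [hcardimg] at h0
    have h1 : s + (Finset.univ.filter fun h => ¬ p * h ∈ S).card = n := by
      rw [hnc]; exact h0
    omega
  have hsum : (Finset.univ.sum fun h : G => (T.filter fun p => p * h ∉ S).card)
      = s * (n - s) := by
    have hcf : ∀ h : G, (T.filter fun p => p * h ∉ S).card
        = T.sum fun p => if p * h ∉ S then 1 else 0 := by
      intro h; rw [Finset.card_filter]
    simp only [hcf]
    rw [Finset.sum_comm]
    have hrow' : ∀ p ∈ T, (Finset.univ.sum fun h : G => if p * h ∉ S then 1 else 0)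
        = n - s := by
      intro p _
      rw [← Finset.card_filter]
      exact hrow p
    rw [Finset.sum_congr rfl hrow']
    simp [← hs]
  have hterm : ∀ h : G, 2 * (T.filter fun p => p * h ∉ S).card + 1 ≤ s := by
    intro h
    have := hc h
    rw [hfilt h, hscard] at this
    omega
  have hsum2 : (Finset.univ.sum fun h : G => 2 * (T.filter fun p => p * h ∉ S).card + 1)
      ≤ Finset.univ.sum fun _ : G => s :=
    Finset.sum_le_sum fun h _ => hterm h
  rw [Finset.sum_add_distrib, ← Finset.mul_sum, hsum] at hsum2
  simp only [Finset.sum_const, smul_eq_mul, mul_one, Finset.card_univ] at hsum2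
  have hn' : (Fintype.card G : ℕ) = n := by rw [hn, Nat.card_eq_fintype_card]
  rw [hn'] at hsum2
  have hs1 : 1 ≤ s := by
    have : 0 < S.ncard := (Set.ncard_pos (Set.toFinite S)).2 hne
    omega
  have hsn : 2 * s ≤ n := by rw [hscard] at hcard; exact hcard
  have h1 : n ≤ 2 * (n - s) := by omega
  have h2 : s * n ≤ 2 * (s * (n - s)) := by
    calc s * n ≤ s * (2 * (n - s)) := Nat.mul_le_mul_left s h1
      _ = 2 * (s * (n - s)) := by ring
  have h3 : s * n + n ≤ n * s := le_trans (Nat.add_le_add_right h2 n) hsum2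
  rw [mul_comm n s] at h3
  have h4 : s * n + n ≤ s * n + 0 := by simpa using h3
  have h5 := Nat.le_of_add_le_add_left h4
  omega

lemma exists_sym_word [Finite G] {X : Set G} (hX : Subgroup.closure X = ⊤) (g : G) :
    ∃ w : List G, (∀ x ∈ w, x ∈ X ∪ X⁻¹) ∧ w.length = symWordLen X g ∧ w.prod = g := by
  have hg : g ∈ Submonoid.closure (X ∪ X⁻¹) := by
    rw [← Subgroup.closure_toSubmonoid, hX]
    exact Subgroup.mem_top g
  obtain ⟨l, hl, hp⟩ := Submonoid.exists_list_of_mem_closure hg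
  have hne : {n | ∃ w : List G, (∀ x ∈ w, x ∈ X ∪ X⁻¹) ∧ w.length = n ∧ w.prod = g}.Nonempty :=
    ⟨l.length, l, hl, rfl, hp⟩
  exact Nat.sInf_mem hne

lemma symWordLen_le_symDiam [Finite G] (X : Set G) (g : G) :
    symWordLen X g ≤ symDiam G X :=
  le_csSup (Set.Finite.bddAbove (Set.finite_range _)) ⟨g, rfl⟩

lemma one_le_symDiam [Finite G] {X : Set G} (hX : Subgroup.closure X = ⊤)
    (hnt : Nontrivial G) : 1 ≤ symDiam G X := by
  obtain ⟨g, hg⟩ := exists_ne (1 : G)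
  refine le_trans ?_ (symWordLen_le_symDiam X g)
  by_contra hcon
  push_neg at hcon
  interval_cases h : symWordLen X g
  obtain ⟨w, hw, hwl, hwp⟩ := exists_sym_word hX g
  rw [h] at hwl
  rw [List.length_eq_zero_iff] at hwl
  subst hwl
  simp at hwp
  exact hg hwp.symm

lemma grow [Finite G] {X : Set G} (hX : Subgroup.closure X = ⊤) (k : ℕ)
    (h2 : 2 * (W X k).ncard ≤ Nat.card G) :
    (2 * symDiam G X + 1) * (W X k).ncard ≤ 2 * symDiam G X * (W X (k + 1)).ncard := by
  classical
  set d := symDiam G X with hd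
  set S := W X k with hS
  set s := S.ncard with hs
  have hs1 : 1 ≤ s := (Set.ncard_pos (Set.toFinite S)).2 ⟨1, one_mem_W X k⟩
  have hn2 : 2 ≤ Nat.card G := by omega
  have hnt : Nontrivial G := Finite.one_lt_card_iff_nontrivial.1 hn2
  obtain ⟨h, hh⟩ := exists_translate S ⟨1, one_mem_W X k⟩ h2
  obtain ⟨w, hw, hwl, hwp⟩ := exists_sym_word hX h
  have hwd : w.length ≤ d := by rw [hwl]; exact symWordLen_le_symDiam X h
  have hwne : w ≠ [] := by
    rintro rfl
    simp only [List.prod_nil] at hwp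
    rw [← hwp, rt_one] at hh
    simp at hh
    omega
  obtain ⟨a0, ha0⟩ := List.exists_mem_of_ne_nil w hwne
  obtain ⟨a, haw, hamax⟩ := Finset.exists_max_image w.toFinset
    (fun a => (rt S a \ S).ncard) ⟨a0, List.mem_toFinset.2 ha0⟩
  have hsumle : (w.map fun b => (rt S b \ S).ncard).sum
      ≤ w.length * (rt S a \ S).ncard := by
    have hb : ∀ x ∈ (w.map fun b => (rt S b \ S).ncard), x ≤ (rt S a \ S).ncard := by
      intro x hx
      obtain ⟨b, hb, rfl⟩ := List.mem_map.1 hx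
      exact hamax b (List.mem_toFinset.2 hb)
    have := List.sum_le_card_nsmul (w.map fun b => (rt S b \ S).ncard)
      ((rt S a \ S).ncard) hb
    simpa [smul_eq_mul] using this
  have haX : a ∈ X ∪ X⁻¹ := hw a (List.mem_toFinset.1 haw)
  obtain ⟨x, hxX, hxcard⟩ : ∃ x ∈ X, (rt S a \ S).ncard = (rt S x \ S).ncard := by
    rcases haX with hx | hx
    · exact ⟨a, hx, rfl⟩
    · refine ⟨a⁻¹, Set.mem_inv.1 hx, ?_⟩
      simpa using key1 S a⁻¹
  set t := (rt S x \ S).ncard with ht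
  have hst : s ≤ 2 * d * t := by
    have hc1 : s ≤ 2 * (rt S h \ S).ncard := hh
    rw [← hwp] at hc1
    have hc2 := telescope S w
    calc s ≤ 2 * (rt S w.prod \ S).ncard := hc1
      _ ≤ 2 * (w.map fun b => (rt S b \ S).ncard).sum := by omega
      _ ≤ 2 * (w.length * (rt S a \ S).ncard) := by omega
      _ = 2 * w.length * t := by rw [hxcard]; ring
      _ ≤ 2 * d * t := Nat.mul_le_mul_right t (by omega)
  have hgrow : s + t ≤ (W X (k + 1)).ncard := by
    have hsub : S ∪ (rt S x \ S) ⊆ W X (k + 1) := by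
      rintro g (hg | hg)
      · exact W_mono (Nat.le_succ k) hg
      · obtain ⟨⟨p, hp, rfl⟩, -⟩ := hg
        exact mem_W_succ hp hxX
    have hdisj : Disjoint S (rt S x \ S) := disjoint_sdiff_self_right
    calc s + t = (S ∪ (rt S x \ S)).ncard :=
          (Set.ncard_union_eq hdisj (Set.toFinite _) (Set.toFinite _)).symm
      _ ≤ (W X (k + 1)).ncard := Set.ncard_le_ncard hsub (Set.toFinite _)
  calc (2 * d + 1) * s = 2 * d * s + s := by ring
    _ ≤ 2 * d * s + 2 * d * t := by omega
    _ = 2 * d * (s + t) := by ring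
    _ ≤ 2 * d * (W X (k + 1)).ncard := Nat.mul_le_mul_left (2 * d) hgrow

lemma covers [Finite G] (X : Set G) (K : ℕ)
    (hcard : Nat.card G < 2 * (W X K).ncard) (g : G) : g ∈ W X (2 * K) := by
  classical
  set S := W X K with hS
  set B : Set G := (fun v => g * v⁻¹) '' S with hB
  have hBcard : B.ncard = S.ncard :=
    Set.ncard_image_of_injective _ (fun u v huv => inv_injective (mul_left_cancel huv))
  have hun : (S ∪ B).ncard ≤ Nat.card G := by
    rw [← Set.ncard_univ G]
    exact Set.ncard_le_ncard (Set.subset_univ _) (Set.toFinite _)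
  have hint := Set.ncard_union_add_ncard_inter S B (Set.toFinite _) (Set.toFinite _)
  have hpos : 0 < (S ∩ B).ncard := by omega
  obtain ⟨u, huS, hub⟩ := (Set.ncard_pos (Set.toFinite _)).1 hpos
  obtain ⟨v, hvS, hveq⟩ := hub
  have hguv : g = u * v := by rw [← hveq]; group
  rw [hguv, two_mul]
  exact mul_mem_W huS hvS

end BS14

open BS14
theorem stmt14 {G : Type*} [Group G] [Finite G] (X : Set G) (hX : Subgroup.closure X = ⊤) :
    (diam G X : ℝ) ≤ 2 * (symDiam G X + 1) * (X.ncard + 1) * Real.log (Nat.card G) := by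
  classical
  have hn1 : 1 ≤ Nat.card G := Nat.card_pos
  rcases eq_or_lt_of_le hn1 with h1 | h2
  · -- trivial group
    have hsub : Subsingleton G := by
      have := Finite.one_lt_card_iff_nontrivial (α := G)
      rcases subsingleton_or_nontrivial G with h | h
      · exact h
      · exact absurd (this.2 h) (by omega)
    have hwl : ∀ g : G, wordLen X g = 0 := by
      intro g
      have : g ∈ W X 0 := by
        have hg1 : g = 1 := Subsingleton.elim g 1
        rw [hg1]; exact one_mem_W X 0
      exact Nat.le_zero.1 (wordLen_le_of_mem_W this)
    have hdiam0 : diam G X = 0 := by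
      refine Nat.le_zero.1 (csSup_le (Set.range_nonempty _) ?_)
      rintro b ⟨g, rfl⟩
      exact Nat.le_zero.2 (hwl g)
    rw [hdiam0, ← h1]
    simp
  · -- nontrivial group
    set n := Nat.card G with hn
    have hnt : Nontrivial G := Finite.one_lt_card_iff_nontrivial.1 h2
    set d := symDiam G X with hd
    have hd1 : 1 ≤ d := one_le_symDiam hX hnt
    have hXne : X.Nonempty := by
      rcases Set.eq_empty_or_nonempty X with rfl | h
      · exfalso
        rw [Subgroup.closure_empty] at hX
        obtain ⟨g, hg⟩ := exists_ne (1 : G)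
        have : g ∈ (⊥ : Subgroup G) := by rw [hX]; exact Subgroup.mem_top g
        exact hg (Subgroup.mem_bot.1 this)
      · exact h
    have hr1 : 1 ≤ X.ncard := (Set.ncard_pos (Set.toFinite X)).2 hXne
    -- real constants
    have hn2R : (2 : ℝ) ≤ (n : ℝ) := by exact_mod_cast h2
    have hlogn2 : (0:ℝ) ≤ Real.log ((n : ℝ) / 2) := by
      apply Real.log_nonneg
      rw [le_div_iff₀ (by norm_num : (0:ℝ) < 2)]
      linarith
    set L : ℝ := (2 * (d : ℝ) + 1) * Real.log ((n : ℝ) / 2) with hL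
    have hL0 : 0 ≤ L := by positivity
    set K : ℕ := Nat.floor L + 1 with hK
    have hKL : L < (K : ℕ) := by
      calc L < Nat.floor L + 1 := Nat.lt_floor_add_one L
        _ = (K : ℝ) := by rw [hK]; push_cast; ring
    have hKL2 : (K : ℝ) ≤ L + 1 := by
      have := Nat.floor_le hL0
      rw [hK]; push_cast; linarith
    -- main covering claim
    have hK2 : n < 2 * (W X K).ncard := by
      by_contra hcon
      push_neg at hcon
      have hmono : ∀ j, j ≤ K → 2 * (W X j).ncard ≤ n := fun j hj =>
        le_trans (Nat.mul_le_mul_left 2 (Set.ncard_le_ncard (W_mono hj) (Set.toFinite _))) hcon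
      have hind : ∀ j, j ≤ K → (2 * d + 1) ^ j ≤ (2 * d) ^ j * (W X j).ncard := by
        intro j
        induction j with
        | zero =>
            intro _
            have : 1 ≤ (W X 0).ncard := (Set.ncard_pos (Set.toFinite _)).2 ⟨1, one_mem_W X 0⟩
            simpa using this
        | succ j ih =>
            intro hjK
            have hj := ih (Nat.le_of_succ_le hjK)
            have hg := grow hX j (hmono j (Nat.le_of_succ_le hjK))
            calc (2 * d + 1) ^ (j + 1) = (2 * d + 1) ^ j * (2 * d + 1) := pow_succ _ _
              _ ≤ (2 * d) ^ j * (W X j).ncard * (2 * d + 1) := Nat.mul_le_mul_right _ hj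
              _ = (2 * d) ^ j * ((2 * d + 1) * (W X j).ncard) := by ring
              _ ≤ (2 * d) ^ j * (2 * d * (W X (j + 1)).ncard) := Nat.mul_le_mul_left _ hg
              _ = (2 * d) ^ (j + 1) * (W X (j + 1)).ncard := by ring
      have hfin := hind K le_rfl
      have hnat : 2 * (2 * d + 1) ^ K ≤ (2 * d) ^ K * n := by
        calc 2 * (2 * d + 1) ^ K ≤ 2 * ((2 * d) ^ K * (W X K).ncard) :=
              Nat.mul_le_mul_left _ hfin
          _ = (2 * d) ^ K * (2 * (W X K).ncard) := by ring
          _ ≤ (2 * d) ^ K * n := Nat.mul_le_mul_left _ hcon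
      -- real contradiction
      set a : ℝ := 2 * (d : ℝ) with ha
      set b : ℝ := 2 * (d : ℝ) + 1 with hb
      have ha0 : 0 < a := by rw [ha]; push_cast; have : (1:ℝ) ≤ (d:ℝ) := by exact_mod_cast hd1
                             linarith
      have hb0 : 0 < b := by rw [hb]; positivity
      have hab : a < b := by rw [ha, hb]; linarith
      have hlogba : 1 / b ≤ Real.log (b / a) := by
        have hba : 0 < a / b := by positivity
        have := Real.log_le_sub_one_of_pos hba
        have hlog : Real.log (a / b) = - Real.log (b / a) := by
          rw [← Real.log_inv]
          congr 1
          field_simp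
        rw [hlog] at this
        have hab1 : a / b - 1 = - (1 / b) := by field_simp; linarith
        rw [hab1] at this
        linarith
      have hKlog : Real.log ((n : ℝ) / 2) < (K : ℝ) * Real.log (b / a) := by
        have hb' : b ≠ 0 := ne_of_gt hb0
        have hLb : L / b = Real.log ((n : ℝ) / 2) := by
          rw [hL, hb, mul_comm]
          field_simp
        have h1' : L / b < (K : ℝ) / b := by gcongr
        have h2' : (K : ℝ) / b ≤ (K : ℝ) * Real.log (b / a) := by
          rw [div_eq_mul_one_div]
          exact mul_le_mul_of_nonneg_left hlogba (Nat.cast_nonneg K)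
        linarith
      have hba_pos : 0 < b / a := by positivity
      have hreal : (n : ℝ) / 2 < (b / a) ^ K := by
        have hexp := Real.exp_lt_exp.2 hKlog
        rw [Real.exp_log (by positivity : (0:ℝ) < (n : ℝ) / 2)] at hexp
        rwa [← Real.log_pow, Real.exp_log (pow_pos hba_pos K)] at hexp
      have hreal2 : a ^ K * (n : ℝ) < 2 * b ^ K := by
        rw [div_pow, lt_div_iff₀ (pow_pos ha0 K), div_mul_eq_mul_div,
          div_lt_iff₀ (by norm_num : (0:ℝ) < 2)] at hreal
        linarith
      have hnatR : (2 : ℝ) * b ^ K ≤ a ^ K * (n : ℝ) := by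
        have := hnat
        have hcast : ((2 * (2 * d + 1) ^ K : ℕ) : ℝ) ≤ (((2 * d) ^ K * n : ℕ) : ℝ) := by
          exact_mod_cast this
        push_cast at hcast
        rw [ha, hb]
        convert hcast using 2 <;> push_cast <;> ring
      linarith
    -- diameter bound
    have hdiam : diam G X ≤ 2 * K := by
      refine csSup_le (Set.range_nonempty _) ?_
      rintro m ⟨g, rfl⟩
      exact wordLen_le_of_mem_W (covers X K hK2 g)
    -- final numeric estimate
    set D : ℝ := (d : ℝ) with hD
    set R : ℝ := (X.ncard : ℝ) with hR
    have hD1 : (1 : ℝ) ≤ D := by rw [hD]; exact_mod_cast hd1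
    have hR1 : (1 : ℝ) ≤ R := by rw [hR]; exact_mod_cast hr1
    have hlog2 : (0.6931 : ℝ) < Real.log 2 := by
      have := Real.log_two_gt_d9; linarith
    have hlnn : Real.log 2 ≤ Real.log (n : ℝ) := by
      apply Real.log_le_log (by norm_num) hn2R
    have hlognn0 : (0:ℝ) ≤ Real.log (n : ℝ) := by linarith
    have hsplit : Real.log ((n : ℝ) / 2) = Real.log (n : ℝ) - Real.log 2 :=
      Real.log_div (by positivity) (by norm_num)
    calc (diam G X : ℝ) ≤ ((2 * K : ℕ) : ℝ) := by exact_mod_cast hdiam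
      _ = 2 * (K : ℝ) := by push_cast; ring
      _ ≤ 2 * (L + 1) := by linarith
      _ ≤ 2 * (D + 1) * (R + 1) * Real.log (n : ℝ) := by
          rw [hL, hsplit]
          nlinarith [mul_nonneg (by linarith : (0:ℝ) ≤ D + 1) hlognn0,
            mul_nonneg (mul_nonneg (by linarith : (0:ℝ) ≤ D + 1) hlognn0)
              (by linarith : (0:ℝ) ≤ R - 1),
            mul_nonneg (by linarith : (0:ℝ) ≤ D - 1) (by linarith : (0:ℝ) ≤ Real.log 2)]
end

section
/- Let Q_8 be the quaternion group of order 8. Then for every n ≥ 1, D(Q_8^n) ≤ 8n² + 3n. -/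
open Subgroup

lemma prodsq {A : Type*} [CommGroup A] (s : Finset A) (h : ∀ a ∈ s, a * a = 1) :
    (∏ x ∈ s, x) * (∏ x ∈ s, x) = 1 := by
  rw [← Finset.prod_mul_distrib]
  exact Finset.prod_eq_one h

/-- In a finite commutative group, if all elements of `S` square to 1 and the subgroup
generated by `S` has at most `2^m` elements, every element of that subgroup is a product
of at most `m` elements of `S`. -/
lemma lemA {A : Type*} [CommGroup A] [Finite A] (S : Set A)
    (hsq : ∀ a ∈ S, a * a = 1) (m : ℕ)
    (hcard : Nat.card (Subgroup.closure S) ≤ 2 ^ m) :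
    ∀ g ∈ Subgroup.closure S,
      ∃ l : List A, (∀ x ∈ l, x ∈ S) ∧ l.length ≤ m ∧ l.prod = g := by
  classical
  haveI := Fintype.ofFinite A
  -- shrinking step
  have key : ∀ r : ℕ, ∀ l : List A, l.length ≤ r → (∀ x ∈ l, x ∈ S) →
      ∃ l' : List A, (∀ x ∈ l', x ∈ S) ∧ l'.length ≤ m ∧ l'.prod = l.prod := by
    intro r
    induction r with
    | zero =>
      intro l hl hmem
      exact ⟨l, hmem, le_trans hl (Nat.zero_le m), rfl⟩
    | succ r ih =>
      intro l hl hmem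
      by_cases hlen : l.length ≤ m
      · exact ⟨l, hmem, hlen, rfl⟩
      by_cases hnd : l.Nodup
      · -- pigeonhole on subset products
        set T := l.toFinset with hT
        have hTcard : T.card = l.length := List.toFinset_card_of_nodup hnd
        have hTS : ∀ x ∈ T, x ∈ S := by
          intro x hx; exact hmem x (List.mem_toFinset.1 hx)
        have hmembC : ∀ u : Finset A, u ⊆ T → (∏ x ∈ u, x) ∈ Subgroup.closure S := by
          intro u hu
          exact prod_mem fun x hx => subset_closure (hTS x (hu hx))
        -- pigeonhole
        have hclt : Fintype.card ↥(Subgroup.closure S) < Fintype.card ↥T.powerset := by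
          rw [Fintype.card_coe, Finset.card_powerset, ← Nat.card_eq_fintype_card]
          calc Nat.card ↥(Subgroup.closure S) ≤ 2 ^ m := hcard
            _ < 2 ^ T.card := by
                apply Nat.pow_lt_pow_right (by norm_num)
                omega
        obtain ⟨⟨u₁, hu₁⟩, ⟨u₂, hu₂⟩, hne, heq⟩ :=
          Fintype.exists_ne_map_eq_of_card_lt
            (fun u : ↥T.powerset => (⟨∏ x ∈ u.1, x,
              hmembC u.1 (Finset.mem_powerset.1 u.2)⟩ : ↥(Subgroup.closure S))) hclt
        rw [Finset.mem_powerset] at hu₁ hu₂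
        have hune : u₁ ≠ u₂ := fun h => hne (by simp [Subtype.ext_iff, h])
        have hprodeq : (∏ x ∈ u₁, x) = ∏ x ∈ u₂, x := by
          simpa [Subtype.ext_iff] using heq
        set d := (u₁ \ u₂) ∪ (u₂ \ u₁) with hd
        have hdsub : d ⊆ T :=
          Finset.union_subset (le_trans (Finset.sdiff_subset) hu₁)
            (le_trans (Finset.sdiff_subset) hu₂)
        have hdne : d.Nonempty := by
          rw [Finset.nonempty_iff_ne_empty]
          intro h
          apply hune
          have h1 : u₁ \ u₂ = ∅ := by
            have := Finset.union_eq_empty.1 h; exact this.1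
          have h2 : u₂ \ u₁ = ∅ := by
            have := Finset.union_eq_empty.1 h; exact this.2
          exact le_antisymm (Finset.sdiff_eq_empty_iff_subset.1 h1)
            (Finset.sdiff_eq_empty_iff_subset.1 h2)
        have hdprod : (∏ x ∈ d, x) = 1 := by
          rw [hd, Finset.prod_union disjoint_sdiff_sdiff]
          have e1 : (∏ x ∈ u₁ \ u₂, x) * (∏ x ∈ u₁ ∩ u₂, x) = ∏ x ∈ u₁, x := by
            rw [← Finset.sdiff_inter_self_left u₁ u₂]
            exact Finset.prod_sdiff Finset.inter_subset_left
          have e2 : (∏ x ∈ u₂ \ u₁, x) * (∏ x ∈ u₂ ∩ u₁, x) = ∏ x ∈ u₂, x := by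
            rw [← Finset.sdiff_inter_self_left u₂ u₁]
            exact Finset.prod_sdiff Finset.inter_subset_left
          have hii : (∏ x ∈ u₂ ∩ u₁, x) = ∏ x ∈ u₁ ∩ u₂, x := by rw [Finset.inter_comm]
          have hsq1 : (∏ x ∈ u₁, x) * (∏ x ∈ u₂, x) = 1 := by
            rw [← hprodeq]
            exact prodsq _ fun a ha => hsq a (hTS a (hu₁ ha))
          have hsqi : (∏ x ∈ u₁ ∩ u₂, x) * (∏ x ∈ u₂ ∩ u₁, x) = 1 := by
            rw [hii]
            exact prodsq _ fun a ha => hsq a (hTS a (hu₁ (Finset.inter_subset_left ha)))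
          have hkey : ((∏ x ∈ u₁ \ u₂, x) * (∏ x ∈ u₂ \ u₁, x)) *
              ((∏ x ∈ u₁ ∩ u₂, x) * (∏ x ∈ u₂ ∩ u₁, x)) = 1 := by
            rw [mul_mul_mul_comm, e1, e2, hsq1]
          rw [hsqi, mul_one] at hkey
          exact hkey
        -- new shorter list
        have hTprod : (∏ x ∈ T, x) = l.prod := by
          have := List.prod_toFinset (l := l) id hnd
          simpa using this
        have hsplit : (∏ x ∈ T \ d, x) * (∏ x ∈ d, x) = ∏ x ∈ T, x :=
          Finset.prod_sdiff hdsub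
        have hnewprod : (T \ d).toList.prod = l.prod := by
          rw [← hTprod, ← hsplit, hdprod, mul_one]
          have : (T \ d).toList.prod = (T \ d).val.prod := Multiset.prod_toList _
          rw [this, Finset.prod_eq_multiset_prod]
          simp
        have hnewlen : (T \ d).toList.length ≤ r := by
          rw [Finset.length_toList, Finset.card_sdiff_of_subset hdsub]
          have : 1 ≤ d.card := Finset.card_pos.2 hdne
          have : d.card ≤ T.card := Finset.card_le_card hdsub
          omega
        obtain ⟨l', h1, h2, h3⟩ := ih (T \ d).toList hnewlen (by
          intro x hx
          rw [Finset.mem_toList] at hx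
          exact hTS x (Finset.sdiff_subset hx))
        exact ⟨l', h1, h2, h3.trans hnewprod⟩
      · -- cancel a duplicate pair
        obtain ⟨x, hx2⟩ : ∃ x, 2 ≤ l.count x := by
          by_contra h
          push_neg at h
          exact hnd (List.nodup_iff_count_le_one.2 fun a => by have := h a; omega)
        have hxl : x ∈ l := List.count_pos_iff.1 (by omega)
        have p1 : l.Perm (x :: l.erase x) := List.perm_cons_erase hxl
        have hc1 : 1 ≤ (l.erase x).count x := by
          have := List.count_erase_self (a := x) (l := l)
          omega
        have hxl2 : x ∈ l.erase x := List.count_pos_iff.1 (by omega)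
        have p2 : (l.erase x).Perm (x :: (l.erase x).erase x) := List.perm_cons_erase hxl2
        set l₂ := (l.erase x).erase x with hl₂
        have hprod : l.prod = l₂.prod := by
          rw [p1.prod_eq, List.prod_cons, p2.prod_eq, List.prod_cons, ← mul_assoc,
            hsq x (hmem x hxl), one_mul]
        have hmem2 : ∀ y ∈ l₂, y ∈ S := fun y hy =>
          hmem y (List.mem_of_mem_erase (List.mem_of_mem_erase hy))
        have hlen2 : l₂.length ≤ r := by
          have e1 : (l.erase x).length = l.length - 1 := List.length_erase_of_mem hxl
          have e2 : l₂.length = (l.erase x).length - 1 := List.length_erase_of_mem hxl2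
          omega
        obtain ⟨l', h1, h2, h3⟩ := ih l₂ hlen2 hmem2
        exact ⟨l', h1, h2, h3.trans hprod.symm⟩
  -- initial list from closure membership
  intro g hg
  have hg' : g ∈ Submonoid.closure (S ∪ S⁻¹) := by
    rw [← Subgroup.closure_toSubmonoid]
    exact hg
  obtain ⟨l, hlmem, hlprod⟩ := Submonoid.exists_list_of_mem_closure hg'
  have hlS : ∀ x ∈ l, x ∈ S := by
    intro x hx
    rcases hlmem x hx with h | h
    · exact h
    · rw [Set.mem_inv] at h
      have : x⁻¹ = x := by
        have := hsq _ h
        calc x⁻¹ = x⁻¹ * (x⁻¹ * x) := by group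
          _ = (x⁻¹ * x⁻¹) * x := by group
          _ = x := by rw [this]; group
      rwa [← this]
  obtain ⟨l', h1, h2, h3⟩ := key l.length l le_rfl hlS
  exact ⟨l', h1, h2, h3.trans hlprod⟩
open Subgroup

lemma closure_comm {G : Type*} [Group G] {S : Set G}
    (h : ∀ a ∈ S, ∀ b ∈ S, a * b = b * a) :
    ∀ a ∈ Subgroup.closure S, ∀ b ∈ Subgroup.closure S, a * b = b * a := by
  intro a ha b hb
  refine Subgroup.closure_induction₂
    (p := fun x y _ _ => Commute x y)
    (fun x y hx hy => h x hx y hy)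
    (fun x _ => Commute.one_left x)
    (fun x _ => Commute.one_right x)
    (fun x y z _ _ _ hxz hyz => hxz.mul_left hyz)
    (fun y z x _ _ _ hxy hxz => hxy.mul_right hxz)
    (fun x y _ _ hxy => hxy.inv_left)
    (fun x y _ _ hxy => hxy.inv_right) ha hb

lemma lemA' {G : Type*} [Group G] [Finite G] (S : Set G)
    (hcomm : ∀ a ∈ S, ∀ b ∈ S, a * b = b * a)
    (hsq : ∀ a ∈ S, a * a = 1) (m : ℕ)
    (hcard : Nat.card (Subgroup.closure S) ≤ 2 ^ m) :
    ∀ g ∈ Subgroup.closure S,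
      ∃ l : List G, (∀ x ∈ l, x ∈ S) ∧ l.length ≤ m ∧ l.prod = g := by
  intro g hg
  set C := Subgroup.closure S with hC
  letI : CommGroup ↥C :=
    { (inferInstance : Group ↥C) with
      mul_comm := fun a b => Subtype.ext
        (closure_comm hcomm a.1 a.2 b.1 b.2) }
  set S' : Set ↥C := {a : ↥C | (a : G) ∈ S} with hS'
  have himg : (C.subtype) '' S' = S := by
    ext y
    constructor
    · rintro ⟨a, ha, rfl⟩; exact ha
    · intro hy
      exact ⟨⟨y, subset_closure hy⟩, hy, rfl⟩
  have htop : Subgroup.closure S' = (⊤ : Subgroup ↥C) :=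
    Subgroup.closure_preimage_eq_top S
  have hcard' : Nat.card (Subgroup.closure S') ≤ 2 ^ m := by
    rw [htop, Subgroup.card_top]
    exact hcard
  have hsq' : ∀ a ∈ S', a * a = 1 := by
    intro a ha
    exact Subtype.ext (hsq a.1 ha)
  obtain ⟨l', h1, h2, h3⟩ := lemA S' hsq' m hcard' ⟨g, hg⟩ (htop ▸ Subgroup.mem_top _)
  refine ⟨l'.map C.subtype, ?_, by simpa using h2, ?_⟩
  · intro x hx
    obtain ⟨a, ha, rfl⟩ := List.mem_map.1 hx
    exact h1 a ha
  · rw [List.prod_hom l' C.subtype, h3]; rfl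

open Subgroup
open scoped commutatorElement

-- Q8 facts by decide
lemma q_inv (c : QuaternionGroup 2) : c⁻¹ = c * c * c := by revert c; decide
lemma q_comm_sq (a b : QuaternionGroup 2) : ⁅a, b⁆ * ⁅a, b⁆ = 1 := by revert a b; decide
lemma q_comm_central (a b c : QuaternionGroup 2) : ⁅a, b⁆ * c = c * ⁅a, b⁆ := by
  revert a b c; decide
lemma q_sq_cases (c : QuaternionGroup 2) (h : c * c = 1) :
    c = 1 ∨ c = ⁅(QuaternionGroup.a 1 : QuaternionGroup 2), (QuaternionGroup.xa 0 : QuaternionGroup 2)⁆ := by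
  revert c; decide
lemma q_sqsq (c : QuaternionGroup 2) : (c * c) * (c * c) = 1 := by revert c; decide
lemma q_w_ne : (⁅(QuaternionGroup.a 1 : QuaternionGroup 2), (QuaternionGroup.xa 0 : QuaternionGroup 2)⁆ : QuaternionGroup 2) ≠ 1 := by decide
lemma q_mul_sq (a b : QuaternionGroup 2) (ha : a * a = 1) (hb : b * b = 1) :
    (a * b) * (a * b) = 1 := by revert a b; decide
lemma q_inv_sq (a : QuaternionGroup 2) (ha : a * a = 1) : a⁻¹ * a⁻¹ = 1 := by revert a; decide
lemma q_central (a c : QuaternionGroup 2) (ha : a * a = 1) : a * c = c * a := by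
  revert a c; decide

/-- The subgroup {±1}^n of Q8^n. -/
def Hsub (n : ℕ) : Subgroup (Fin n → QuaternionGroup 2) where
  carrier := {g | ∀ i, g i * g i = 1}
  one_mem' := fun i => one_mul 1
  mul_mem' := fun {a b} ha hb i => q_mul_sq (a i) (b i) (ha i) (hb i)
  inv_mem' := fun {a} ha i => q_inv_sq (a i) (ha i)

lemma comm_mul_left {G : Type*} [Group G] (hc : ∀ a b c : G, ⁅a, b⁆ * c = c * ⁅a, b⁆)
    (x y z : G) : ⁅x * y, z⁆ = ⁅y, z⁆ * ⁅x, z⁆ := by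
  have h1 : y * z * y⁻¹ = ⁅y, z⁆ * z := by rw [commutatorElement_def]; group
  calc ⁅x * y, z⁆ = x * (y * z * y⁻¹) * x⁻¹ * z⁻¹ := by rw [commutatorElement_def]; group
    _ = x * (⁅y, z⁆ * z) * x⁻¹ * z⁻¹ := by rw [h1]
    _ = (x * ⁅y, z⁆) * (z * x⁻¹ * z⁻¹) := by group
    _ = (⁅y, z⁆ * x) * (z * x⁻¹ * z⁻¹) := by rw [← hc y z x]
    _ = ⁅y, z⁆ * (x * z * x⁻¹ * z⁻¹) := by group
    _ = ⁅y, z⁆ * ⁅x, z⁆ := by rw [commutatorElement_def x z]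

set_option maxHeartbeats 1000000 in
theorem stmt15 (n : ℕ) (hn : 1 ≤ n) :
    maxDiam (Fin n → QuaternionGroup 2) ≤ 8 * n ^ 2 + 3 * n := by
  have main : ∀ X : Set (Fin n → QuaternionGroup 2), Subgroup.closure X = ⊤ →
      ∀ g : Fin n → QuaternionGroup 2, wordLen X g ≤ 10 * n := by
    intro X hX g
    set Y : Set (Fin n → QuaternionGroup 2) :=
      {g | ∃ x ∈ X, ∃ y ∈ X, ⁅x, y⁆ = g} with hY
    set K := Subgroup.closure Y with hKdef
    have hcentral : ∀ a b c : Fin n → QuaternionGroup 2, ⁅a, b⁆ * c = c * ⁅a, b⁆ := by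
      intro a b c
      funext i
      exact q_comm_central (a i) (b i) (c i)
    -- all commutators lie in K
    have hcommK : ∀ a b : Fin n → QuaternionGroup 2, ⁅a, b⁆ ∈ K := by
      intro a b
      have ha : a ∈ Subgroup.closure X := by rw [hX]; exact mem_top a
      have hb : b ∈ Subgroup.closure X := by rw [hX]; exact mem_top b
      have hinvl : ∀ x y : Fin n → QuaternionGroup 2, ⁅x, y⁆ ∈ K → ⁅x⁻¹, y⁆ ∈ K := by
        intro x y hxy
        have h0 : ⁅x, y⁆ * ⁅x⁻¹, y⁆ = 1 := by
          rw [← comm_mul_left hcentral x⁻¹ x y, inv_mul_cancel, commutatorElement_one_left]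
        rw [eq_inv_of_mul_eq_one_right h0]
        exact inv_mem hxy
      have hswap : ∀ x y : Fin n → QuaternionGroup 2, ⁅x, y⁆ ∈ K → ⁅y, x⁆ ∈ K := by
        intro x y hxy
        rw [← commutatorElement_inv]
        exact inv_mem hxy
      refine Subgroup.closure_induction₂ (p := fun u v _ _ => ⁅u, v⁆ ∈ K)
        ?_ ?_ ?_ ?_ ?_ ?_ ?_ ha hb
      · exact fun x y hx hy => subset_closure ⟨x, hx, y, hy, rfl⟩
      · intro x _; rw [commutatorElement_one_left]; exact one_mem K
      · intro x _; rw [commutatorElement_one_right]; exact one_mem K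
      · intro x y z _ _ _ hxz hyz
        rw [comm_mul_left hcentral x y z]; exact mul_mem hyz hxz
      · intro y z x _ _ _ hxy hxz
        have : ⁅x, y * z⁆ = (⁅z, x⁆ * ⁅y, x⁆)⁻¹ := by
          rw [← comm_mul_left hcentral y z x, commutatorElement_inv]
        rw [this]
        exact inv_mem (mul_mem (hswap x z hxz) (hswap x y hxy))
      · exact fun x y _ _ hxy => hinvl x y hxy
      · intro x y _ _ hxy
        exact hswap y⁻¹ x (hinvl y x (hswap x y hxy))
    -- K = Hsub n
    have hKH : K = Hsub n := by
      apply le_antisymm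
      · rw [hKdef]
        apply (Subgroup.closure_le _).2
        rintro g ⟨x, _, y, _, rfl⟩
        intro i
        exact q_comm_sq (x i) (y i)
      · intro h hh
        have : ⁅(fun i => if h i = 1 then 1 else QuaternionGroup.a 1 :
            Fin n → QuaternionGroup 2),
            (fun i => if h i = 1 then 1 else QuaternionGroup.xa 0)⁆ = h := by
          funext i
          show ⁅(if h i = 1 then 1 else QuaternionGroup.a 1 : QuaternionGroup 2),
            (if h i = 1 then 1 else QuaternionGroup.xa 0)⁆ = h i
          by_cases hc1 : h i = 1
          · simp [hc1]
          · rcases q_sq_cases (h i) (hh i) with h1 | h1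
            · exact absurd h1 hc1
            · rw [if_neg hc1, if_neg hc1, ← h1]
        rw [← this]
        exact hcommK _ _
    -- cardinalities
    have hcardH_le : Nat.card (Hsub n) ≤ 2 ^ n := by
      have hinj : Function.Injective
          (fun h : Hsub n => (fun i => decide (h.1 i = 1) : Fin n → Bool)) := by
        intro h1 h2 heq
        apply Subtype.ext
        funext i
        have hi := congrFun heq i
        simp only [decide_eq_decide] at hi
        by_cases hc : h1.1 i = 1
        · rw [hc, (hi.1 hc).symm]
        · have hc2 : ¬ h2.1 i = 1 := fun hx => hc (hi.2 hx)
          rcases q_sq_cases (h1.1 i) (h1.2 i) with e | e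
          · exact absurd e hc
          rcases q_sq_cases (h2.1 i) (h2.2 i) with e2 | e2
          · exact absurd e2 hc2
          rw [e, e2]
      calc Nat.card (Hsub n) ≤ Nat.card (Fin n → Bool) :=
            Nat.card_le_card_of_injective _ hinj
        _ = 2 ^ n := by simp [Nat.card_pi, Nat.card_eq_fintype_card]
    have hcardH_ge : 2 ^ n ≤ Nat.card (Hsub n) := by
      have hinj : Function.Injective (fun b : Fin n → Bool =>
          (⟨fun i => if b i then
              ⁅(QuaternionGroup.a 1 : QuaternionGroup 2), (QuaternionGroup.xa 0 : QuaternionGroup 2)⁆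
            else 1, fun i => by
              by_cases hb : b i <;> simp [hb, q_comm_sq]⟩ : Hsub n)) := by
        intro b1 b2 heq
        funext i
        have hi := congrFun (congrArg Subtype.val heq) i
        by_cases h1 : b1 i <;> by_cases h2 : b2 i <;>
          simp only [h1, h2, if_pos, if_neg, if_true, if_false] at hi ⊢
        · exact absurd hi q_w_ne
        · exact absurd hi.symm q_w_ne
      calc (2 : ℕ) ^ n = Nat.card (Fin n → Bool) := by
            simp [Nat.card_pi, Nat.card_eq_fintype_card]
        _ ≤ Nat.card (Hsub n) := Nat.card_le_card_of_injective _ hinj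
    have hcardG : Nat.card (Fin n → QuaternionGroup 2) = 8 ^ n := by
      have h8 : Nat.card (QuaternionGroup 2) = 8 := by
        rw [Nat.card_eq_fintype_card, QuaternionGroup.card]
      rw [Nat.card_pi]
      simp only [h8]
      simp
    -- K is normal
    haveI hKnormal : K.Normal := by
      constructor
      intro k hk g'
      have hkH : ∀ i, k i * k i = 1 := by rw [hKH] at hk; exact hk
      have hcent : k * g' = g' * k := funext fun i => q_central (k i) (g' i) (hkH i)
      have e : g' * k * g'⁻¹ = k := by
        rw [← hcent, mul_assoc, mul_inv_cancel, mul_one]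
      rw [e]; exact hk
    -- the quotient
    have hmkX : Subgroup.closure ((QuotientGroup.mk' K) '' X) = ⊤ := by
      rw [← MonoidHom.map_closure, hX]
      exact Subgroup.map_top_of_surjective _ (QuotientGroup.mk'_surjective K)
    have hQsq : ∀ a : (Fin n → QuaternionGroup 2) ⧸ K, a * a = 1 := by
      intro a
      obtain ⟨g', rfl⟩ := QuotientGroup.mk'_surjective K a
      show ((g' : (Fin n → QuaternionGroup 2) ⧸ K)) * g' = 1
      rw [← QuotientGroup.mk_mul, QuotientGroup.eq_one_iff]
      rw [hKH]
      intro i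
      exact q_sqsq (g' i)
    have hQcomm : ∀ a b : (Fin n → QuaternionGroup 2) ⧸ K, a * b = b * a := by
      intro a b
      obtain ⟨x, rfl⟩ := QuotientGroup.mk'_surjective K a
      obtain ⟨y, rfl⟩ := QuotientGroup.mk'_surjective K b
      show ((x : (Fin n → QuaternionGroup 2) ⧸ K)) * y = (y : _) * x
      rw [← QuotientGroup.mk_mul, ← QuotientGroup.mk_mul, QuotientGroup.eq]
      have : (x * y)⁻¹ * (y * x) = ⁅y⁻¹, x⁻¹⁆ := by
        rw [commutatorElement_def]; group
      rw [this]
      exact hcommK _ _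
    have hcardQ : Nat.card ((Fin n → QuaternionGroup 2) ⧸ K) ≤ 2 ^ (2 * n) := by
      have h1 := Subgroup.card_eq_card_quotient_mul_card_subgroup K
      have h2 : 2 ^ n ≤ Nat.card K := by rw [hKH]; exact hcardH_ge
      have h3 : Nat.card ((Fin n → QuaternionGroup 2) ⧸ K) * 2 ^ n ≤ 2 ^ (2 * n) * 2 ^ n := by
        calc Nat.card ((Fin n → QuaternionGroup 2) ⧸ K) * 2 ^ n
            ≤ Nat.card ((Fin n → QuaternionGroup 2) ⧸ K) * Nat.card K :=
              Nat.mul_le_mul_left _ h2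
          _ = 8 ^ n := by rw [← h1, hcardG]
          _ = 2 ^ (2 * n) * 2 ^ n := by
              rw [← pow_add]
              norm_num
              ring_nf
              rw [show (8 : ℕ) = 2 ^ 3 by norm_num, ← pow_mul]
              ring_nf
      exact Nat.le_of_mul_le_mul_right h3 (Nat.pow_pos (n := n) (by norm_num))
    -- express the image of g in the quotient as a short word
    have hgQ : ((g : (Fin n → QuaternionGroup 2) ⧸ K)) ∈
        Subgroup.closure ((QuotientGroup.mk' K) '' X) := by
      rw [hmkX]; exact mem_top _
    obtain ⟨lq, hlq1, hlq2, hlq3⟩ := lemA' ((QuotientGroup.mk' K) '' X)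
      (fun a _ b _ => hQcomm a b) (fun a _ => hQsq a) (2 * n)
      (by rw [hmkX, Subgroup.card_top]; exact hcardQ) _ hgQ
    -- lift the word to G
    have lift : ∀ lq' : List ((Fin n → QuaternionGroup 2) ⧸ K),
        (∀ y ∈ lq', y ∈ (QuotientGroup.mk' K) '' X) →
        ∃ w : List (Fin n → QuaternionGroup 2), (∀ x ∈ w, x ∈ X) ∧
          w.length = lq'.length ∧ ((w.prod : Fin n → QuaternionGroup 2) :
            (Fin n → QuaternionGroup 2) ⧸ K) = lq'.prod := by
      intro lq'
      induction lq' with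
      | nil => exact fun _ => ⟨[], by simp, rfl, by simp⟩
      | cons y t iht =>
        intro hmem
        obtain ⟨x, hx, hxy⟩ := hmem y List.mem_cons_self
        obtain ⟨w, hw1, hw2, hw3⟩ := iht fun z hz => hmem z (List.mem_cons_of_mem _ hz)
        refine ⟨x :: w, ?_, by simp [hw2], ?_⟩
        · intro z hz
          rcases List.mem_cons.1 hz with rfl | hz
          · exact hx
          · exact hw1 z hz
        · rw [List.prod_cons, List.prod_cons, QuotientGroup.mk_mul, hw3, ← hxy]
          rfl
    obtain ⟨w, hw1, hw2, hw3⟩ := lift lq hlq1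
    -- the remainder lies in K
    have hrem : w.prod⁻¹ * g ∈ K := by
      rw [← QuotientGroup.eq]
      rw [hw3, hlq3]
    -- express the remainder as a short word in Y
    obtain ⟨lc, hlc1, hlc2, hlc3⟩ := lemA' Y
      (by
        rintro a ⟨x, _, y, _, rfl⟩ b ⟨x', _, y', _, rfl⟩
        exact hcentral _ _ _)
      (by
        rintro a ⟨x, _, y, _, rfl⟩
        funext i
        exact q_comm_sq (x i) (y i))
      n (by rw [← hKdef, hKH]; exact hcardH_le) (w.prod⁻¹ * g) (by rw [← hKdef]; exact hrem)
    -- expand commutators into letters of X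
    have expand : ∀ lc' : List (Fin n → QuaternionGroup 2), (∀ c ∈ lc', c ∈ Y) →
        ∃ w' : List (Fin n → QuaternionGroup 2), (∀ x ∈ w', x ∈ X) ∧
          w'.length = 8 * lc'.length ∧ w'.prod = lc'.prod := by
      intro lc'
      induction lc' with
      | nil => exact fun _ => ⟨[], by simp, by simp, by simp⟩
      | cons c t iht =>
        intro hmem
        obtain ⟨x, hx, y, hy, hxy⟩ := hmem c List.mem_cons_self
        obtain ⟨w', hw'1, hw'2, hw'3⟩ := iht fun z hz => hmem z (List.mem_cons_of_mem _ hz)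
        refine ⟨x :: y :: x :: x :: x :: y :: y :: y :: w', ?_, ?_, ?_⟩
        · intro z hz
          simp only [List.mem_cons] at hz
          rcases hz with rfl|rfl|rfl|rfl|rfl|rfl|rfl|rfl|hz
          · exact hx
          · exact hy
          · exact hx
          · exact hx
          · exact hx
          · exact hy
          · exact hy
          · exact hy
          · exact hw'1 z hz
        · simp only [List.length_cons, hw'2, List.length_cons]
          ring
        · have hinv : ∀ u : Fin n → QuaternionGroup 2, u⁻¹ = u * u * u := by
            intro u; funext i; exact q_inv (u i)
          have hc : c = x * y * (x * x * x) * (y * y * y) := by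
            rw [← hxy, commutatorElement_def, hinv x, hinv y]
          simp only [List.prod_cons, hw'3, hc]
          simp [mul_assoc]
    obtain ⟨w', hw'1, hw'2, hw'3⟩ := expand lc hlc1
    -- combine
    have hfinal : (w ++ w').prod = g := by
      rw [List.prod_append, hw'3, hlc3, ← mul_assoc, mul_inv_cancel, one_mul]
    have hlen : (w ++ w').length ≤ 10 * n := by
      rw [List.length_append, hw2, hw'2]
      have : lc.length ≤ n := hlc2
      have : lq.length ≤ 2 * n := hlq2
      omega
    have : wordLen X g ≤ (w ++ w').length :=
      Nat.sInf_le ⟨w ++ w', fun x hx => (List.mem_append.1 hx).elim (hw1 x) (hw'1 x), rfl, hfinal⟩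
    omega
  -- conclude
  have h10 : (10 : ℕ) * n ≤ 8 * n ^ 2 + 3 * n := by nlinarith
  apply csSup_le'
  rintro d ⟨X, hX, rfl⟩
  refine le_trans (csSup_le' ?_) h10
  rintro d' ⟨g, rfl⟩
  exact main X hX g
end

section
/- In a finite p-group G, every minimal generating set (one in which no proper subset generates) is a generating set of minimum cardinality, namely of size rank(G) = rank(G/Φ(G)). -/
open Subgroup

lemma coatom_mem {p : ℕ} [Fact p.Prime] {G : Type*} [Group G] [Finite G] (hp : IsPGroup p G)
    {H : Subgroup G} (hH : IsCoatom H) :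
    (∀ x y : G, x * y * x⁻¹ * y⁻¹ ∈ H) ∧ (∀ x : G, x ^ p ∈ H) := by
  haveI := hp.isNilpotent
  haveI hN : H.Normal := Subgroup.NormalizerCondition.normal_of_coatom H
      normalizerCondition_of_isNilpotent hH
  have hQ : IsPGroup p (G ⧸ H) := hp.to_quotient H
  obtain ⟨n, hn⟩ := IsPGroup.iff_card.mp hQ
  have hn0 : n ≠ 0 := by
    rintro rfl
    have h1 : H.index = 1 := by
      rw [Subgroup.index, hn, pow_zero]
    exact hH.1 (Subgroup.index_eq_one.mp h1)
  have hcard : Nat.card (G ⧸ H) = p := by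
    rcases Nat.eq_or_lt_of_le (Nat.one_le_iff_ne_zero.mpr hn0) with h1 | h2
    · rw [hn, ← h1, pow_one]
    exfalso
    have hdvd : p ^ 1 ∣ Nat.card (G ⧸ H) := by
      rw [hn, pow_one]
      exact dvd_pow_self p hn0
    obtain ⟨K, hK⟩ := Sylow.exists_subgroup_card_pow_prime p hdvd
    rw [pow_one] at hK
    have hp1 := (Fact.out : p.Prime).one_lt
    set π := QuotientGroup.mk' H
    have hπs : Function.Surjective π := QuotientGroup.mk'_surjective H
    have hle : H ≤ K.comap π := by
      intro h hh
      have : π h = 1 := (QuotientGroup.eq_one_iff h).mpr hh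
      simp [Subgroup.mem_comap, this, K.one_mem]
    rcases eq_or_lt_of_le hle with heq | hlt
    · have : K = ⊥ := by
        have hmap : K = Subgroup.map π (K.comap π) :=
          (Subgroup.map_comap_eq_self_of_surjective hπs K).symm
        rw [← heq] at hmap
        rw [hmap]
        ext q
        simp only [Subgroup.mem_map, Subgroup.mem_bot]
        constructor
        · rintro ⟨h, hh, rfl⟩
          exact (QuotientGroup.eq_one_iff h).mpr hh
        · rintro rfl
          exact ⟨1, H.one_mem, map_one π⟩
      rw [this, Nat.card_eq_one_iff_unique.mpr ⟨inferInstance, inferInstance⟩] at hK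
      omega
    · have : K.comap π = ⊤ := hH.2 _ hlt
      have hKtop : K = ⊤ := by
        rw [← Subgroup.map_comap_eq_self_of_surjective hπs K, this,
          Subgroup.map_top_of_surjective π hπs]
      rw [hKtop] at hK
      have : Nat.card (⊤ : Subgroup (G ⧸ H)) = Nat.card (G ⧸ H) :=
        Subgroup.card_top
      rw [this, hn] at hK
      have : p ^ 1 < p ^ n := by
        exact Nat.pow_lt_pow_right hp1 h2
      rw [pow_one] at this
      omega
  haveI : IsCyclic (G ⧸ H) := isCyclic_of_prime_card hcard
  letI := IsCyclic.commGroup (α := G ⧸ H)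
  constructor
  · intro x y
    rw [← QuotientGroup.eq_one_iff]
    have hc : (x : G ⧸ H) * y = (y : G ⧸ H) * x := mul_comm _ _
    show QuotientGroup.mk (x * y * x⁻¹ * y⁻¹) = 1
    have : (QuotientGroup.mk (x * y * x⁻¹ * y⁻¹) : G ⧸ H)
        = (x : G ⧸ H) * y * (x : G ⧸ H)⁻¹ * (y : G ⧸ H)⁻¹ := by
      rfl
    rw [this, hc]
    group
  · intro x
    rw [← QuotientGroup.eq_one_iff]
    show QuotientGroup.mk (x ^ p) = 1
    have : (QuotientGroup.mk (x ^ p) : G ⧸ H) = (x : G ⧸ H) ^ p := rfl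
    rw [this, ← hcard]
    exact pow_card_eq_one'

lemma mem_frattini_of_forall_coatom {G : Type*} [Group G] {g : G}
    (h : ∀ H : Subgroup G, IsCoatom H → g ∈ H) : g ∈ frattini G := by
  rw [frattini, Order.radical]
  rw [Subgroup.mem_iInf]
  intro H
  rw [Subgroup.mem_iInf]
  exact h H

lemma span_eq_closure {p : ℕ} {Q : Type*} [CommGroup Q] [Module (ZMod p) (Additive Q)]
    (t : Set Q) :
    AddSubgroup.toZModSubmodule (M := Additive Q) p (Subgroup.toAddSubgroup (Subgroup.closure t))
      = Submodule.span (ZMod p) (Additive.ofMul '' t) := by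
  apply le_antisymm
  · intro x hx
    have hx' : Additive.toMul x ∈ Subgroup.closure t := hx
    have key : ∀ a : Q, a ∈ Subgroup.closure t →
        Additive.ofMul a ∈ Submodule.span (ZMod p) (Additive.ofMul '' t) := by
      intro a ha
      induction ha using Subgroup.closure_induction with
      | mem b hb => exact Submodule.subset_span ⟨b, hb, rfl⟩
      | one => exact (Submodule.span (ZMod p) (Additive.ofMul '' t)).zero_mem
      | mul b c _ _ hb hc => exact
          (Submodule.span (ZMod p) (Additive.ofMul '' t)).add_mem hb hc
      | inv b _ hb => exact (Submodule.span (ZMod p) (Additive.ofMul '' t)).neg_mem hb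
    exact key _ hx'
  · apply Submodule.span_le.mpr
    rintro x ⟨a, ha, rfl⟩
    show a ∈ Subgroup.closure t
    exact Subgroup.subset_closure ha


lemma closure_top_iff {p : ℕ} {Q : Type*} [CommGroup Q] [Module (ZMod p) (Additive Q)]
    (t : Set Q) : Subgroup.closure t = ⊤ ↔
      Submodule.span (ZMod p) (Additive.ofMul '' t) = ⊤ := by
  rw [← span_eq_closure (p := p)]
  constructor
  · intro h; rw [h, OrderIso.map_top, OrderIso.map_top]
  · intro h
    have h1 := congrArg (AddSubgroup.toZModSubmodule (M := Additive Q) p).symm h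
    rw [OrderIso.symm_apply_apply, OrderIso.map_top] at h1
    have h2 := congrArg (Subgroup.toAddSubgroup (G := Q)).symm h1
    rw [OrderIso.symm_apply_apply, OrderIso.map_top] at h2
    exact h2

lemma key_Q {p : ℕ} [Fact p.Prime] {Q : Type u_q} [CommGroup Q] [Finite Q]
    [Module (ZMod p) (Additive Q)] [DecidableEq Q] :
    ∃ d : ℕ, (∃ T : Finset Q, T.card ≤ d ∧ Subgroup.closure (T : Set Q) = ⊤) ∧
      (∀ T : Finset Q, Subgroup.closure (T : Set Q) = ⊤ → d ≤ T.card) ∧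
      (∀ {ι : Type u_i} [Fintype ι] (v : ι → Q),
        (∀ i, v i ∉ Subgroup.closure (v '' (Set.univ \ {i}))) → Fintype.card ι ≤ d) := by
  classical
  haveI : Module.Finite (ZMod p) (Additive Q) := Module.Finite.of_finite
  refine ⟨Module.finrank (ZMod p) (Additive Q), ?_, ?_, ?_⟩
  · let b := Module.finBasis (ZMod p) (Additive Q)
    refine ⟨Finset.image (fun i => Additive.toMul (b i)) Finset.univ,
      Finset.card_image_le.trans (by simp), ?_⟩
    have hsub : Set.range (⇑b) ⊆ Additive.ofMul ''
        ((Finset.image (fun i => Additive.toMul (b i)) Finset.univ : Finset Q) : Set Q) := by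
      rintro _ ⟨i, rfl⟩
      exact ⟨Additive.toMul (b i), by simp, rfl⟩
    have hspan : Submodule.span (ZMod p) (Additive.ofMul ''
        ((Finset.image (fun i => Additive.toMul (b i)) Finset.univ : Finset Q) : Set Q)) = ⊤ :=
      eq_top_iff.mpr (b.span_eq ▸ Submodule.span_mono hsub)
    exact (closure_top_iff _).mpr hspan
  · intro T hT
    have hsp : Submodule.span (ZMod p) (Additive.ofMul '' (T : Set Q)) = ⊤ := by
      exact (closure_top_iff _).mp hT
    have hr : Submodule.span (ZMod p)
        (Set.range (fun x : (T : Set Q) => Additive.ofMul (x : Q))) = ⊤ := by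
      rw [← Set.image_eq_range]; exact hsp
    calc Module.finrank (ZMod p) (Additive Q) ≤ Fintype.card (T : Set Q) :=
        finrank_le_of_span_eq_top hr
    _ = T.card := by simp
  · intro ι _ v hv
    have hli : LinearIndependent (ZMod p) (fun i : ι => Additive.ofMul (v i)) := by
      rw [linearIndependent_iff_notMem_span]
      intro i hmem
      apply hv i
      have hle : Submodule.span (ZMod p) ((fun i : ι => Additive.ofMul (v i)) '' (Set.univ \ {i}))
          ≤ Submodule.span (ZMod p) (Additive.ofMul '' (v '' (Set.univ \ {i}))) := by
        apply Submodule.span_mono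
        rintro _ ⟨j, hj, rfl⟩
        exact ⟨v j, ⟨j, hj, rfl⟩, rfl⟩
      have hmem2 : Additive.ofMul (v i) ∈
          Submodule.span (ZMod p) (Additive.ofMul '' (v '' (Set.univ \ {i}))) := hle hmem
      rw [← span_eq_closure (p := p)] at hmem2
      exact hmem2
    exact hli.fintype_card_le_finrank

theorem stmt19 {p : ℕ} [Fact p.Prime] {G : Type*} [Group G] [Finite G] [DecidableEq G] (hp : IsPGroup p G)
    (S : Finset G) (hgen : Subgroup.closure (S : Set G) = ⊤)
    (hmin : ∀ x ∈ S, Subgroup.closure ((S.erase x : Finset G) : Set G) ≠ ⊤) :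
    S.card = grpRank G ∧ grpRank G = grpRank (G ⧸ frattini G) := by
  classical
  set Q := G ⧸ frattini G with hQdef
  let π : G →* Q := QuotientGroup.mk' (frattini G)
  have hπs : Function.Surjective π := QuotientGroup.mk'_surjective _
  have hiff : ∀ t : Set G, Subgroup.closure (π '' t) = ⊤ ↔ Subgroup.closure t = ⊤ := by
    intro t
    constructor
    · intro h
      have hmap : Subgroup.map π (Subgroup.closure t) = ⊤ := by
        rw [MonoidHom.map_closure]; exact h
      have h2 : Subgroup.closure t ⊔ frattini G = ⊤ := by
        have := congrArg (Subgroup.comap π) hmap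
        rwa [Subgroup.comap_map_eq, QuotientGroup.ker_mk', Subgroup.comap_top] at this
      exact frattini_nongenerating h2
    · intro h
      rw [← MonoidHom.map_closure, h]
      exact Subgroup.map_top_of_surjective π hπs
  have hcommF : ∀ x y : G, x * y * x⁻¹ * y⁻¹ ∈ frattini G := fun x y =>
    mem_frattini_of_forall_coatom (fun H hH => (coatom_mem hp hH).1 x y)
  have hpowF : ∀ x : G, x ^ p ∈ frattini G := fun x =>
    mem_frattini_of_forall_coatom (fun H hH => (coatom_mem hp hH).2 x)
  have hcomm : ∀ a b : Q, a * b = b * a := by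
    intro a b
    induction a using QuotientGroup.induction_on with
    | H x =>
    induction b using QuotientGroup.induction_on with
    | H y =>
    show ((x * y : G) : Q) = ((y * x : G) : Q)
    rw [QuotientGroup.eq]
    simpa [mul_assoc] using hcommF y⁻¹ x⁻¹
  have hpow : ∀ a : Q, a ^ p = 1 := by
    intro a
    induction a using QuotientGroup.induction_on with
    | H x =>
    show ((x ^ p : G) : Q) = 1
    rw [QuotientGroup.eq_one_iff]
    exact hpowF x
  letI cg : CommGroup Q := { (inferInstance : Group Q) with mul_comm := hcomm }
  haveI : NeZero p := ⟨(Fact.out : p.Prime).ne_zero⟩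
  letI mo : Module (ZMod p) (Additive Q) := AddCommGroup.zmodModule (n := p)
    (fun x => Additive.toMul.injective (by simp [hpow (Additive.toMul x)]))
  obtain ⟨d, ⟨T, hTcard, hTgen⟩, hlow, hind⟩ :=
    @key_Q p _ Q cg (inferInstance) mo (Classical.decEq Q)
  -- transfer to the original group instance on Q
  have hQnonempty : {n | ∃ T : Finset Q, T.card = n ∧ Subgroup.closure (T : Set Q) = ⊤}.Nonempty :=
    ⟨T.card, T, rfl, hTgen⟩
  have hrankQ_ge : d ≤ grpRank Q := by
    obtain ⟨T₀, hT₀card, hT₀gen⟩ := Nat.sInf_mem hQnonempty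
    rw [grpRank, ← hT₀card]
    exact hlow T₀ hT₀gen
  have hrankQ_le : grpRank Q ≤ d := le_trans (Nat.sInf_le ⟨T, rfl, hTgen⟩) hTcard
  have hGnonempty : {n | ∃ T : Finset G, T.card = n ∧ Subgroup.closure (T : Set G) = ⊤}.Nonempty :=
    ⟨S.card, S, rfl, hgen⟩
  have hQG : grpRank Q ≤ grpRank G := by
    obtain ⟨S₀, hS₀card, hS₀gen⟩ := Nat.sInf_mem hGnonempty
    have himg : Subgroup.closure ((S₀.image π : Finset Q) : Set Q) = ⊤ := by
      rw [Finset.coe_image]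
      exact (hiff _).mpr hS₀gen
    calc grpRank Q ≤ (S₀.image π).card := Nat.sInf_le ⟨S₀.image π, rfl, himg⟩
    _ ≤ S₀.card := Finset.card_image_le
    _ = grpRank G := hS₀card
  have hGQ : grpRank G ≤ grpRank Q := by
    obtain ⟨T₀, hT₀card, hT₀gen⟩ := Nat.sInf_mem hQnonempty
    let S₁ : Finset G := T₀.image (fun q => Quotient.out q)
    have himg : π '' (S₁ : Set G) = (T₀ : Set Q) := by
      ext q
      simp only [S₁, Finset.coe_image, Set.mem_image, Finset.mem_coe]
      constructor
      · rintro ⟨g, ⟨r, hr, rfl⟩, rfl⟩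
        have h1 : π (Quotient.out r) = r := Quotient.out_eq r
        rwa [h1]
      · intro hq
        exact ⟨Quotient.out q, ⟨q, hq, rfl⟩, Quotient.out_eq q⟩
    have hS₁gen : Subgroup.closure (S₁ : Set G) = ⊤ := by
      apply (hiff _).mp
      rw [himg]
      exact hT₀gen
    calc grpRank G ≤ S₁.card := Nat.sInf_le ⟨S₁, rfl, hS₁gen⟩
    _ ≤ T₀.card := Finset.card_image_le
    _ = grpRank Q := hT₀card
  have hrankGQ : grpRank G = grpRank Q := le_antisymm hGQ hQG
  have hckey : ∀ x ∈ S, (π x) ∉ Subgroup.closure (π '' ((S.erase x : Finset G) : Set G)) := by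
    intro x hx hmem
    apply hmin x hx
    apply (hiff _).mp
    rw [eq_top_iff, ← (hiff (S : Set G)).mpr hgen]
    apply (Subgroup.closure_le _).mpr
    rintro _ ⟨g, hg, rfl⟩
    by_cases hgx : g = x
    · subst hgx; exact hmem
    · exact Subgroup.subset_closure ⟨g, Finset.mem_erase.mpr ⟨hgx, hg⟩, rfl⟩
  have hindS : ∀ i : (S : Set G), π (i : G) ∉
      Subgroup.closure ((fun j : (S : Set G) => π (j : G)) '' (Set.univ \ {i})) := by
    rintro ⟨x, hx⟩ hmem
    apply hckey x hx
    refine Subgroup.closure_mono ?_ hmem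
    rintro _ ⟨⟨g, hg⟩, ⟨-, hne⟩, rfl⟩
    refine ⟨g, Finset.mem_erase.mpr ⟨?_, hg⟩, rfl⟩
    intro hgx
    exact hne (by simp only [Set.mem_singleton_iff]; exact Subtype.ext hgx)
  have hScard : S.card ≤ d := by
    have := hind (fun i : (S : Set G) => π (i : G)) hindS
    simpa using this
  refine ⟨le_antisymm ?_ (Nat.sInf_le ⟨S, rfl, hgen⟩), hrankGQ⟩
  rw [hrankGQ]
  exact le_trans hScard hrankQ_ge
end
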